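/- arXiv:2112.07609 — 9 statements merged into one kernel-verified Lean document; each statement's English description precedes it below -/
import Mathlib

section
/- For every natural number n, the number of 213-avoiding permutations of Fin n equals the n-th Catalan number catalan n. -/
/-- A permutation `σ` of `Fin n` is 213-avoiding if there are no indices
`i < j < k` with `σ j < σ i < σ k`. -/
def Avoids213 {n : ℕ} (σ : Equiv.Perm (Fin n)) : Prop :=
  ¬ ∃ i j k : Fin n, i < j ∧ j < k ∧ σ j < σ i ∧ σ i < σ k

namespace Av213

def glueFun {a b : ℕ} (τ : Equiv.Perm (Fin a)) (ρ : Equiv.Perm (Fin b))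
    (p : Fin (a + b + 1)) : Fin (a + b + 1) :=
  if _h0 : (p : ℕ) = 0 then ⟨b, by omega⟩
  else if _h1 : (p : ℕ) ≤ a then
    ⟨b + 1 + (τ ⟨(p : ℕ) - 1, by omega⟩ : ℕ), by
      have := (τ ⟨(p : ℕ) - 1, by omega⟩).isLt; omega⟩
  else ⟨(ρ ⟨(p : ℕ) - a - 1, by omega⟩ : ℕ), by
      have := (ρ ⟨(p : ℕ) - a - 1, by omega⟩).isLt; omega⟩

theorem glueFun_zero {a b : ℕ} (τ : Equiv.Perm (Fin a)) (ρ : Equiv.Perm (Fin b))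
    (p : Fin (a + b + 1)) (h : (p : ℕ) = 0) : (glueFun τ ρ p : ℕ) = b := by
  simp [glueFun, h]

theorem glueFun_mid {a b : ℕ} (τ : Equiv.Perm (Fin a)) (ρ : Equiv.Perm (Fin b))
    (p : Fin (a + b + 1)) (h0 : (p : ℕ) ≠ 0) (h1 : (p : ℕ) ≤ a) :
    (glueFun τ ρ p : ℕ) = b + 1 + (τ ⟨(p : ℕ) - 1, by omega⟩ : ℕ) := by
  simp [glueFun, h0, h1]

theorem glueFun_last {a b : ℕ} (τ : Equiv.Perm (Fin a)) (ρ : Equiv.Perm (Fin b))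
    (p : Fin (a + b + 1)) (h1 : a < (p : ℕ)) :
    (glueFun τ ρ p : ℕ) = (ρ ⟨(p : ℕ) - a - 1, by omega⟩ : ℕ) := by
  have h0 : (p : ℕ) ≠ 0 := by omega
  have h1' : ¬ (p : ℕ) ≤ a := by omega
  simp [glueFun, h0, h1']

theorem glueFun_injective {a b : ℕ} (τ : Equiv.Perm (Fin a)) (ρ : Equiv.Perm (Fin b)) :
    Function.Injective (glueFun τ ρ) := by
  intro p q h
  have hv : (glueFun τ ρ p : ℕ) = (glueFun τ ρ q : ℕ) := by rw [h]
  apply Fin.ext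
  rcases Nat.lt_trichotomy 0 (p : ℕ) with hp | hp | hp
  all_goals rcases Nat.lt_trichotomy 0 (q : ℕ) with hq | hq | hq
  · -- both nonzero
    by_cases hp1 : (p : ℕ) ≤ a <;> by_cases hq1 : (q : ℕ) ≤ a
    · rw [glueFun_mid τ ρ p (by omega) hp1, glueFun_mid τ ρ q (by omega) hq1] at hv
      have : τ ⟨(p : ℕ) - 1, by omega⟩ = τ ⟨(q : ℕ) - 1, by omega⟩ := Fin.ext (by omega)
      have := τ.injective this
      have := Fin.mk.injEq _ _ _ _ ▸ this
      omega
    · rw [glueFun_mid τ ρ p (by omega) hp1, glueFun_last τ ρ q (by omega)] at hv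
      have := (ρ ⟨(q : ℕ) - a - 1, by omega⟩).isLt; omega
    · rw [glueFun_last τ ρ p (by omega), glueFun_mid τ ρ q (by omega) hq1] at hv
      have := (ρ ⟨(p : ℕ) - a - 1, by omega⟩).isLt; omega
    · rw [glueFun_last τ ρ p (by omega), glueFun_last τ ρ q (by omega)] at hv
      have : ρ ⟨(p : ℕ) - a - 1, by omega⟩ = ρ ⟨(q : ℕ) - a - 1, by omega⟩ := Fin.ext hv
      have := ρ.injective this
      have := Fin.mk.injEq _ _ _ _ ▸ this
      omega
  · rw [glueFun_zero τ ρ q hq.symm] at hv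
    by_cases hp1 : (p : ℕ) ≤ a
    · rw [glueFun_mid τ ρ p (by omega) hp1] at hv; omega
    · rw [glueFun_last τ ρ p (by omega)] at hv
      have := (ρ ⟨(p : ℕ) - a - 1, by omega⟩).isLt; omega
  · exact absurd hq (by omega)
  · rw [glueFun_zero τ ρ p hp.symm] at hv
    by_cases hq1 : (q : ℕ) ≤ a
    · rw [glueFun_mid τ ρ q (by omega) hq1] at hv; omega
    · rw [glueFun_last τ ρ q (by omega)] at hv
      have := (ρ ⟨(q : ℕ) - a - 1, by omega⟩).isLt; omega
  · omega
  all_goals omega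

noncomputable def glue {a b : ℕ} (τ : Equiv.Perm (Fin a)) (ρ : Equiv.Perm (Fin b)) :
    Equiv.Perm (Fin (a + b + 1)) :=
  Equiv.ofBijective _ ((Finite.injective_iff_bijective).mp (glueFun_injective τ ρ))

theorem glue_apply {a b : ℕ} (τ : Equiv.Perm (Fin a)) (ρ : Equiv.Perm (Fin b))
    (p : Fin (a + b + 1)) : glue τ ρ p = glueFun τ ρ p := rfl

theorem avoids_glue {a b : ℕ} {τ : Equiv.Perm (Fin a)} {ρ : Equiv.Perm (Fin b)}
    (hτ : Avoids213 τ) (hρ : Avoids213 ρ) : Avoids213 (glue τ ρ) := by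
  rintro ⟨i, j, k, hij, hjk, h1, h2⟩
  rw [Fin.lt_def] at hij hjk h1 h2
  rw [glue_apply, glue_apply] at h1
  rw [glue_apply, glue_apply] at h2
  -- case on where i is
  rcases Nat.eq_zero_or_pos (i : ℕ) with hi0 | hi0
  · -- i = 0 : σ i = b, σ j < b so j in last block, then k in last block with σ k < b < σ k
    rw [glueFun_zero τ ρ i hi0] at h1 h2
    have hj : a < (j : ℕ) := by
      by_contra hja
      push_neg at hja
      rw [glueFun_mid τ ρ j (by omega) hja] at h1; omega
    rw [glueFun_last τ ρ j hj] at h1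
    rw [glueFun_last τ ρ k (by omega)] at h2
    have := (ρ ⟨(k : ℕ) - a - 1, by omega⟩).isLt; omega
  · by_cases hia : (i : ℕ) ≤ a
    · -- i in mid block
      rw [glueFun_mid τ ρ i (by omega) hia] at h1 h2
      by_cases hja : (j : ℕ) ≤ a
      · -- j in mid; then k must be in mid (since glue k > b)
        rw [glueFun_mid τ ρ j (by omega) hja] at h1
        have hka : (k : ℕ) ≤ a := by
          by_contra hka
          push_neg at hka
          rw [glueFun_last τ ρ k hka] at h2
          have := (ρ ⟨(k : ℕ) - a - 1, by omega⟩).isLt; omega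
        rw [glueFun_mid τ ρ k (by omega) hka] at h2
        exact hτ ⟨⟨(i : ℕ) - 1, by omega⟩, ⟨(j : ℕ) - 1, by omega⟩, ⟨(k : ℕ) - 1, by omega⟩,
          by rw [Fin.lt_def]; simp; omega, by rw [Fin.lt_def]; simp; omega,
          by rw [Fin.lt_def]; omega, by rw [Fin.lt_def]; omega⟩
      · -- j in last, k in last: glue k < b but glue k > glue i ≥ b+1
        rw [glueFun_last τ ρ k (by omega)] at h2
        have := (ρ ⟨(k : ℕ) - a - 1, by omega⟩).isLt; omega
    · -- i in last block, so j, k too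
      rw [glueFun_last τ ρ i (by omega)] at h1 h2
      rw [glueFun_last τ ρ j (by omega)] at h1
      rw [glueFun_last τ ρ k (by omega)] at h2
      exact hρ ⟨⟨(i : ℕ) - a - 1, by omega⟩, ⟨(j : ℕ) - a - 1, by omega⟩,
        ⟨(k : ℕ) - a - 1, by omega⟩,
        by rw [Fin.lt_def]; simp; omega, by rw [Fin.lt_def]; simp; omega,
        by rw [Fin.lt_def]; omega, by rw [Fin.lt_def]; omega⟩



def castPerm {m k : ℕ} (h : m = k) (g : Equiv.Perm (Fin m)) : Equiv.Perm (Fin k) :=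
  (finCongr h).permCongr g

theorem castPerm_val {m k : ℕ} (h : m = k) (g : Equiv.Perm (Fin m)) (p : Fin k) :
    ((castPerm h g) p : ℕ) = (g ⟨(p : ℕ), h ▸ p.isLt⟩ : ℕ) := by
  subst h; simp [castPerm]

theorem castPerm_rfl {m : ℕ} (g : Equiv.Perm (Fin m)) : castPerm rfl g = g :=
  Equiv.ext fun p => by simp [castPerm]

theorem avoids_castPerm {m k : ℕ} (h : m = k) (g : Equiv.Perm (Fin m)) :
    Avoids213 (castPerm h g) ↔ Avoids213 g := by
  subst h; rw [castPerm_rfl]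

theorem filter_card {n : ℕ} (σ : Equiv.Perm (Fin (n+1))) (b : ℕ) (hb : b ≤ n) :
    (Finset.univ.filter (fun p => b < (σ p : ℕ))).card = n - b := by
  have h1 : (Finset.univ.filter (fun v : Fin (n+1) => b < (v : ℕ))).card = n - b := by
    have he : Finset.univ.filter (fun v : Fin (n+1) => b < (v : ℕ))
        = Finset.Ioi (⟨b, by omega⟩ : Fin (n+1)) := by
      ext v; simp [Fin.lt_def]
    rw [he, Fin.card_Ioi]; simp
  rw [← h1]
  apply Finset.card_bij (fun p _ => σ p)
  · intro p hp
    simp only [Finset.mem_filter, Finset.mem_univ, true_and] at hp ⊢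
    exact hp
  · intro p _ q _ h; exact σ.injective h
  · intro v hv
    refine ⟨σ.symm v, ?_, by simp⟩
    simp only [Finset.mem_filter, Finset.mem_univ, true_and] at hv ⊢
    simpa using hv

theorem pos_iff {n : ℕ} (σ : Equiv.Perm (Fin (n+1))) (hσ : Avoids213 σ)
    (p : Fin (n+1)) (hp : 1 ≤ (p : ℕ)) :
    ((p : ℕ) ≤ n - ((σ 0 : Fin (n+1)) : ℕ) ↔ ((σ 0 : Fin (n+1)) : ℕ) < (σ p : ℕ)) := by
  set b := ((σ 0 : Fin (n+1)) : ℕ) with hbdef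
  have hb : b ≤ n := by have := (σ (0 : Fin (n+1))).isLt; omega
  have closure : ∀ q r : Fin (n+1), 0 < (q : ℕ) → (q : ℕ) < (r : ℕ) →
      b < (σ r : ℕ) → b < (σ q : ℕ) := by
    intro q r hq hqr hr
    by_contra hle
    push_neg at hle
    have hne : (σ q : ℕ) ≠ b := by
      intro h
      have h2 : σ q = σ 0 := Fin.ext (by rw [h])
      have := σ.injective h2
      rw [this] at hq
      simp at hq
    exact hσ ⟨0, q, r, by rw [Fin.lt_def]; simpa using hq, by rw [Fin.lt_def]; omega,
      by rw [Fin.lt_def]; omega, by rw [Fin.lt_def]; omega⟩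
  have hT := filter_card σ b hb
  constructor
  · intro hpa
    by_contra hnb
    push_neg at hnb
    have hsub : Finset.univ.filter (fun q => b < (σ q : ℕ))
        ⊆ Finset.Ico (⟨1, by omega⟩ : Fin (n+1)) p := by
      intro q hq
      simp only [Finset.mem_filter, Finset.mem_univ, true_and] at hq
      have hq0 : 0 < (q : ℕ) := by
        rcases Nat.eq_zero_or_pos (q : ℕ) with h | h
        · exfalso
          have h2 : σ q = σ 0 := by congr 1; exact Fin.ext h
          have : (σ q : ℕ) = b := by rw [h2]
          omega
        · exact h
      have hqp : (q : ℕ) < (p : ℕ) := by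
        by_contra hge
        push_neg at hge
        rcases eq_or_lt_of_le hge with h | h
        · have h2 : σ p = σ q := by congr 1; exact Fin.ext h
          have : (σ p : ℕ) = (σ q : ℕ) := by rw [h2]
          omega
        · have := closure p q (by omega) h hq; omega
      simp only [Finset.mem_Ico, Fin.lt_def, Fin.le_def]
      exact ⟨by omega, hqp⟩
    have hc := Finset.card_le_card hsub
    rw [hT, Fin.card_Ico] at hc
    simp only [Fin.val_mk] at hc
    omega
  · intro hb'
    have hsub : Finset.Icc (⟨1, by omega⟩ : Fin (n+1)) p
        ⊆ Finset.univ.filter (fun q => b < (σ q : ℕ)) := by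
      intro q hq
      simp only [Finset.mem_Icc, Fin.le_def, Fin.val_mk] at hq
      simp only [Finset.mem_filter, Finset.mem_univ, true_and]
      rcases eq_or_lt_of_le hq.2 with h | h
      · have h2 : σ q = σ p := by congr 1; exact Fin.ext h
        rw [h2]; exact hb'
      · exact closure q p (by omega) h hb'
    have hc := Finset.card_le_card hsub
    rw [hT, Fin.card_Icc] at hc
    simp only [Fin.val_mk] at hc
    omega

end Av213

namespace Av213

noncomputable def ΨMap (n : ℕ)
    (x : Σ i : Fin (n+1), {τ : Equiv.Perm (Fin (n - (i : ℕ))) // Avoids213 τ} ×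
      {ρ : Equiv.Perm (Fin (i : ℕ)) // Avoids213 ρ}) :
    {σ : Equiv.Perm (Fin (n+1)) // Avoids213 σ} :=
  ⟨castPerm (by have := x.1.isLt; omega) (glue x.2.1.1 x.2.2.1), by
    rw [avoids_castPerm]; exact avoids_glue x.2.1.2 x.2.2.2⟩

theorem ΨMap_val {n : ℕ} (i : Fin (n+1)) (τ : {τ : Equiv.Perm (Fin (n - (i : ℕ))) // Avoids213 τ})
    (ρ : {ρ : Equiv.Perm (Fin (i : ℕ)) // Avoids213 ρ}) (p : Fin (n+1)) :
    (((ΨMap n ⟨i, (τ, ρ)⟩ : {σ : Equiv.Perm (Fin (n+1)) // Avoids213 σ}) : Equiv.Perm (Fin (n+1))) p : ℕ)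
      = (glueFun τ.1 ρ.1 ⟨(p : ℕ), by have := i.isLt; have := p.isLt; omega⟩ : ℕ) := by
  rw [show ((ΨMap n ⟨i, (τ, ρ)⟩ : {σ : Equiv.Perm (Fin (n+1)) // Avoids213 σ}) : Equiv.Perm (Fin (n+1)))
      = castPerm (by have := i.isLt; omega) (glue τ.1 ρ.1) from rfl]
  rw [castPerm_val]
  rfl

end Av213

namespace Av213

abbrev bOf {n : ℕ} (σ : Equiv.Perm (Fin (n+1))) : ℕ := ((σ 0 : Fin (n+1)) : ℕ)

theorem bOf_le {n : ℕ} (σ : Equiv.Perm (Fin (n+1))) : bOf σ ≤ n :=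
  Nat.lt_succ_iff.mp (σ 0).isLt

theorem bOf_eq {n : ℕ} (σ : Equiv.Perm (Fin (n+1))) : bOf σ = ((σ 0 : Fin (n+1)) : ℕ) := rfl

theorem mid_pos {n : ℕ} (σ : Equiv.Perm (Fin (n+1))) (hσ : Avoids213 σ) (x : ℕ)
    (h : x + 1 ≤ n - bOf σ) : bOf σ < (σ ⟨x+1, by omega⟩ : ℕ) :=
  (pos_iff σ hσ ⟨x+1, by omega⟩ (by simp)).mp (by simpa using h)

theorem last_pos {n : ℕ} (σ : Equiv.Perm (Fin (n+1))) (hσ : Avoids213 σ) (x : ℕ)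
    (h1 : n - bOf σ < x) (h2 : x ≤ n) : (σ ⟨x, by omega⟩ : ℕ) < bOf σ := by
  by_contra hc
  push_neg at hc
  have hne : (σ ⟨x, by omega⟩ : ℕ) ≠ bOf σ := by
    intro he
    have h5 := σ.injective (Fin.ext he : σ ⟨x, by omega⟩ = σ 0)
    have h6 := congrArg Fin.val h5
    simp at h6
    omega
  have h7 : bOf σ < (σ ⟨x, by omega⟩ : ℕ) := by omega
  have h8 := (pos_iff σ hσ ⟨x, by omega⟩ (by simp; omega)).mpr h7
  simp only [Fin.val_mk] at h8
  have e1 := bOf_eq σ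
  omega

def τfun {n : ℕ} (σ : Equiv.Perm (Fin (n+1))) : Fin (n - bOf σ) → Fin (n - bOf σ) := fun x =>
  ⟨(σ ⟨(x:ℕ)+1, by have := x.isLt; omega⟩ : ℕ) - (bOf σ + 1), by
    have h1 := (σ ⟨(x:ℕ)+1, by have := x.isLt; omega⟩).isLt
    have h2 := x.isLt
    omega⟩

theorem τfun_injective {n : ℕ} (σ : Equiv.Perm (Fin (n+1))) (hσ : Avoids213 σ) :
    Function.Injective (τfun σ) := by
  intro x y hxy
  have hx := mid_pos σ hσ (x:ℕ) (by have := x.isLt; omega)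
  have hy := mid_pos σ hσ (y:ℕ) (by have := y.isLt; omega)
  have h1 := congrArg Fin.val hxy
  simp only [τfun] at h1
  have h2 : (σ ⟨(x:ℕ)+1, by have := x.isLt; omega⟩ : ℕ)
      = (σ ⟨(y:ℕ)+1, by have := y.isLt; omega⟩ : ℕ) := by omega
  have h3 := σ.injective (Fin.ext h2)
  have h4 := congrArg Fin.val h3
  simp only [Fin.val_mk] at h4
  exact Fin.ext (by omega)

noncomputable def τPerm {n : ℕ} (σ : Equiv.Perm (Fin (n+1))) (hσ : Avoids213 σ) :
    Equiv.Perm (Fin (n - bOf σ)) :=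
  Equiv.ofBijective _ (Finite.injective_iff_bijective.mp (τfun_injective σ hσ))

theorem τPerm_val {n : ℕ} (σ : Equiv.Perm (Fin (n+1))) (hσ : Avoids213 σ)
    (x : Fin (n - bOf σ)) :
    (τPerm σ hσ x : ℕ) = (σ ⟨(x:ℕ)+1, by have := x.isLt; omega⟩ : ℕ) - (bOf σ + 1) := rfl

theorem τPerm_avoids {n : ℕ} (σ : Equiv.Perm (Fin (n+1))) (hσ : Avoids213 σ) :
    Avoids213 (τPerm σ hσ) := by
  rintro ⟨x, y, z, h1, h2, h3, h4⟩
  rw [Fin.lt_def] at h1 h2 h3 h4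
  simp only [τPerm_val] at h3 h4
  have hx := mid_pos σ hσ (x:ℕ) (by have := x.isLt; omega)
  have hy := mid_pos σ hσ (y:ℕ) (by have := y.isLt; omega)
  have hz := mid_pos σ hσ (z:ℕ) (by have := z.isLt; omega)
  exact hσ ⟨⟨(x:ℕ)+1, by have := x.isLt; omega⟩, ⟨(y:ℕ)+1, by have := y.isLt; omega⟩,
    ⟨(z:ℕ)+1, by have := z.isLt; omega⟩,
    by rw [Fin.lt_def]; simp only [Fin.val_mk]; omega,
    by rw [Fin.lt_def]; simp only [Fin.val_mk]; omega,
    by rw [Fin.lt_def]; omega, by rw [Fin.lt_def]; omega⟩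

def ρfun {n : ℕ} (σ : Equiv.Perm (Fin (n+1))) (hσ : Avoids213 σ) :
    Fin (bOf σ) → Fin (bOf σ) := fun x =>
  ⟨(σ ⟨(x:ℕ) + (n - bOf σ) + 1, by
      have := x.isLt; have := bOf_le σ; omega⟩ : ℕ),
    last_pos σ hσ _ (by have := x.isLt; omega)
      (by have := x.isLt; have := bOf_le σ; omega)⟩

theorem ρfun_injective {n : ℕ} (σ : Equiv.Perm (Fin (n+1))) (hσ : Avoids213 σ) :
    Function.Injective (ρfun σ hσ) := by
  intro x y hxy
  have h1 := congrArg Fin.val hxy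
  simp only [ρfun] at h1
  have h3 := σ.injective (Fin.ext h1)
  have h4 := congrArg Fin.val h3
  simp only [Fin.val_mk] at h4
  exact Fin.ext (by omega)

noncomputable def ρPerm {n : ℕ} (σ : Equiv.Perm (Fin (n+1))) (hσ : Avoids213 σ) :
    Equiv.Perm (Fin (bOf σ)) :=
  Equiv.ofBijective _ (Finite.injective_iff_bijective.mp (ρfun_injective σ hσ))

theorem ρPerm_val {n : ℕ} (σ : Equiv.Perm (Fin (n+1))) (hσ : Avoids213 σ)
    (x : Fin (bOf σ)) :
    (ρPerm σ hσ x : ℕ) = (σ ⟨(x:ℕ) + (n - bOf σ) + 1, by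
      have := x.isLt; have := bOf_le σ; omega⟩ : ℕ) := rfl

theorem ρPerm_avoids {n : ℕ} (σ : Equiv.Perm (Fin (n+1))) (hσ : Avoids213 σ) :
    Avoids213 (ρPerm σ hσ) := by
  rintro ⟨x, y, z, h1, h2, h3, h4⟩
  rw [Fin.lt_def] at h1 h2 h3 h4
  simp only [ρPerm_val] at h3 h4
  exact hσ ⟨⟨(x:ℕ) + (n - bOf σ) + 1, by have := x.isLt; have := bOf_le σ; omega⟩,
    ⟨(y:ℕ) + (n - bOf σ) + 1, by have := y.isLt; have := bOf_le σ; omega⟩,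
    ⟨(z:ℕ) + (n - bOf σ) + 1, by have := z.isLt; have := bOf_le σ; omega⟩,
    by rw [Fin.lt_def]; simp only [Fin.val_mk]; omega,
    by rw [Fin.lt_def]; simp only [Fin.val_mk]; omega,
    by rw [Fin.lt_def]; omega, by rw [Fin.lt_def]; omega⟩

end Av213

namespace Av213


set_option maxHeartbeats 1000000 in
theorem ΨMap_injective (n : ℕ) : Function.Injective (ΨMap n) := by
  rintro ⟨i, ⟨τ, hτ⟩, ⟨ρ, hρ⟩⟩ ⟨i', ⟨τ', hτ'⟩, ⟨ρ', hρ'⟩⟩ h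
  have hval : ∀ p : Fin (n+1),
      (((ΨMap n ⟨i, (⟨τ, hτ⟩, ⟨ρ, hρ⟩)⟩ : {σ : Equiv.Perm (Fin (n+1)) // Avoids213 σ}) :
        Equiv.Perm (Fin (n+1))) p : ℕ)
      = (((ΨMap n ⟨i', (⟨τ', hτ'⟩, ⟨ρ', hρ'⟩)⟩ : {σ : Equiv.Perm (Fin (n+1)) // Avoids213 σ}) :
        Equiv.Perm (Fin (n+1))) p : ℕ) := fun p => by rw [h]
  have hii : (i : ℕ) = (i' : ℕ) := by
    have h0 := hval 0
    conv at h0 => lhs; rw [ΨMap_val]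
    conv at h0 => rhs; rw [ΨMap_val]
    simp only [Fin.val_zero] at h0
    simp only [glueFun_zero τ ρ ⟨0, by omega⟩ rfl,
      glueFun_zero τ' ρ' ⟨0, by omega⟩ rfl] at h0
    exact h0
  have hie : i = i' := Fin.ext hii
  subst hie
  have hτe : τ = τ' := by
    apply Equiv.ext; intro q
    have hq := hval ⟨(q : ℕ) + 1, by have := q.isLt; omega⟩
    conv at hq => lhs; rw [ΨMap_val]
    conv at hq => rhs; rw [ΨMap_val]
    simp only [Fin.val_mk] at hq
    simp only [glueFun_mid τ ρ ⟨(q:ℕ)+1, by have := q.isLt; omega⟩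
        (by simp) (by simp),
      glueFun_mid τ' ρ' ⟨(q:ℕ)+1, by have := q.isLt; omega⟩
        (by simp) (by simp)] at hq
    simp only [Nat.add_sub_cancel, Fin.eta] at hq
    exact Fin.ext (by omega)
  have hρe : ρ = ρ' := by
    apply Equiv.ext; intro q
    have hq := hval ⟨(q : ℕ) + (n - (i:ℕ)) + 1, by have := q.isLt; have := i.isLt; omega⟩
    conv at hq => lhs; rw [ΨMap_val]
    conv at hq => rhs; rw [ΨMap_val]
    simp only [Fin.val_mk] at hq
    simp only [glueFun_last τ ρ ⟨(q:ℕ)+(n-(i:ℕ))+1, by have := q.isLt; have := i.isLt; omega⟩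
        (by simp),
      glueFun_last τ' ρ' ⟨(q:ℕ)+(n-(i:ℕ))+1, by have := q.isLt; have := i.isLt; omega⟩
        (by simp)] at hq
    simp only [show (q:ℕ)+(n-(i:ℕ))+1-(n-(i:ℕ))-1 = (q:ℕ) from by omega, Fin.eta] at hq
    exact Fin.ext (by omega)
  subst hτe
  subst hρe
  rfl

set_option maxHeartbeats 1000000 in
theorem ΨMap_surjective (n : ℕ) : Function.Surjective (ΨMap n) := by
  rintro ⟨σ, hσ⟩
  have hble := bOf_le σ
  refine ⟨⟨⟨bOf σ, by omega⟩,
    (⟨τPerm σ hσ, τPerm_avoids σ hσ⟩, ⟨ρPerm σ hσ, ρPerm_avoids σ hσ⟩)⟩, ?_⟩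
  apply Subtype.ext
  apply Equiv.ext
  intro p
  apply Fin.ext
  show (((ΨMap n _ : {σ : Equiv.Perm (Fin (n+1)) // Avoids213 σ}) :
    Equiv.Perm (Fin (n+1))) p : ℕ) = _
  conv => lhs; rw [ΨMap_val]
  rcases Nat.eq_zero_or_pos (p : ℕ) with h0 | h0
  · simp only [glueFun_zero (τPerm σ hσ) (ρPerm σ hσ) ⟨(p:ℕ), by omega⟩ h0, Fin.val_mk]
    rw [show p = 0 from Fin.ext (by simpa using h0)]
  · by_cases hpa : (p : ℕ) ≤ n - bOf σ
    · simp only [glueFun_mid (τPerm σ hσ) (ρPerm σ hσ) ⟨(p:ℕ), by omega⟩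
        (Nat.pos_iff_ne_zero.mp h0) (by simpa using hpa), Fin.val_mk]
      simp only [τPerm_val, Fin.val_mk]
      simp only [show (p:ℕ)-1+1 = (p:ℕ) from by omega, Fin.eta]
      have hgt := (pos_iff σ hσ p (by omega)).mp hpa
      have e1 := bOf_eq σ
      omega
    · push_neg at hpa
      simp only [glueFun_last (τPerm σ hσ) (ρPerm σ hσ) ⟨(p:ℕ), by omega⟩
        (by simpa using hpa), Fin.val_mk]
      simp only [ρPerm_val, Fin.val_mk]
      simp only [show (p:ℕ)-(n - bOf σ)-1+(n - bOf σ)+1 = (p:ℕ) from by omega, Fin.eta]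


theorem ncard_sigma {k : ℕ} (f : Fin k → Type*) [∀ i, Finite (f i)] :
    Nat.card (Σ i, f i) = ∑ i, Nat.card (f i) := by
  letI : ∀ i, Fintype (f i) := fun i => Fintype.ofFinite _
  simp [Nat.card_eq_fintype_card]

theorem card_succ (n : ℕ) :
    Nat.card {σ : Equiv.Perm (Fin (n+1)) // Avoids213 σ}
      = ∑ i : Fin (n+1),
          Nat.card {τ : Equiv.Perm (Fin (n - (i:ℕ))) // Avoids213 τ}
            * Nat.card {ρ : Equiv.Perm (Fin (i:ℕ)) // Avoids213 ρ} := by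
  rw [← Nat.card_eq_of_bijective (ΨMap n) ⟨ΨMap_injective n, ΨMap_surjective n⟩]
  rw [ncard_sigma]
  exact Finset.sum_congr rfl fun i _ => Nat.card_prod _ _

end Av213

theorem card_avoids213_eq_catalan (n : ℕ) :
    Nat.card {σ : Equiv.Perm (Fin n) // Avoids213 σ} = catalan n := by
  induction n using Nat.strong_induction_on with
  | _ n ih =>
    cases n with
    | zero =>
      rw [catalan_zero]
      have hall : ∀ σ : Equiv.Perm (Fin 0), Avoids213 σ := by
        rintro σ ⟨i, j, k, _⟩
        exact i.elim0
      haveI : Unique {σ : Equiv.Perm (Fin 0) // Avoids213 σ} :=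
        { default := ⟨1, hall 1⟩
          uniq := fun x => Subtype.ext (Equiv.ext fun i => i.elim0) }
      exact Nat.card_unique
    | succ m =>
      rw [Av213.card_succ m, catalan_succ]
      refine Finset.sum_congr rfl fun i _ => ?_
      rw [ih (m - (i:ℕ)) (by omega), ih (i:ℕ) (by have := i.isLt; omega), mul_comm]
end

section
/- For every natural number n, the number of 213-avoiding permutations of Fin n equals the number of binary trees with n internal nodes, i.e. it equals the cardinality of treesOfNumNodesEq n. -/
open Equiv Finset

instance {n : ℕ} : DecidablePred (Avoids213 (n := n)) := fun σ => by
  unfold Avoids213; infer_instance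

namespace Avoid213Aux

variable {n : ℕ}

/-- Combine: positions `< i` carry the top `i` values (via `A`), position `i` carries `0`,
positions `> i` carry values `1..n-i` (via `B`). -/
def combineFun (i : ℕ) (hi : i ≤ n) (A : Equiv.Perm (Fin i)) (B : Equiv.Perm (Fin (n - i))) :
    Fin (n + 1) → Fin (n + 1) := fun x =>
  if h : x.val < i then
    ⟨n - i + 1 + (A ⟨x.val, h⟩).val, by have := (A ⟨x.val, h⟩).isLt; omega⟩
  else if h' : i < x.val then
    ⟨1 + (B ⟨x.val - i - 1, by have := x.isLt; omega⟩).val, by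
      have := (B ⟨x.val - i - 1, by have := x.isLt; omega⟩).isLt; omega⟩
  else ⟨0, by omega⟩

lemma combineFun_val_A (i : ℕ) (hi : i ≤ n) (A : Equiv.Perm (Fin i))
    (B : Equiv.Perm (Fin (n - i))) (x : Fin (n + 1)) (h : x.val < i) :
    (combineFun i hi A B x).val = n - i + 1 + (A ⟨x.val, h⟩).val := by
  unfold combineFun; rw [dif_pos h]

lemma combineFun_val_piv (i : ℕ) (hi : i ≤ n) (A : Equiv.Perm (Fin i))
    (B : Equiv.Perm (Fin (n - i))) (x : Fin (n + 1)) (h : x.val = i) :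
    (combineFun i hi A B x).val = 0 := by
  unfold combineFun; rw [dif_neg (by omega), dif_neg (by omega)]

lemma combineFun_val_B (i : ℕ) (hi : i ≤ n) (A : Equiv.Perm (Fin i))
    (B : Equiv.Perm (Fin (n - i))) (x : Fin (n + 1)) (h : i < x.val) :
    (combineFun i hi A B x).val
      = 1 + (B ⟨x.val - i - 1, by have := x.isLt; omega⟩).val := by
  unfold combineFun; rw [dif_neg (by omega), dif_pos h]

lemma combineFun_inj (i : ℕ) (hi : i ≤ n) (A : Equiv.Perm (Fin i))
    (B : Equiv.Perm (Fin (n - i))) : Function.Injective (combineFun i hi A B) := by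
  intro x y h
  have h' : (combineFun i hi A B x).val = (combineFun i hi A B y).val := by rw [h]
  apply Fin.ext
  rcases lt_trichotomy x.val i with hx | hx | hx <;>
    rcases lt_trichotomy y.val i with hy | hy | hy
  · rw [combineFun_val_A i hi A B x hx, combineFun_val_A i hi A B y hy] at h'
    have : A ⟨x.val, hx⟩ = A ⟨y.val, hy⟩ := Fin.ext (by omega)
    have := A.injective this
    rw [Fin.mk.injEq] at this; omega
  · rw [combineFun_val_A i hi A B x hx, combineFun_val_piv i hi A B y hy] at h'; omega
  · rw [combineFun_val_A i hi A B x hx, combineFun_val_B i hi A B y hy] at h'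
    have := (A ⟨x.val, hx⟩).isLt
    have := (B ⟨y.val - i - 1, by have := y.isLt; omega⟩).isLt
    omega
  · rw [combineFun_val_piv i hi A B x hx, combineFun_val_A i hi A B y hy] at h'; omega
  · omega
  · rw [combineFun_val_piv i hi A B x hx, combineFun_val_B i hi A B y hy] at h'; omega
  · rw [combineFun_val_B i hi A B x hx, combineFun_val_A i hi A B y hy] at h'
    have := (A ⟨y.val, hy⟩).isLt
    have := (B ⟨x.val - i - 1, by have := x.isLt; omega⟩).isLt
    omega
  · rw [combineFun_val_B i hi A B x hx, combineFun_val_piv i hi A B y hy] at h'; omega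
  · rw [combineFun_val_B i hi A B x hx, combineFun_val_B i hi A B y hy] at h'
    have : B ⟨x.val - i - 1, by have := x.isLt; omega⟩
        = B ⟨y.val - i - 1, by have := y.isLt; omega⟩ := Fin.ext (by omega)
    have := B.injective this
    rw [Fin.mk.injEq] at this; omega

/-- The combined permutation. -/
noncomputable def combine (i : ℕ) (hi : i ≤ n) (A : Equiv.Perm (Fin i))
    (B : Equiv.Perm (Fin (n - i))) : Equiv.Perm (Fin (n + 1)) :=
  Equiv.ofBijective _ ((Finite.injective_iff_bijective).1 (combineFun_inj i hi A B))

lemma combine_apply (i : ℕ) (hi : i ≤ n) (A : Equiv.Perm (Fin i)) (B : Equiv.Perm (Fin (n - i)))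
    (x : Fin (n + 1)) : combine i hi A B x = combineFun i hi A B x := rfl

lemma combine_val_A (i : ℕ) (hi : i ≤ n) (A : Equiv.Perm (Fin i))
    (B : Equiv.Perm (Fin (n - i))) (x : Fin (n + 1)) (h : x.val < i) :
    (combine i hi A B x).val = n - i + 1 + (A ⟨x.val, h⟩).val := by
  rw [combine_apply]; exact combineFun_val_A i hi A B x h

lemma combine_val_piv (i : ℕ) (hi : i ≤ n) (A : Equiv.Perm (Fin i))
    (B : Equiv.Perm (Fin (n - i))) (x : Fin (n + 1)) (h : x.val = i) :
    (combine i hi A B x).val = 0 := by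
  rw [combine_apply]; exact combineFun_val_piv i hi A B x h

lemma combine_val_B (i : ℕ) (hi : i ≤ n) (A : Equiv.Perm (Fin i))
    (B : Equiv.Perm (Fin (n - i))) (x : Fin (n + 1)) (h : i < x.val) :
    (combine i hi A B x).val
      = 1 + (B ⟨x.val - i - 1, by have := x.isLt; omega⟩).val := by
  rw [combine_apply]; exact combineFun_val_B i hi A B x h

lemma combine_avoids (i : ℕ) (hi : i ≤ n) (A : Equiv.Perm (Fin i))
    (B : Equiv.Perm (Fin (n - i))) (hA : Avoids213 A) (hB : Avoids213 B) :
    Avoids213 (combine i hi A B) := by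
  rintro ⟨a, b, c, hab, hbc, hba, hac⟩
  rw [Fin.lt_def] at hab hbc
  rw [Fin.lt_def, combine_apply, combine_apply] at hba hac
  rcases lt_trichotomy a.val i with ha | ha | ha
  · rw [combineFun_val_A i hi A B a ha] at hba hac
    rcases lt_trichotomy b.val i with hb | hb | hb
    · rw [combineFun_val_A i hi A B b hb] at hba
      rcases lt_trichotomy c.val i with hc | hc | hc
      · rw [combineFun_val_A i hi A B c hc] at hac
        exact hA ⟨⟨a.val, ha⟩, ⟨b.val, hb⟩, ⟨c.val, hc⟩, by rw [Fin.lt_def]; exact hab,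
          by rw [Fin.lt_def]; exact hbc,
          by rw [Fin.lt_def]; omega, by rw [Fin.lt_def]; omega⟩
      · rw [combineFun_val_piv i hi A B c hc] at hac
        omega
      · rw [combineFun_val_B i hi A B c hc] at hac
        have := (A ⟨a.val, ha⟩).isLt
        have := (B ⟨c.val - i - 1, by have := c.isLt; omega⟩).isLt
        omega
    · rw [combineFun_val_piv i hi A B b hb] at hba
      have hc : i < c.val := by omega
      rw [combineFun_val_B i hi A B c hc] at hac
      have := (A ⟨a.val, ha⟩).isLt
      have := (B ⟨c.val - i - 1, by have := c.isLt; omega⟩).isLt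
      omega
    · rw [combineFun_val_B i hi A B b hb] at hba
      have hc : i < c.val := by omega
      rw [combineFun_val_B i hi A B c hc] at hac
      have := (A ⟨a.val, ha⟩).isLt
      have := (B ⟨c.val - i - 1, by have := c.isLt; omega⟩).isLt
      omega
  · rw [combineFun_val_piv i hi A B a (by omega)] at hba
    omega
  · have hb : i < b.val := by omega
    have hc : i < c.val := by omega
    rw [combineFun_val_B i hi A B a ha] at hba hac
    rw [combineFun_val_B i hi A B b hb] at hba
    rw [combineFun_val_B i hi A B c hc] at hac
    exact hB ⟨⟨a.val - i - 1, by have := a.isLt; omega⟩,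
      ⟨b.val - i - 1, by have := b.isLt; omega⟩,
      ⟨c.val - i - 1, by have := c.isLt; omega⟩,
      by rw [Fin.lt_def]; simp only [Fin.val_mk]; omega,
      by rw [Fin.lt_def]; simp only [Fin.val_mk]; omega,
      by rw [Fin.lt_def]; omega, by rw [Fin.lt_def]; omega⟩

section Decompose
variable (σ : Equiv.Perm (Fin (n + 1)))

def pivot : ℕ := (σ.symm ⟨0, Nat.succ_pos n⟩).val

lemma pivot_lt : pivot σ < n + 1 := (σ.symm _).isLt

lemma apply_pivot : (σ ⟨pivot σ, pivot_lt σ⟩).val = 0 := by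
  have h : (⟨pivot σ, pivot_lt σ⟩ : Fin (n + 1)) = σ.symm ⟨0, Nat.succ_pos n⟩ := Fin.ext rfl
  rw [h, Equiv.apply_symm_apply]

lemma apply_ne_pivot (x : Fin (n + 1)) (hx : x.val ≠ pivot σ) : (σ x).val ≠ 0 := by
  intro h0
  have h1 : σ x = ⟨0, Nat.succ_pos n⟩ := Fin.ext h0
  have h2 : x = σ.symm ⟨0, Nat.succ_pos n⟩ := by rw [← h1, Equiv.symm_apply_apply]
  exact hx (by rw [h2]; rfl)

variable (hσ : Avoids213 σ)
include hσ

lemma key1 (x y : Fin (n + 1)) (hx : x.val < pivot σ) (hy : pivot σ < y.val) :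
    (σ y).val < (σ x).val := by
  set p : Fin (n + 1) := ⟨pivot σ, pivot_lt σ⟩ with hp
  have h0 : (σ p).val = 0 := apply_pivot σ
  have hx0 : (σ x).val ≠ 0 := apply_ne_pivot σ x (by omega)
  have hxy : σ x ≠ σ y := fun h => by
    have := σ.injective h; rw [this] at hx; omega
  have hne : (σ x).val ≠ (σ y).val := fun h => hxy (Fin.ext h)
  by_contra hcon
  exact hσ ⟨x, p, y, by rw [Fin.lt_def]; exact hx, by rw [Fin.lt_def]; exact hy,
    by rw [Fin.lt_def]; omega, by rw [Fin.lt_def]; omega⟩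

lemma key2 (x : Fin (n + 1)) (hx : x.val < pivot σ) : n + 1 - pivot σ ≤ (σ x).val := by
  have hsub : (Finset.Ici (⟨pivot σ, pivot_lt σ⟩ : Fin (n + 1))).image σ ⊆
      Finset.Iio (σ x) := by
    intro v hv
    rw [Finset.mem_image] at hv
    obtain ⟨y, hy, rfl⟩ := hv
    rw [Finset.mem_Ici, Fin.le_def] at hy
    rw [Finset.mem_Iio, Fin.lt_def]
    rcases eq_or_lt_of_le hy with h | h
    · have : y = (⟨pivot σ, pivot_lt σ⟩ : Fin (n + 1)) := Fin.ext h.symm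
      rw [this, apply_pivot σ]
      exact Nat.pos_of_ne_zero (apply_ne_pivot σ x (by omega))
    · exact key1 σ hσ x y hx h
  have hcard := Finset.card_le_card hsub
  rw [Finset.card_image_of_injective _ σ.injective, Fin.card_Ici, Fin.card_Iio] at hcard
  simpa using hcard

lemma key3 (y : Fin (n + 1)) (hy : pivot σ < y.val) : (σ y).val ≤ n - pivot σ := by
  have hsub : (Finset.Iio (⟨pivot σ, pivot_lt σ⟩ : Fin (n + 1))).image σ ⊆
      Finset.Ioi (σ y) := by
    intro v hv
    rw [Finset.mem_image] at hv
    obtain ⟨x, hx, rfl⟩ := hv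
    rw [Finset.mem_Iio, Fin.lt_def] at hx
    rw [Finset.mem_Ioi, Fin.lt_def]
    exact key1 σ hσ x y hx hy
  have hcard := Finset.card_le_card hsub
  rw [Finset.card_image_of_injective _ σ.injective, Fin.card_Iio, Fin.card_Ioi] at hcard
  have := (σ y).isLt
  simp only [Fin.val_mk] at hcard
  omega

end Decompose

section Parts
variable (σ : Equiv.Perm (Fin (n + 1))) (hσ : Avoids213 σ)

def posA (a : Fin (pivot σ)) : Fin (n + 1) :=
  ⟨a.val, lt_trans a.isLt (pivot_lt σ)⟩

def posB (b : Fin (n - pivot σ)) : Fin (n + 1) :=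
  ⟨pivot σ + 1 + b.val, by have := b.isLt; have := pivot_lt σ; omega⟩

def partAFun : Fin (pivot σ) → Fin (pivot σ) := fun a =>
  ⟨(σ (posA σ a)).val - (n + 1 - pivot σ), by
    have h2 := key2 σ hσ (posA σ a) a.isLt
    have := (σ (posA σ a)).isLt
    have := pivot_lt σ
    omega⟩

def partBFun : Fin (n - pivot σ) → Fin (n - pivot σ) := fun b =>
  ⟨(σ (posB σ b)).val - 1, by
    have h3 := key3 σ hσ (posB σ b) (by simp [posB]; omega)
    have h0 := apply_ne_pivot σ (posB σ b) (by simp [posB]; omega)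
    have := b.isLt
    have := pivot_lt σ
    omega⟩

lemma partAFun_inj : Function.Injective (partAFun σ hσ) := by
  intro a b h
  rw [partAFun, partAFun, Fin.mk.injEq] at h
  have h2a := key2 σ hσ (posA σ a) a.isLt
  have h2b := key2 σ hσ (posA σ b) b.isLt
  have : σ (posA σ a) = σ (posA σ b) := Fin.ext (by omega)
  have := σ.injective this
  rw [posA, posA, Fin.mk.injEq] at this
  exact Fin.ext this

lemma partBFun_inj : Function.Injective (partBFun σ hσ) := by
  intro a b h
  rw [partBFun, partBFun, Fin.mk.injEq] at h
  have h0a := apply_ne_pivot σ (posB σ a) (by simp [posB]; omega)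
  have h0b := apply_ne_pivot σ (posB σ b) (by simp [posB]; omega)
  have : σ (posB σ a) = σ (posB σ b) := Fin.ext (by omega)
  have := σ.injective this
  rw [posB, posB, Fin.mk.injEq] at this
  exact Fin.ext (by omega)

noncomputable def partA : Equiv.Perm (Fin (pivot σ)) :=
  Equiv.ofBijective _ ((Finite.injective_iff_bijective).1 (partAFun_inj σ hσ))

noncomputable def partB : Equiv.Perm (Fin (n - pivot σ)) :=
  Equiv.ofBijective _ ((Finite.injective_iff_bijective).1 (partBFun_inj σ hσ))

lemma partA_val (a : Fin (pivot σ)) :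
    (partA σ hσ a).val = (σ (posA σ a)).val - (n + 1 - pivot σ) := rfl

lemma partB_val (b : Fin (n - pivot σ)) :
    (partB σ hσ b).val = (σ (posB σ b)).val - 1 := rfl

lemma partA_avoids : Avoids213 (partA σ hσ) := by
  rintro ⟨a, b, c, hab, hbc, hba, hac⟩
  rw [Fin.lt_def] at hab hbc hba hac
  have h2a := key2 σ hσ (posA σ a) a.isLt
  have h2b := key2 σ hσ (posA σ b) b.isLt
  have h2c := key2 σ hσ (posA σ c) c.isLt
  rw [partA_val, partA_val] at hba hac
  exact hσ ⟨posA σ a, posA σ b, posA σ c,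
    by rw [Fin.lt_def]; exact hab, by rw [Fin.lt_def]; exact hbc,
    by rw [Fin.lt_def]; omega, by rw [Fin.lt_def]; omega⟩

lemma partB_avoids : Avoids213 (partB σ hσ) := by
  rintro ⟨a, b, c, hab, hbc, hba, hac⟩
  rw [Fin.lt_def] at hab hbc hba hac
  have h0a := apply_ne_pivot σ (posB σ a) (by simp [posB]; omega)
  have h0b := apply_ne_pivot σ (posB σ b) (by simp [posB]; omega)
  have h0c := apply_ne_pivot σ (posB σ c) (by simp [posB]; omega)
  rw [partB_val, partB_val] at hba hac
  exact hσ ⟨posB σ a, posB σ b, posB σ c,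
    by rw [Fin.lt_def]; simp [posB]; omega, by rw [Fin.lt_def]; simp [posB]; omega,
    by rw [Fin.lt_def]; omega, by rw [Fin.lt_def]; omega⟩

lemma combine_decompose :
    combine (pivot σ) (by have := pivot_lt σ; omega) (partA σ hσ) (partB σ hσ) = σ := by
  apply Equiv.ext
  intro x
  apply Fin.ext
  rcases lt_trichotomy x.val (pivot σ) with hx | hx | hx
  · rw [combine_val_A _ _ _ _ x hx, partA_val]
    have hpos : posA σ ⟨x.val, hx⟩ = x := Fin.ext rfl
    rw [hpos]
    have := key2 σ hσ x hx
    have := (σ x).isLt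
    have := pivot_lt σ
    omega
  · rw [combine_val_piv _ _ _ _ x hx]
    have hx' : x = ⟨pivot σ, pivot_lt σ⟩ := Fin.ext hx
    rw [hx', apply_pivot]
  · rw [combine_val_B _ _ _ _ x hx, partB_val]
    have hpos : posB σ ⟨x.val - pivot σ - 1, by have := x.isLt; omega⟩ = x := by
      apply Fin.ext; show pivot σ + 1 + (x.val - pivot σ - 1) = x.val; omega
    rw [hpos]
    have h0 := apply_ne_pivot σ x (by omega)
    omega

end Parts

def SigmaType (n : ℕ) : Type :=
  Σ i : Fin (n + 1), {A : Equiv.Perm (Fin i.val) // Avoids213 A} ×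
    {B : Equiv.Perm (Fin (n - i.val)) // Avoids213 B}

noncomputable def Phi (n : ℕ) : SigmaType n → {σ : Equiv.Perm (Fin (n + 1)) // Avoids213 σ} :=
  fun s => ⟨combine s.1.val (by have := s.1.isLt; omega) s.2.1.val s.2.2.val,
    combine_avoids _ _ _ _ s.2.1.2 s.2.2.2⟩

set_option maxHeartbeats 1000000 in
lemma Phi_bij (n : ℕ) : Function.Bijective (Phi n) := by
  constructor
  · rintro ⟨i, ⟨A, hA⟩, ⟨B, hB⟩⟩ ⟨i', ⟨A', hA'⟩, ⟨B', hB'⟩⟩ h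
    simp only [Phi, Subtype.mk.injEq] at h
    have hii : i.val = i'.val := by
      by_contra hne
      have hval := congrArg (fun e => (e ⟨i.val, i.isLt⟩ : Fin (n + 1)).val) h
      rw [combine_val_piv _ _ _ _ _ rfl] at hval
      rcases lt_trichotomy i.val i'.val with hlt | heq | hgt
      · rw [combine_val_A _ _ _ _ _ hlt] at hval; omega
      · exact hne heq
      · rw [combine_val_B _ _ _ _ _ hgt] at hval; omega
    have hii' : i = i' := Fin.ext hii
    subst hii'
    have hAeq : A = A' := by
      apply Equiv.ext
      intro a
      have ha : a.val < i.val := a.isLt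
      have hval := congrArg (fun e => (e ⟨a.val, by omega⟩ : Fin (n + 1)).val) h
      rw [combine_val_A _ _ _ _ _ ha, combine_val_A _ _ _ _ _ ha] at hval
      have hfa : (⟨a.val, ha⟩ : Fin i.val) = a := Fin.ext rfl
      rw [hfa] at hval
      exact Fin.ext (by omega)
    have hBeq : B = B' := by
      apply Equiv.ext
      intro b
      have hb : b.val < n - i.val := b.isLt
      have hpos : i.val < i.val + 1 + b.val := by omega
      have hval := congrArg
        (fun e => (e ⟨i.val + 1 + b.val, by have := i.isLt; omega⟩ : Fin (n + 1)).val) h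
      rw [combine_val_B _ _ _ _ _ hpos, combine_val_B _ _ _ _ _ hpos] at hval
      simp only [Fin.val_mk] at hval
      have harg : i.val + 1 + b.val - i.val - 1 = b.val := by omega
      simp only [harg, Fin.eta] at hval
      exact Fin.ext (by omega)
    subst hAeq; subst hBeq
    rfl
  · rintro ⟨σ, hσ⟩
    refine ⟨⟨⟨pivot σ, pivot_lt σ⟩, ⟨partA σ hσ, partA_avoids σ hσ⟩,
      ⟨partB σ hσ, partB_avoids σ hσ⟩⟩, ?_⟩
    exact Subtype.ext (combine_decompose σ hσ)

noncomputable instance (n : ℕ) : Fintype (SigmaType n) := by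
  unfold SigmaType; infer_instance

theorem countEq : ∀ n : ℕ, Nat.card {σ : Equiv.Perm (Fin n) // Avoids213 σ} = catalan n := by
  intro n
  induction n using Nat.strong_induction_on with
  | _ n ih =>
    match n with
    | 0 =>
      have hall : ∀ σ : Equiv.Perm (Fin 0), Avoids213 σ := by
        rintro σ ⟨i, _⟩; exact i.elim0
      rw [Nat.card_congr (Equiv.subtypeUnivEquiv hall)]
      simp [Nat.card_eq_fintype_card]
    | n + 1 =>
      rw [Nat.card_congr (Equiv.ofBijective _ (Phi_bij n)).symm]
      rw [Nat.card_eq_fintype_card]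
      unfold SigmaType
      rw [Fintype.card_sigma, catalan_succ]
      apply Finset.sum_congr rfl
      intro i _
      rw [Fintype.card_prod, ← Nat.card_eq_fintype_card, ← Nat.card_eq_fintype_card,
        ih i.val i.isLt, ih (n - i.val) (by omega)]

end Avoid213Aux

theorem card_avoids213_eq_card_binaryTrees (n : ℕ) :
    Nat.card {σ : Equiv.Perm (Fin n) // Avoids213 σ} = (Tree.treesOfNumNodesEq n).card := by
  rw [Avoid213Aux.countEq, BinaryTree.treesOfNumNodesEq_card_eq_catalan]
end

section
/- Let n ≥ 1, let σ be a permutation of Fin n, and let a = σ⁻¹ 0 be the position of the minimum value. Then σ is 213-avoiding if and only if the following three conditions hold: (1) for all indices i < a and k > a, σ k < σ i; (2) there do not exist indices i < j < k all strictly less than a with σ j < σ i < σ k; (3) there do not exist indices i < j < k all strictly greater than a with σ j < σ i < σ k. -/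
open Function

section
variable {α β : Type*} [LinearOrder α] [LinearOrder β] {f : α → β} {a : α}

theorem lt_of_not_exists_213_through_min (hf : Injective f) (hmin : ∀ x, f a ≤ f x)
    (h : ¬ ∃ i j k, i < j ∧ j < k ∧ f j < f i ∧ f i < f k) {i k : α} (hi : i < a) (hk : a < k) :
    f k < f i := by
  by_contra! hik
  exact h ⟨i, a, k, hi, hk, (hmin i).lt_of_ne (hf.ne hi.ne'),
    hik.lt_of_ne (hf.ne (hi.trans hk).ne)⟩

theorem lt_min_or_min_lt_of_213 (hmin : ∀ x, f a ≤ f x)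
    (hsplit : ∀ i k, i < a → a < k → f k < f i) {i j k : α}
    (hji : f j < f i) (hik : f i < f k) : k < a ∨ a < i := by
  have hia : i ≠ a := by rintro rfl; exact (hmin j).not_gt hji
  have hka : k ≠ a := by rintro rfl; exact (hmin i).not_gt hik
  by_contra! h
  exact (hsplit i k (h.2.lt_of_ne hia) (h.1.lt_of_ne' hka)).not_gt hik

end

/-- A permutation of `Fin n` (with `n ≥ 1`) is 213-avoiding iff (1) every entry before
the position `a` of the minimum is greater than every entry after `a`, (2) there is no
213-pattern strictly before `a`, and (3) there is no 213-pattern strictly after `a`. -/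
theorem avoids213_iff_split_at_min (n : ℕ) (hn : 1 ≤ n) (σ : Equiv.Perm (Fin n)) :
    Avoids213 σ ↔
      ((∀ i k : Fin n, i < σ.symm ⟨0, hn⟩ → σ.symm ⟨0, hn⟩ < k → σ k < σ i) ∧
       (¬ ∃ i j k : Fin n, i < j ∧ j < k ∧ k < σ.symm ⟨0, hn⟩ ∧
          σ j < σ i ∧ σ i < σ k) ∧
       (¬ ∃ i j k : Fin n, σ.symm ⟨0, hn⟩ < i ∧ i < j ∧ j < k ∧
          σ j < σ i ∧ σ i < σ k)) := by
  set a := σ.symm ⟨0, hn⟩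
  have hmin : ∀ x, σ a ≤ σ x := fun x => by simp [a, Fin.le_def]
  constructor
  · intro h
    refine ⟨fun i k => lt_of_not_exists_213_through_min σ.injective hmin h, ?_, ?_⟩
    · rintro ⟨i, j, k, hij, hjk, -, hji, hik⟩
      exact h ⟨i, j, k, hij, hjk, hji, hik⟩
    · rintro ⟨i, j, k, -, hij, hjk, hji, hik⟩
      exact h ⟨i, j, k, hij, hjk, hji, hik⟩
  · rintro ⟨hsplit, hbefore, hafter⟩ ⟨i, j, k, hij, hjk, hji, hik⟩
    rcases lt_min_or_min_lt_of_213 hmin hsplit hji hik with hk | hi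
    · exact hbefore ⟨i, j, k, hij, hjk, hk, hji, hik⟩
    · exact hafter ⟨i, j, k, hi, hij, hjk, hji, hik⟩
end

section
/- For every natural number n ≥ 1, the number A(n) of 213-avoiding permutations of Fin n satisfies the Catalan recurrence A(n) = ∑_{k=0}^{n-1} A(k) · A(n-1-k), where A(m) denotes the number of 213-avoiding permutations of Fin m and A(0) = 1. -/
/-- The number of 213-avoiding permutations of `Fin m`. -/
noncomputable def numAvoids213 (m : ℕ) : ℕ := Nat.card {σ : Equiv.Perm (Fin m) // Avoids213 σ}

namespace Avoid213Aux

variable {N : ℕ}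

/-- Once a value below `σ 0` appears (after position 0), all later values are below `σ 0`. -/
theorem low_after {σ : Equiv.Perm (Fin (N + 1))} (hσ : Avoids213 σ) {i j : Fin (N + 1)}
    (hij : i < j) (hi : (σ i : ℕ) < (σ 0 : ℕ)) : (σ j : ℕ) < (σ 0 : ℕ) := by
  by_contra h
  have hj0 : j ≠ 0 := by
    rintro rfl
    exact absurd hij (by simp [Fin.lt_def])
  have hi0 : i ≠ 0 := by
    rintro rfl; omega
  have hne : (σ j : ℕ) ≠ (σ 0 : ℕ) := fun e => hj0 (σ.injective (Fin.ext e))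
  exact hσ ⟨0, i, j, Fin.pos_of_ne_zero hi0, hij, Fin.lt_def.mpr hi, Fin.lt_def.mpr (by omega)⟩

theorem card_low (σ : Equiv.Perm (Fin (N + 1))) :
    (Finset.univ.filter (fun i => (σ i : ℕ) < (σ 0 : ℕ))).card = (σ 0 : ℕ) := by
  classical
  have : (Finset.univ.filter (fun i => (σ i : ℕ) < (σ 0 : ℕ)))
      = (Finset.Iio (σ 0)).image σ.symm := by
    ext i
    simp only [Finset.mem_filter, Finset.mem_univ, true_and, Finset.mem_image, Finset.mem_Iio]
    constructor
    · intro h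
      exact ⟨σ i, Fin.lt_def.mpr h, by simp⟩
    · rintro ⟨v, hv, rfl⟩
      simpa using Fin.lt_def.mp hv
  rw [this, Finset.card_image_of_injective _ σ.symm.injective, Fin.card_Iio]

/-- Positions holding values below `σ 0` are exactly the last `σ 0` positions. -/
theorem key {σ : Equiv.Perm (Fin (N + 1))} (hσ : Avoids213 σ) (i : Fin (N + 1)) :
    (σ i : ℕ) < (σ 0 : ℕ) ↔ N - (σ 0 : ℕ) < (i : ℕ) := by
  classical
  have hmN : (σ 0 : ℕ) ≤ N := by have := (σ 0).isLt; omega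
  have fwd : ∀ j : Fin (N + 1), (σ j : ℕ) < (σ 0 : ℕ) → N - (σ 0 : ℕ) < (j : ℕ) := by
    intro j hj
    by_contra hle
    push_neg at hle
    have hsub : Finset.Ici j ⊆ Finset.univ.filter (fun a => (σ a : ℕ) < (σ 0 : ℕ)) := by
      intro a ha
      simp only [Finset.mem_Ici] at ha
      simp only [Finset.mem_filter, Finset.mem_univ, true_and]
      rcases eq_or_lt_of_le ha with rfl | h
      · exact hj
      · exact low_after hσ h hj
    have h1 := Finset.card_le_card hsub
    rw [card_low, Fin.card_Ici] at h1
    have := j.isLt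
    omega
  constructor
  · exact fwd i
  · intro hgt
    have hS : Finset.univ.filter (fun a => (σ a : ℕ) < (σ 0 : ℕ))
        = Finset.Ioi (⟨N - (σ 0 : ℕ), by omega⟩ : Fin (N + 1)) := by
      apply Finset.eq_of_subset_of_card_le
      · intro a ha
        simp only [Finset.mem_filter, Finset.mem_univ, true_and] at ha
        simpa only [Finset.mem_Ioi, Fin.lt_def] using fwd a ha
      · rw [card_low, Fin.card_Ioi]
        simp only []
        omega
    have : i ∈ Finset.univ.filter (fun a => (σ a : ℕ) < (σ 0 : ℕ)) := by
      rw [hS]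
      simpa only [Finset.mem_Ioi, Fin.lt_def] using hgt
    simpa using this

theorem mid_val {σ : Equiv.Perm (Fin (N + 1))} (hσ : Avoids213 σ) (i : Fin (N + 1))
    (h0 : (i : ℕ) ≠ 0) (h1 : (i : ℕ) ≤ N - (σ 0 : ℕ)) : (σ 0 : ℕ) < (σ i : ℕ) := by
  have h2 : ¬ (σ i : ℕ) < (σ 0 : ℕ) := by rw [key hσ]; omega
  have h3 : (σ i : ℕ) ≠ (σ 0 : ℕ) := fun e => h0 (by
    have := σ.injective (Fin.ext e); rw [this]; simp)
  omega

/-! ### Gluing -/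

def glueF (m : ℕ) (hm : m ≤ N) (τ : Fin (N - m) → Fin (N - m)) (ρ : Fin m → Fin m) :
    Fin (N + 1) → Fin (N + 1) := fun i =>
  if h0 : (i : ℕ) = 0 then ⟨m, by omega⟩
  else if h1 : (i : ℕ) ≤ N - m then
    let t := τ ⟨(i : ℕ) - 1, by omega⟩
    ⟨m + 1 + (t : ℕ), by have := t.isLt; omega⟩
  else
    let t := ρ ⟨(i : ℕ) - (N - m + 1), by have := i.isLt; omega⟩
    ⟨(t : ℕ), by have := t.isLt; omega⟩

theorem glueF_zero_val {m : ℕ} (hm : m ≤ N) (τ : Fin (N - m) → Fin (N - m)) (ρ : Fin m → Fin m)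
    {i : Fin (N + 1)} (h0 : (i : ℕ) = 0) : (glueF m hm τ ρ i : ℕ) = m := by
  simp only [glueF, dif_pos h0]

theorem glueF_mid {m : ℕ} (hm : m ≤ N) (τ : Fin (N - m) → Fin (N - m)) (ρ : Fin m → Fin m)
    {i : Fin (N + 1)} (h0 : (i : ℕ) ≠ 0) (h1 : (i : ℕ) ≤ N - m) (hj : (i : ℕ) - 1 < N - m) :
    (glueF m hm τ ρ i : ℕ) = m + 1 + (τ ⟨(i : ℕ) - 1, hj⟩ : ℕ) := by
  simp only [glueF, dif_neg h0, dif_pos h1]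

theorem glueF_low {m : ℕ} (hm : m ≤ N) (τ : Fin (N - m) → Fin (N - m)) (ρ : Fin m → Fin m)
    {i : Fin (N + 1)} (h1 : ¬ (i : ℕ) ≤ N - m) (hj : (i : ℕ) - (N - m + 1) < m) :
    (glueF m hm τ ρ i : ℕ) = (ρ ⟨(i : ℕ) - (N - m + 1), hj⟩ : ℕ) := by
  have h0 : (i : ℕ) ≠ 0 := by omega
  simp only [glueF, dif_neg h0, dif_neg h1]

theorem glueF_mid_range {m : ℕ} (hm : m ≤ N) (τ : Fin (N - m) → Fin (N - m)) (ρ : Fin m → Fin m)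
    {i : Fin (N + 1)} (h0 : (i : ℕ) ≠ 0) (h1 : (i : ℕ) ≤ N - m) :
    m < (glueF m hm τ ρ i : ℕ) := by
  rw [glueF_mid hm τ ρ h0 h1 (by omega)]
  omega

theorem glueF_low_range {m : ℕ} (hm : m ≤ N) (τ : Fin (N - m) → Fin (N - m)) (ρ : Fin m → Fin m)
    {i : Fin (N + 1)} (h1 : ¬ (i : ℕ) ≤ N - m) :
    (glueF m hm τ ρ i : ℕ) < m := by
  have hj : (i : ℕ) - (N - m + 1) < m := by have := i.isLt; omega
  rw [glueF_low hm τ ρ h1 hj]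
  exact (ρ _).isLt

theorem glueF_injective {m : ℕ} (hm : m ≤ N) {τ : Fin (N - m) → Fin (N - m)}
    {ρ : Fin m → Fin m} (hτ : Function.Injective τ) (hρ : Function.Injective ρ) :
    Function.Injective (glueF m hm τ ρ) := by
  intro a b hab
  have hab' : (glueF m hm τ ρ a : ℕ) = (glueF m hm τ ρ b : ℕ) := congrArg Fin.val hab
  by_cases ha0 : (a : ℕ) = 0 <;> by_cases hb0 : (b : ℕ) = 0
  · exact Fin.ext (ha0.trans hb0.symm)
  · exfalso
    rw [glueF_zero_val hm τ ρ ha0] at hab'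
    by_cases hb1 : (b : ℕ) ≤ N - m
    · have := glueF_mid_range hm τ ρ hb0 hb1; omega
    · have := glueF_low_range hm τ ρ hb1; omega
  · exfalso
    rw [glueF_zero_val hm τ ρ hb0] at hab'
    by_cases ha1 : (a : ℕ) ≤ N - m
    · have := glueF_mid_range hm τ ρ ha0 ha1; omega
    · have := glueF_low_range hm τ ρ ha1; omega
  · by_cases ha1 : (a : ℕ) ≤ N - m <;> by_cases hb1 : (b : ℕ) ≤ N - m
    · rw [glueF_mid hm τ ρ ha0 ha1 (by omega), glueF_mid hm τ ρ hb0 hb1 (by omega)] at hab'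
      have : τ ⟨(a : ℕ) - 1, by omega⟩ = τ ⟨(b : ℕ) - 1, by omega⟩ := Fin.ext (by omega)
      have := congrArg Fin.val (hτ this)
      simp only [] at this
      exact Fin.ext (by omega)
    · exfalso
      have := glueF_mid_range hm τ ρ ha0 ha1
      have := glueF_low_range hm τ ρ hb1
      omega
    · exfalso
      have := glueF_mid_range hm τ ρ hb0 hb1
      have := glueF_low_range hm τ ρ ha1
      omega
    · rw [glueF_low hm τ ρ ha1 (by have := a.isLt; omega),
        glueF_low hm τ ρ hb1 (by have := b.isLt; omega)] at hab'
      have : ρ ⟨(a : ℕ) - (N - m + 1), by have := a.isLt; omega⟩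
          = ρ ⟨(b : ℕ) - (N - m + 1), by have := b.isLt; omega⟩ := Fin.ext (by omega)
      have := congrArg Fin.val (hρ this)
      simp only [] at this
      exact Fin.ext (by omega)

noncomputable def gluePerm (m : ℕ) (hm : m ≤ N) (τ : Equiv.Perm (Fin (N - m)))
    (ρ : Equiv.Perm (Fin m)) : Equiv.Perm (Fin (N + 1)) :=
  Equiv.ofBijective (glueF m hm τ ρ)
    (Finite.injective_iff_bijective.mp (glueF_injective hm τ.injective ρ.injective))

theorem gluePerm_apply (m : ℕ) (hm : m ≤ N) (τ : Equiv.Perm (Fin (N - m)))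
    (ρ : Equiv.Perm (Fin m)) (i : Fin (N + 1)) :
    gluePerm m hm τ ρ i = glueF m hm (⇑τ) (⇑ρ) i := rfl

theorem gluePerm_zero (m : ℕ) (hm : m ≤ N) (τ : Equiv.Perm (Fin (N - m)))
    (ρ : Equiv.Perm (Fin m)) : ((gluePerm m hm τ ρ) 0 : ℕ) = m := by
  rw [gluePerm_apply, glueF_zero_val hm _ _ (by simp)]

set_option maxHeartbeats 2000000 in
theorem gluePerm_avoids (m : ℕ) (hm : m ≤ N) (τ : Equiv.Perm (Fin (N - m)))
    (ρ : Equiv.Perm (Fin m)) (hτ : Avoids213 τ) (hρ : Avoids213 ρ) :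
    Avoids213 (gluePerm m hm τ ρ) := by
  rintro ⟨i, j, k, hij, hjk, h1, h2⟩
  rw [Fin.lt_def] at hij hjk h1 h2
  simp only [gluePerm_apply] at h1 h2
  have hj0 : (j : ℕ) ≠ 0 := by omega
  have hk0 : (k : ℕ) ≠ 0 := by omega
  by_cases hi0 : (i : ℕ) = 0
  · -- σ i = m; then j must be in the low block and k in the mid block: impossible
    rw [glueF_zero_val hm _ _ hi0] at h1 h2
    have hjlow : ¬ (j : ℕ) ≤ N - m := by
      intro hj1
      have := glueF_mid_range hm (⇑τ) (⇑ρ) hj0 hj1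
      omega
    have hkmid : (k : ℕ) ≤ N - m := by
      by_contra hk1
      have := glueF_low_range hm (⇑τ) (⇑ρ) hk1
      omega
    omega
  · by_cases hi1 : (i : ℕ) ≤ N - m
    · -- mid block
      have himid := glueF_mid_range hm (⇑τ) (⇑ρ) hi0 hi1
      have hkmid : (k : ℕ) ≤ N - m := by
        by_contra hk1
        have := glueF_low_range hm (⇑τ) (⇑ρ) hk1
        omega
      have hjmid : (j : ℕ) ≤ N - m := by omega
      have pi : (i : ℕ) - 1 < N - m := by omega
      have pj : (j : ℕ) - 1 < N - m := by omega
      have pk : (k : ℕ) - 1 < N - m := by omega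
      rw [glueF_mid hm (⇑τ) (⇑ρ) (i := i) hi0 hi1 pi] at h2
      rw [glueF_mid hm (⇑τ) (⇑ρ) (i := i) hi0 hi1 pi] at h1
      rw [glueF_mid hm (⇑τ) (⇑ρ) (i := j) hj0 hjmid pj] at h1
      rw [glueF_mid hm (⇑τ) (⇑ρ) (i := k) hk0 hkmid pk] at h2
      exact hτ ⟨⟨(i : ℕ) - 1, by omega⟩, ⟨(j : ℕ) - 1, by omega⟩, ⟨(k : ℕ) - 1, by omega⟩,
        Fin.lt_def.mpr (by simp; omega), Fin.lt_def.mpr (by simp; omega),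
        Fin.lt_def.mpr (by omega), Fin.lt_def.mpr (by omega)⟩
    · -- low block
      have hjlow : ¬ (j : ℕ) ≤ N - m := by omega
      have hklow : ¬ (k : ℕ) ≤ N - m := by omega
      have pi : (i : ℕ) - (N - m + 1) < m := by have := i.isLt; omega
      have pj : (j : ℕ) - (N - m + 1) < m := by have := j.isLt; omega
      have pk : (k : ℕ) - (N - m + 1) < m := by have := k.isLt; omega
      rw [glueF_low hm (⇑τ) (⇑ρ) (i := i) hi1 pi] at h2
      rw [glueF_low hm (⇑τ) (⇑ρ) (i := i) hi1 pi] at h1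
      rw [glueF_low hm (⇑τ) (⇑ρ) (i := j) hjlow pj] at h1
      rw [glueF_low hm (⇑τ) (⇑ρ) (i := k) hklow pk] at h2
      exact hρ ⟨⟨(i : ℕ) - (N - m + 1), by have := i.isLt; omega⟩,
        ⟨(j : ℕ) - (N - m + 1), by have := j.isLt; omega⟩,
        ⟨(k : ℕ) - (N - m + 1), by have := k.isLt; omega⟩,
        Fin.lt_def.mpr (by simp; omega), Fin.lt_def.mpr (by simp; omega),
        Fin.lt_def.mpr (by omega), Fin.lt_def.mpr (by omega)⟩

/-! ### Splitting -/

def splitτ (σ : Equiv.Perm (Fin (N + 1))) (hσ : Avoids213 σ) (m : ℕ)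
    (hm0 : (σ 0 : ℕ) = m) : Fin (N - m) → Fin (N - m) := fun j =>
  ⟨(σ ⟨(j : ℕ) + 1, by have := j.isLt; omega⟩ : ℕ) - (m + 1), by
    subst hm0
    have h1 := mid_val hσ ⟨(j : ℕ) + 1, by have := j.isLt; omega⟩ (by simp) (by
      simp only [Fin.val_mk]; have := j.isLt; omega)
    have h2 := (σ ⟨(j : ℕ) + 1, by have := j.isLt; omega⟩).isLt
    omega⟩

def splitρ (σ : Equiv.Perm (Fin (N + 1))) (hσ : Avoids213 σ) (m : ℕ)
    (hm0 : (σ 0 : ℕ) = m) : Fin m → Fin m := fun j =>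
  ⟨(σ ⟨N - m + 1 + (j : ℕ), by have h1 := j.isLt; have h2 : m ≤ N := hm0 ▸ Nat.lt_succ_iff.mp (σ 0).isLt; omega⟩ : ℕ), by
    subst hm0
    have h1 := (key hσ ⟨N - (σ 0 : ℕ) + 1 + (j : ℕ), by have := j.isLt; have := (σ 0).isLt; omega⟩).mpr (by
      simp only [Fin.val_mk]; omega)
    exact h1⟩

theorem splitτ_val (σ : Equiv.Perm (Fin (N + 1))) (hσ : Avoids213 σ) (m : ℕ)
    (hm0 : (σ 0 : ℕ) = m) (j : Fin (N - m)) (hp : (j : ℕ) + 1 < N + 1) :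
    (splitτ σ hσ m hm0 j : ℕ) = (σ ⟨(j : ℕ) + 1, hp⟩ : ℕ) - (m + 1) := rfl

theorem splitρ_val (σ : Equiv.Perm (Fin (N + 1))) (hσ : Avoids213 σ) (m : ℕ)
    (hm0 : (σ 0 : ℕ) = m) (j : Fin m) (hp : N - m + 1 + (j : ℕ) < N + 1) :
    (splitρ σ hσ m hm0 j : ℕ) = (σ ⟨N - m + 1 + (j : ℕ), hp⟩ : ℕ) := rfl

theorem splitτ_injective (σ : Equiv.Perm (Fin (N + 1))) (hσ : Avoids213 σ) (m : ℕ)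
    (hm0 : (σ 0 : ℕ) = m) : Function.Injective (splitτ σ hσ m hm0) := by
  intro a b hab
  have ha : (a : ℕ) + 1 < N + 1 := by have := a.isLt; omega
  have hb : (b : ℕ) + 1 < N + 1 := by have := b.isLt; omega
  have hab' := congrArg Fin.val hab
  rw [splitτ_val σ hσ m hm0 a ha, splitτ_val σ hσ m hm0 b hb] at hab'
  have hma : m < (σ ⟨(a : ℕ) + 1, ha⟩ : ℕ) := by
    subst hm0
    exact mid_val hσ _ (by simp) (by simp only [Fin.val_mk]; have := a.isLt; omega)
  have hmb : m < (σ ⟨(b : ℕ) + 1, hb⟩ : ℕ) := by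
    subst hm0
    exact mid_val hσ _ (by simp) (by simp only [Fin.val_mk]; have := b.isLt; omega)
  have : σ ⟨(a : ℕ) + 1, ha⟩ = σ ⟨(b : ℕ) + 1, hb⟩ := Fin.ext (by omega)
  have := congrArg Fin.val (σ.injective this)
  simp only [Fin.val_mk] at this
  exact Fin.ext (by omega)

theorem splitρ_injective (σ : Equiv.Perm (Fin (N + 1))) (hσ : Avoids213 σ) (m : ℕ)
    (hm0 : (σ 0 : ℕ) = m) : Function.Injective (splitρ σ hσ m hm0) := by
  have hmN : m ≤ N := by subst hm0; have := (σ 0).isLt; omega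
  intro a b hab
  have ha : N - m + 1 + (a : ℕ) < N + 1 := by have := a.isLt; omega
  have hb : N - m + 1 + (b : ℕ) < N + 1 := by have := b.isLt; omega
  have hab' := congrArg Fin.val hab
  rw [splitρ_val σ hσ m hm0 a ha, splitρ_val σ hσ m hm0 b hb] at hab'
  have : σ ⟨N - m + 1 + (a : ℕ), ha⟩ = σ ⟨N - m + 1 + (b : ℕ), hb⟩ := Fin.ext hab'
  have := congrArg Fin.val (σ.injective this)
  simp only [Fin.val_mk] at this
  exact Fin.ext (by omega)

theorem splitτ_avoids (σ : Equiv.Perm (Fin (N + 1))) (hσ : Avoids213 σ) (m : ℕ)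
    (hm0 : (σ 0 : ℕ) = m)
    (e : Equiv.Perm (Fin (N - m))) (he : ∀ x, e x = splitτ σ hσ m hm0 x) : Avoids213 e := by
  have hmN : m ≤ N := by subst hm0; have := (σ 0).isLt; omega
  rintro ⟨a, b, c, hab, hbc, h1, h2⟩
  rw [Fin.lt_def] at hab hbc h1 h2
  simp only [he] at h1 h2
  have ha : (a : ℕ) + 1 < N + 1 := by have := a.isLt; omega
  have hb : (b : ℕ) + 1 < N + 1 := by have := b.isLt; omega
  have hc : (c : ℕ) + 1 < N + 1 := by have := c.isLt; omega
  rw [splitτ_val σ hσ m hm0 a ha, splitτ_val σ hσ m hm0 b hb] at h1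
  rw [splitτ_val σ hσ m hm0 a ha, splitτ_val σ hσ m hm0 c hc] at h2
  have hma : m < (σ ⟨(a : ℕ) + 1, ha⟩ : ℕ) := by
    subst hm0
    exact mid_val hσ _ (by simp) (by simp only [Fin.val_mk]; have := a.isLt; omega)
  have hmb : m < (σ ⟨(b : ℕ) + 1, hb⟩ : ℕ) := by
    subst hm0
    exact mid_val hσ _ (by simp) (by simp only [Fin.val_mk]; have := b.isLt; omega)
  have hmc : m < (σ ⟨(c : ℕ) + 1, hc⟩ : ℕ) := by
    subst hm0
    exact mid_val hσ _ (by simp) (by simp only [Fin.val_mk]; have := c.isLt; omega)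
  exact hσ ⟨⟨(a : ℕ) + 1, ha⟩, ⟨(b : ℕ) + 1, hb⟩, ⟨(c : ℕ) + 1, hc⟩,
    Fin.lt_def.mpr (by simp; omega), Fin.lt_def.mpr (by simp; omega),
    Fin.lt_def.mpr (by omega), Fin.lt_def.mpr (by omega)⟩

theorem splitρ_avoids (σ : Equiv.Perm (Fin (N + 1))) (hσ : Avoids213 σ) (m : ℕ)
    (hm0 : (σ 0 : ℕ) = m)
    (e : Equiv.Perm (Fin m)) (he : ∀ x, e x = splitρ σ hσ m hm0 x) : Avoids213 e := by
  have hmN : m ≤ N := by subst hm0; have := (σ 0).isLt; omega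
  rintro ⟨a, b, c, hab, hbc, h1, h2⟩
  rw [Fin.lt_def] at hab hbc h1 h2
  simp only [he] at h1 h2
  have ha : N - m + 1 + (a : ℕ) < N + 1 := by have := a.isLt; omega
  have hb : N - m + 1 + (b : ℕ) < N + 1 := by have := b.isLt; omega
  have hc : N - m + 1 + (c : ℕ) < N + 1 := by have := c.isLt; omega
  rw [splitρ_val σ hσ m hm0 a ha, splitρ_val σ hσ m hm0 b hb] at h1
  rw [splitρ_val σ hσ m hm0 a ha, splitρ_val σ hσ m hm0 c hc] at h2
  exact hσ ⟨⟨N - m + 1 + (a : ℕ), ha⟩, ⟨N - m + 1 + (b : ℕ), hb⟩, ⟨N - m + 1 + (c : ℕ), hc⟩,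
    Fin.lt_def.mpr (by simp; omega), Fin.lt_def.mpr (by simp; omega),
    Fin.lt_def.mpr (by omega), Fin.lt_def.mpr (by omega)⟩

/-! ### The two identities -/

theorem glue_split (σ : Equiv.Perm (Fin (N + 1))) (hσ : Avoids213 σ) (m : ℕ)
    (hm0 : (σ 0 : ℕ) = m) (hm : m ≤ N)
    (τ : Equiv.Perm (Fin (N - m))) (hτe : ∀ x, τ x = splitτ σ hσ m hm0 x)
    (ρ : Equiv.Perm (Fin m)) (hρe : ∀ x, ρ x = splitρ σ hσ m hm0 x)
    (i : Fin (N + 1)) : gluePerm m hm τ ρ i = σ i := by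
  apply Fin.ext
  rw [gluePerm_apply]
  by_cases h0 : (i : ℕ) = 0
  · rw [glueF_zero_val hm _ _ h0]
    have : i = 0 := Fin.ext (by simpa using h0)
    rw [this, hm0]
  · by_cases h1 : (i : ℕ) ≤ N - m
    · have p1 : (i : ℕ) - 1 < N - m := by omega
      rw [glueF_mid hm (⇑τ) (⇑ρ) h0 h1 p1, hτe]
      have hp : ((⟨(i : ℕ) - 1, p1⟩ : Fin (N - m)) : ℕ) + 1 < N + 1 := by
        simp only [Fin.val_mk]; omega
      rw [splitτ_val σ hσ m hm0 _ hp]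
      have he : (⟨((⟨(i : ℕ) - 1, p1⟩ : Fin (N - m)) : ℕ) + 1, hp⟩ : Fin (N + 1)) = i :=
        Fin.ext (by simp only [Fin.val_mk]; omega)
      rw [he]
      have hmi : m < (σ i : ℕ) := by subst hm0; exact mid_val hσ i h0 h1
      omega
    · have p1 : (i : ℕ) - (N - m + 1) < m := by have := i.isLt; omega
      rw [glueF_low hm (⇑τ) (⇑ρ) h1 p1, hρe]
      have hp : N - m + 1 + ((⟨(i : ℕ) - (N - m + 1), p1⟩ : Fin m) : ℕ) < N + 1 := by
        simp only [Fin.val_mk]; have := i.isLt; omega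
      rw [splitρ_val σ hσ m hm0 _ hp]
      have he : (⟨N - m + 1 + ((⟨(i : ℕ) - (N - m + 1), p1⟩ : Fin m) : ℕ), hp⟩ : Fin (N + 1)) = i :=
        Fin.ext (by simp only [Fin.val_mk]; have := i.isLt; omega)
      rw [he]

theorem split_glue_τ (m : ℕ) (hm : m ≤ N) (τ : Equiv.Perm (Fin (N - m)))
    (ρ : Equiv.Perm (Fin m)) (hσ : Avoids213 (gluePerm m hm τ ρ))
    (hm0 : ((gluePerm m hm τ ρ) 0 : ℕ) = m) (j : Fin (N - m)) :
    splitτ (gluePerm m hm τ ρ) hσ m hm0 j = τ j := by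
  apply Fin.ext
  have hp : (j : ℕ) + 1 < N + 1 := by have := j.isLt; omega
  rw [splitτ_val _ hσ m hm0 j hp, gluePerm_apply]
  have h0 : ((⟨(j : ℕ) + 1, hp⟩ : Fin (N + 1)) : ℕ) ≠ 0 := by simp
  have h1 : ((⟨(j : ℕ) + 1, hp⟩ : Fin (N + 1)) : ℕ) ≤ N - m := by
    simp only [Fin.val_mk]; have := j.isLt; omega
  have p1 : ((⟨(j : ℕ) + 1, hp⟩ : Fin (N + 1)) : ℕ) - 1 < N - m := by
    simp only [Fin.val_mk]; have := j.isLt; omega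
  rw [glueF_mid hm (⇑τ) (⇑ρ) h0 h1 p1]
  have he : (⟨((⟨(j : ℕ) + 1, hp⟩ : Fin (N + 1)) : ℕ) - 1, p1⟩ : Fin (N - m)) = j :=
    Fin.ext (by simp only [Fin.val_mk]; omega)
  rw [he]
  omega

theorem split_glue_ρ (m : ℕ) (hm : m ≤ N) (τ : Equiv.Perm (Fin (N - m)))
    (ρ : Equiv.Perm (Fin m)) (hσ : Avoids213 (gluePerm m hm τ ρ))
    (hm0 : ((gluePerm m hm τ ρ) 0 : ℕ) = m) (j : Fin m) :
    splitρ (gluePerm m hm τ ρ) hσ m hm0 j = ρ j := by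
  apply Fin.ext
  have hp : N - m + 1 + (j : ℕ) < N + 1 := by have := j.isLt; omega
  rw [splitρ_val _ hσ m hm0 j hp, gluePerm_apply]
  have h1 : ¬ ((⟨N - m + 1 + (j : ℕ), hp⟩ : Fin (N + 1)) : ℕ) ≤ N - m := by
    simp only [Fin.val_mk]; omega
  have p1 : ((⟨N - m + 1 + (j : ℕ), hp⟩ : Fin (N + 1)) : ℕ) - (N - m + 1) < m := by
    simp only [Fin.val_mk]; have := j.isLt; omega
  rw [glueF_low hm (⇑τ) (⇑ρ) h1 p1]
  have he : (⟨((⟨N - m + 1 + (j : ℕ), hp⟩ : Fin (N + 1)) : ℕ) - (N - m + 1), p1⟩ : Fin m) = j :=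
    Fin.ext (by simp only [Fin.val_mk]; omega)
  rw [he]

/-! ### The fiberwise equivalence -/

noncomputable def splitτPerm (σ : Equiv.Perm (Fin (N + 1))) (hσ : Avoids213 σ) (m : ℕ)
    (hm0 : (σ 0 : ℕ) = m) : Equiv.Perm (Fin (N - m)) :=
  Equiv.ofBijective (splitτ σ hσ m hm0)
    (Finite.injective_iff_bijective.mp (splitτ_injective σ hσ m hm0))

noncomputable def splitρPerm (σ : Equiv.Perm (Fin (N + 1))) (hσ : Avoids213 σ) (m : ℕ)
    (hm0 : (σ 0 : ℕ) = m) : Equiv.Perm (Fin m) :=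
  Equiv.ofBijective (splitρ σ hσ m hm0)
    (Finite.injective_iff_bijective.mp (splitρ_injective σ hσ m hm0))

noncomputable def fiberEquiv (m : Fin (N + 1)) :
    {σ : Equiv.Perm (Fin (N + 1)) // Avoids213 σ ∧ σ 0 = m} ≃
      {τ : Equiv.Perm (Fin (N - (m : ℕ))) // Avoids213 τ} ×
        {ρ : Equiv.Perm (Fin (m : ℕ)) // Avoids213 ρ} where
  toFun p :=
    (⟨splitτPerm p.1 p.2.1 (m : ℕ) (congrArg Fin.val p.2.2),
        splitτ_avoids p.1 p.2.1 (m : ℕ) (congrArg Fin.val p.2.2) _ (fun _ => rfl)⟩,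
      ⟨splitρPerm p.1 p.2.1 (m : ℕ) (congrArg Fin.val p.2.2),
        splitρ_avoids p.1 p.2.1 (m : ℕ) (congrArg Fin.val p.2.2) _ (fun _ => rfl)⟩)
  invFun q :=
    ⟨gluePerm (m : ℕ) (Nat.lt_succ_iff.mp m.isLt) q.1.1 q.2.1,
      gluePerm_avoids _ _ _ _ q.1.2 q.2.2,
      Fin.ext (gluePerm_zero _ _ _ _)⟩
  left_inv p := Subtype.ext (Equiv.ext fun i =>
    glue_split p.1 p.2.1 (m : ℕ) (congrArg Fin.val p.2.2) (Nat.lt_succ_iff.mp m.isLt)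
      _ (fun _ => rfl) _ (fun _ => rfl) i)
  right_inv q := Prod.ext
    (Subtype.ext (Equiv.ext fun j => split_glue_τ (m : ℕ) (Nat.lt_succ_iff.mp m.isLt)
      q.1.1 q.2.1 (gluePerm_avoids _ _ _ _ q.1.2 q.2.2) (gluePerm_zero _ _ _ _) j))
    (Subtype.ext (Equiv.ext fun j => split_glue_ρ (m : ℕ) (Nat.lt_succ_iff.mp m.isLt)
      q.1.1 q.2.1 (gluePerm_avoids _ _ _ _ q.1.2 q.2.2) (gluePerm_zero _ _ _ _) j))

/-! ### Counting -/

theorem count_step (N : ℕ) :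
    numAvoids213 (N + 1)
      = ∑ m : Fin (N + 1), numAvoids213 (N - (m : ℕ)) * numAvoids213 (m : ℕ) := by
  classical
  have e1 : {σ : Equiv.Perm (Fin (N + 1)) // Avoids213 σ} ≃
      Σ m : Fin (N + 1), {σ : Equiv.Perm (Fin (N + 1)) // Avoids213 σ ∧ σ 0 = m} :=
    ((Equiv.sigmaFiberEquiv
        (fun p : {σ : Equiv.Perm (Fin (N + 1)) // Avoids213 σ} => p.1 0)).symm).trans
      (Equiv.sigmaCongrRight fun m => Equiv.subtypeSubtypeEquivSubtypeInter (fun σ : Equiv.Perm (Fin (N + 1)) => Avoids213 σ) (fun σ => σ 0 = m))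
  rw [numAvoids213, Nat.card_congr e1]
  letI : ∀ m : Fin (N + 1),
      Fintype {σ : Equiv.Perm (Fin (N + 1)) // Avoids213 σ ∧ σ 0 = m} :=
    fun m => Fintype.ofFinite _
  rw [Nat.card_eq_fintype_card, Fintype.card_sigma]
  apply Finset.sum_congr rfl
  intro m _
  rw [← Nat.card_eq_fintype_card, Nat.card_congr (fiberEquiv m), Nat.card_prod]
  rfl

end Avoid213Aux

/-- The counts of 213-avoiding permutations satisfy the Catalan recurrence. -/
theorem numAvoids213_recurrence (n : ℕ) (hn : 1 ≤ n) :
    numAvoids213 n = ∑ k ∈ Finset.range n, numAvoids213 k * numAvoids213 (n - 1 - k) := by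
  obtain ⟨N, rfl⟩ : ∃ N, n = N + 1 := ⟨n - 1, by omega⟩
  rw [Avoid213Aux.count_step]
  rw [Fin.sum_univ_eq_sum_range (fun m => numAvoids213 (N - m) * numAvoids213 m) (N + 1)]
  rw [← Finset.sum_range_reflect (fun m => numAvoids213 (N - m) * numAvoids213 m) (N + 1)]
  apply Finset.sum_congr rfl
  intro k hk
  simp only [Finset.mem_range] at hk
  have h1 : N + 1 - 1 - k = N - k := by omega
  have h2 : N - (N - k) = k := by omega
  rw [h1, h2]
end

section
/- For every natural number n, the number of Young diagrams contained in the staircase Young diagram S(n) equals the Catalan number catalan (n+1). -/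
/-- The staircase Young diagram with row lengths `(m, m-1, ..., 2, 1)`:
its cells are the pairs `(i, j)` with `i + j < m`. -/
def staircase (m : ℕ) : YoungDiagram where
  cells := (Finset.range m ×ˢ Finset.range m).filter (fun p => p.1 + p.2 < m)
  isLowerSet := by
    intro p q hle hp
    simp only [Finset.mem_coe, Finset.mem_filter, Finset.mem_product,
      Finset.mem_range] at hp ⊢
    obtain ⟨h1, h2⟩ := hle
    omega

lemma mem_staircase {m : ℕ} {c : ℕ × ℕ} : c ∈ staircase m ↔ c.1 + c.2 < m := by
  rw [← YoungDiagram.mem_cells]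
  simp only [staircase, YoungDiagram.mem_mk, Finset.mem_filter, Finset.mem_product,
    Finset.mem_range]
  omega

/-- The set of monotone functions `g : Fin m → ℕ` with `g k ≤ k`. -/
def Tset (m : ℕ) : Finset (Fin m → ℕ) :=
  (Fintype.piFinset fun k : Fin m => Finset.range (k + 1)).filter
    fun g => ∀ a b : Fin m, (a : ℕ) ≤ b → g a ≤ g b

lemma mem_Tset {m : ℕ} {g : Fin m → ℕ} :
    g ∈ Tset m ↔ (∀ k : Fin m, g k ≤ k) ∧ ∀ a b : Fin m, (a : ℕ) ≤ b → g a ≤ g b := by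
  simp [Tset, Fintype.mem_piFinset, Nat.lt_succ_iff]

/-- Extension of `g : Fin (m+1) → ℕ` to `ℕ` by the identity. -/
def extg (m : ℕ) (g : Fin (m + 1) → ℕ) : ℕ → ℕ :=
  fun p => if h : p < m + 1 then g ⟨p, h⟩ else p

lemma exists_hit (m : ℕ) (g : Fin (m + 1) → ℕ) : ∃ p, 1 ≤ p ∧ extg m g p = p :=
  ⟨m + 1, by simp [extg]⟩

/-- The first `p ≥ 1` with `g p = p` (where `g` is extended by the identity). -/
def firstHit (m : ℕ) (g : Fin (m + 1) → ℕ) : ℕ := Nat.find (exists_hit m g)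

lemma firstHit_spec (m : ℕ) (g : Fin (m + 1) → ℕ) :
    1 ≤ firstHit m g ∧ extg m g (firstHit m g) = firstHit m g :=
  Nat.find_spec (exists_hit m g)

lemma firstHit_min (m : ℕ) (g : Fin (m + 1) → ℕ) {q : ℕ} (hq : q < firstHit m g) :
    ¬(1 ≤ q ∧ extg m g q = q) :=
  Nat.find_min (exists_hit m g) hq

lemma firstHit_le (m : ℕ) (g : Fin (m + 1) → ℕ) : firstHit m g ≤ m + 1 :=
  Nat.find_le (by simp [extg])

lemma firstHit_pos (m : ℕ) (g : Fin (m + 1) → ℕ) : 1 ≤ firstHit m g :=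
  (firstHit_spec m g).1

/-- Splitting a function at position `j + 1`. -/
def splitF (m j : ℕ) (hj : j ≤ m) (g : Fin (m + 1) → ℕ) :
    (Fin j → ℕ) × (Fin (m - j) → ℕ) :=
  (fun k => g ⟨(k : ℕ) + 1, by have := k.isLt; omega⟩,
   fun k => g ⟨j + 1 + (k : ℕ), by have := k.isLt; omega⟩ - (j + 1))

/-- Gluing two functions at position `j + 1`. -/
def glueF (m j : ℕ) (pr : (Fin j → ℕ) × (Fin (m - j) → ℕ)) : Fin (m + 1) → ℕ :=
  fun k =>
    if h : 1 ≤ (k : ℕ) ∧ (k : ℕ) ≤ j then pr.1 ⟨(k : ℕ) - 1, by omega⟩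
    else if h2 : j + 1 ≤ (k : ℕ) then
      (j + 1) + pr.2 ⟨(k : ℕ) - (j + 1), by have := k.isLt; omega⟩
    else 0

lemma glueF_zero {m j : ℕ} {pr} {k : Fin (m + 1)} (hk : (k : ℕ) = 0) :
    glueF m j pr k = 0 := by
  rw [glueF, dif_neg (by omega), dif_neg (by omega)]

lemma glueF_low {m j : ℕ} {pr} {k : Fin (m + 1)} (hk1 : 1 ≤ (k : ℕ)) (hk2 : (k : ℕ) ≤ j) :
    glueF m j pr k = pr.1 ⟨(k : ℕ) - 1, by omega⟩ := by
  rw [glueF, dif_pos ⟨hk1, hk2⟩]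

lemma glueF_high {m j : ℕ} {pr} {k : Fin (m + 1)} (hk : j + 1 ≤ (k : ℕ)) :
    glueF m j pr k = (j + 1) + pr.2 ⟨(k : ℕ) - (j + 1), by have := k.isLt; omega⟩ := by
  rw [glueF, dif_neg (by omega), dif_pos hk]

theorem card_Tset (m : ℕ) : (Tset m).card = catalan m := by
  induction m using Nat.strong_induction_on with
  | _ m IH =>
    match m with
    | 0 =>
      rw [catalan_zero, Finset.card_eq_one]
      refine ⟨fun k => 0, ?_⟩
      ext g
      simp only [mem_Tset, Finset.mem_singleton]
      constructor
      · intro _; funext k; exact k.elim0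
      · rintro rfl; exact ⟨fun k => k.elim0, fun a => a.elim0⟩
    | m + 1 =>
      have key : ∀ j ∈ Finset.range (m + 1),
          ((Tset (m + 1)).filter fun g => firstHit m g - 1 = j).card
            = catalan j * catalan (m - j) := by
        intro j hj
        rw [Finset.mem_range] at hj
        have hj' : j ≤ m := Nat.lt_succ_iff.mp hj
        rw [← IH j (by omega), ← IH (m - j) (by omega), ← Finset.card_product]
        refine Finset.card_nbij' (splitF m j hj') (glueF m j) ?_ ?_ ?_ ?_
        · -- splitF maps into the product
          intro g hg
          rw [Finset.mem_coe, Finset.mem_filter] at hg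
          obtain ⟨hgT, hfh⟩ := hg
          rw [mem_Tset] at hgT
          obtain ⟨hle, hmono⟩ := hgT
          have hfh1 : firstHit m g = j + 1 := by
            have := firstHit_pos m g; omega
          have hlt : ∀ k : ℕ, 1 ≤ k → k ≤ j → ∀ h : k < m + 1, g ⟨k, h⟩ < k := by
            intro k hk1 hk2 h
            have hmin := firstHit_min m g (q := k) (by omega)
            simp only [extg, h, dif_pos] at hmin
            have := hle ⟨k, h⟩
            simp only at this
            omega
          simp only [Finset.mem_coe, Finset.mem_product, mem_Tset, splitF]
          refine ⟨⟨?_, ?_⟩, ?_, ?_⟩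
          · intro k
            have := hlt ((k : ℕ) + 1) (by omega) (by have := k.isLt; omega)
              (by have := k.isLt; omega)
            omega
          · intro a b hab
            exact hmono ⟨(a : ℕ) + 1, by have := a.isLt; omega⟩
              ⟨(b : ℕ) + 1, by have := b.isLt; omega⟩ (Nat.succ_le_succ hab)
          · intro k
            have := hle ⟨j + 1 + (k : ℕ), by have := k.isLt; omega⟩
            simp only at this
            omega
          · intro a b hab
            have := hmono ⟨j + 1 + (a : ℕ), by have := a.isLt; omega⟩
              ⟨j + 1 + (b : ℕ), by have := b.isLt; omega⟩ (Nat.add_le_add_left hab _)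
            omega
        · -- glueF maps into the fiber
          intro pr hpr
          rw [Finset.mem_coe, Finset.mem_product, mem_Tset, mem_Tset] at hpr
          obtain ⟨⟨h1le, h1mono⟩, h2le, h2mono⟩ := hpr
          have hbound : ∀ k : Fin (m + 1), glueF m j pr k ≤ (k : ℕ) := by
            intro k
            by_cases h : 1 ≤ (k : ℕ) ∧ (k : ℕ) ≤ j
            · rw [glueF_low h.1 h.2]
              have := h1le ⟨(k : ℕ) - 1, by omega⟩
              simp only at this
              omega
            · by_cases h2 : j + 1 ≤ (k : ℕ)
              · rw [glueF_high h2]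
                have := h2le ⟨(k : ℕ) - (j + 1), by have := k.isLt; omega⟩
                simp only at this
                omega
              · rw [glueF_zero (by omega)]; omega
          have hmono : ∀ a b : Fin (m + 1), (a : ℕ) ≤ (b : ℕ) →
              glueF m j pr a ≤ glueF m j pr b := by
            intro a b hab
            by_cases ha : 1 ≤ (a : ℕ) ∧ (a : ℕ) ≤ j
            · rw [glueF_low ha.1 ha.2]
              by_cases hb : (b : ℕ) ≤ j
              · rw [glueF_low (by omega) hb]
                exact h1mono ⟨(a : ℕ) - 1, by omega⟩ ⟨(b : ℕ) - 1, by omega⟩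
                  (show (a : ℕ) - 1 ≤ (b : ℕ) - 1 by omega)
              · rw [glueF_high (by omega)]
                have := h1le ⟨(a : ℕ) - 1, by omega⟩
                simp only at this
                omega
            · by_cases h2 : j + 1 ≤ (a : ℕ)
              · rw [glueF_high h2, glueF_high (by omega)]
                have := h2mono ⟨(a : ℕ) - (j + 1), by have := a.isLt; omega⟩
                  ⟨(b : ℕ) - (j + 1), by have := b.isLt; omega⟩
                  (show (a : ℕ) - (j + 1) ≤ (b : ℕ) - (j + 1) by omega)
                omega
              · rw [glueF_zero (by omega)]
                exact Nat.zero_le _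
          rw [Finset.mem_coe, Finset.mem_filter]
          refine ⟨mem_Tset.mpr ⟨hbound, hmono⟩, ?_⟩
          have hfind : firstHit m (glueF m j pr) = j + 1 := by
            rw [firstHit, Nat.find_eq_iff]
            constructor
            · refine ⟨by omega, ?_⟩
              by_cases hjm : j + 1 < m + 1
              · rw [extg, dif_pos hjm]
                rw [glueF_high (k := ⟨j + 1, hjm⟩) (by simp)]
                have := h2le ⟨(j + 1) - (j + 1), by simp; omega⟩
                simp only at this ⊢
                omega
              · rw [extg, dif_neg hjm]
            · intro q hq
              rintro ⟨hq1, hq2⟩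
              have hqm : q < m + 1 := by omega
              rw [extg, dif_pos hqm] at hq2
              rw [glueF_low (k := ⟨q, hqm⟩) (by simpa) (by simp; omega)] at hq2
              have := h1le ⟨q - 1, by omega⟩
              simp only at this hq2
              omega
          omega
        · -- left inverse
          intro g hg
          rw [Finset.mem_coe, Finset.mem_filter, mem_Tset] at hg
          obtain ⟨⟨hle, hmono⟩, hfh⟩ := hg
          have hfh1 : firstHit m g = j + 1 := by
            have := firstHit_pos m g; omega
          funext k
          by_cases h : 1 ≤ (k : ℕ) ∧ (k : ℕ) ≤ j
          · rw [glueF_low h.1 h.2]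
            show g ⟨(k : ℕ) - 1 + 1, _⟩ = g k
            exact congrArg g (Fin.ext (show (k : ℕ) - 1 + 1 = (k : ℕ) by omega))
          · by_cases h2 : j + 1 ≤ (k : ℕ)
            · rw [glueF_high h2]
              show (j + 1) + (g ⟨j + 1 + ((k : ℕ) - (j + 1)), _⟩ - (j + 1)) = g k
              have hidx : (⟨j + 1 + ((k : ℕ) - (j + 1)), by have := k.isLt; omega⟩ :
                  Fin (m + 1)) = k := Fin.ext (show j + 1 + ((k : ℕ) - (j + 1)) = k by omega)
              rw [hidx]
              have hjm : j + 1 < m + 1 := by have := k.isLt; omega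
              have hspec := (firstHit_spec m g).2
              rw [hfh1, extg, dif_pos hjm] at hspec
              have := hmono ⟨j + 1, hjm⟩ k (by exact h2)
              omega
            · rw [glueF_zero (by omega)]
              have := hle k
              omega
        · -- right inverse
          intro pr hpr
          have h1 : (splitF m j hj' (glueF m j pr)).1 = pr.1 := by
            funext k
            show glueF m j pr ⟨(k : ℕ) + 1, _⟩ = pr.1 k
            rw [glueF_low (by simp) (by simp)]
            exact congrArg pr.1 (Fin.ext (show (k : ℕ) + 1 - 1 = (k : ℕ) by omega))
          have h2 : (splitF m j hj' (glueF m j pr)).2 = pr.2 := by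
            funext k
            show glueF m j pr ⟨j + 1 + (k : ℕ), _⟩ - (j + 1) = pr.2 k
            rw [glueF_high (by simp)]
            have hidx : (⟨(j + 1 + (k : ℕ)) - (j + 1), by have := k.isLt; omega⟩ :
                Fin (m - j)) = k := Fin.ext (show (j + 1 + (k : ℕ)) - (j + 1) = (k : ℕ) by omega)
            simp only at hidx ⊢
            rw [hidx]
            omega
          exact Prod.ext h1 h2
      rw [Finset.card_eq_sum_card_fiberwise
          (f := fun g => firstHit m g - 1) (t := Finset.range (m + 1))
          (fun g _ => by
            have h1 := firstHit_le m g
            have h2 := firstHit_pos m g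
            simp only [Finset.mem_coe, Finset.mem_range]
            omega),
        Finset.sum_congr rfl key, catalan_succ]
      exact (Fin.sum_univ_eq_sum_range (fun i => catalan i * catalan (m - i)) (m + 1)).symm

lemma rowLen_ofRowLens_ofFn {n : ℕ} (f : Fin n → ℕ)
    (hf : (List.ofFn f).SortedGE) (i : ℕ) (hi : i < n) :
    (YoungDiagram.ofRowLens (List.ofFn f) hf).rowLen i = f ⟨i, hi⟩ := by
  have h1 : i < (List.ofFn f).length := by simpa using hi
  have := YoungDiagram.rowLen_ofRowLens (w := List.ofFn f) (hw := hf) ⟨i, h1⟩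
  simpa using this

lemma le_staircase_iff {n : ℕ} {μ : YoungDiagram} :
    μ ≤ staircase n ↔ ∀ i, μ.rowLen i ≤ n - i := by
  constructor
  · intro h i
    rcases Nat.eq_zero_or_pos (μ.rowLen i) with h0 | h0
    · omega
    · have hmem : (i, μ.rowLen i - 1) ∈ μ := YoungDiagram.mem_iff_lt_rowLen.mpr (by omega)
      have := mem_staircase.mp (h hmem)
      simp only at this
      omega
  · intro h c hc
    have hc' : (c.1, c.2) ∈ μ := hc
    rw [YoungDiagram.mem_iff_lt_rowLen] at hc'
    have := h c.1
    exact mem_staircase.mpr (by omega)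

/-- The number of Young diagrams contained in the staircase `S(n)` is `catalan (n+1)`. -/
theorem card_subdiagrams_staircase_eq_catalan (n : ℕ) :
    Nat.card {μ : YoungDiagram // μ ≤ staircase n} = catalan (n + 1) := by
  have hbij : Function.Bijective
      (fun μ : {μ : YoungDiagram // μ ≤ staircase n} =>
        (⟨fun k : Fin (n + 1) => μ.1.rowLen (n - (k : ℕ)), by
          rw [mem_Tset]
          constructor
          · intro k
            have := le_staircase_iff.mp μ.2 (n - (k : ℕ))
            have := k.isLt
            omega
          · intro a b hab
            exact μ.1.rowLen_anti _ _ (by omega)⟩ :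
          {g // g ∈ Tset (n + 1)})) := by
    constructor
    · rintro ⟨μ, hμ⟩ ⟨ν, hν⟩ h
      simp only [Subtype.mk_eq_mk] at h ⊢
      have hrow : ∀ i, μ.rowLen i = ν.rowLen i := by
        intro i
        rcases lt_or_ge i n with hi | hi
        · have := congrFun h ⟨n - i, by omega⟩
          simp only at this
          rwa [show n - (n - i) = i by omega] at this
        · have h1 := le_staircase_iff.mp hμ i
          have h2 := le_staircase_iff.mp hν i
          omega
      ext ⟨i, jj⟩
      rw [YoungDiagram.mem_cells, YoungDiagram.mem_cells,
        YoungDiagram.mem_iff_lt_rowLen, YoungDiagram.mem_iff_lt_rowLen, hrow]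
    · rintro ⟨g, hg⟩
      rw [mem_Tset] at hg
      obtain ⟨hle, hmono⟩ := hg
      have hw : (List.ofFn (fun i : Fin n => g ⟨n - (i : ℕ), by omega⟩)).SortedGE := by
        rw [List.sortedGE_iff_pairwise, List.pairwise_ofFn]
        intro a b hab
        exact hmono ⟨n - (b : ℕ), by omega⟩ ⟨n - (a : ℕ), by omega⟩
          (show n - (b : ℕ) ≤ n - (a : ℕ) by have := a.isLt; have := b.isLt; omega)
      have hrowlen : ∀ i (hi : i < n),
          (YoungDiagram.ofRowLens _ hw).rowLen i = g ⟨n - i, by omega⟩ := by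
        intro i hi
        exact rowLen_ofRowLens_ofFn _ hw i hi
      have hrowzero : ∀ i, n ≤ i → (YoungDiagram.ofRowLens _ hw).rowLen i = 0 := by
        intro i hi
        by_contra hne
        have : (i, 0) ∈ YoungDiagram.ofRowLens _ hw :=
          YoungDiagram.mem_iff_lt_rowLen.mpr (by omega)
        rw [YoungDiagram.mem_ofRowLens] at this
        obtain ⟨hlt, -⟩ := this
        simp only [List.length_ofFn] at hlt
        omega
      have hsub : YoungDiagram.ofRowLens _ hw ≤ staircase n := by
        rw [le_staircase_iff]
        intro i
        rcases lt_or_ge i n with hi | hi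
        · rw [hrowlen i hi]
          have := hle ⟨n - i, by omega⟩
          simp only at this
          omega
        · rw [hrowzero i hi]
          omega
      refine ⟨⟨YoungDiagram.ofRowLens _ hw, hsub⟩, ?_⟩
      simp only [Subtype.mk_eq_mk]
      funext k
      rcases Nat.eq_zero_or_pos (k : ℕ) with hk | hk
      · have h0 : g k ≤ 0 := by
          have := hle k
          omega
        rw [show n - (k : ℕ) = n by omega, hrowzero n le_rfl]
        omega
      · rw [hrowlen (n - (k : ℕ)) (by have := k.isLt; omega)]
        exact congrArg g (Fin.ext (show n - (n - (k : ℕ)) = (k : ℕ) by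
          have := k.isLt; omega))
  rw [Nat.card_eq_of_bijective _ hbij, Nat.card_eq_finsetCard, card_Tset]
end

section
/- For every natural number n ≥ 1, the number of Dyck words of semilength n equals the number of Young diagrams contained in the staircase Young diagram S(n-1); that is, filling in the region above a Dyck path inside the n × n square gives a one-to-one correspondence between Dyck paths and such Young diagrams. -/
open List

namespace DyckAux

@[simp] lemma countD_repl (k : ℕ) : (List.replicate k DyckStep.D).count DyckStep.D = k := by
  simp

@[simp] lemma countU_repl (k : ℕ) : (List.replicate k DyckStep.D).count DyckStep.U = 0 := by
  simp [count_replicate]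

@[simp] lemma countD_cons_U (t : List DyckStep) :
    (DyckStep.U :: t).count DyckStep.D = t.count DyckStep.D := by simp [count_cons]

@[simp] lemma countU_cons_U (t : List DyckStep) :
    (DyckStep.U :: t).count DyckStep.U = t.count DyckStep.U + 1 := by simp [count_cons]

@[simp] lemma countD_cons_D (t : List DyckStep) :
    (DyckStep.D :: t).count DyckStep.D = t.count DyckStep.D + 1 := by simp [count_cons]

@[simp] lemma countU_cons_D (t : List DyckStep) :
    (DyckStep.D :: t).count DyckStep.U = t.count DyckStep.U := by simp [count_cons]

/-- For each `U` in the list, record the number of `D`s strictly before it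
(plus an offset `c`). -/
def toA : List DyckStep → ℕ → List ℕ
  | [], _ => []
  | DyckStep.U :: t, c => c :: toA t c
  | DyckStep.D :: t, c => toA t (c + 1)

/-- Rebuild a step list from the record. -/
def ofA : List ℕ → ℕ → List DyckStep
  | [], _ => []
  | a :: t, c => List.replicate (a - c) DyckStep.D ++ DyckStep.U :: ofA t a

lemma toA_append (l l' : List DyckStep) (c : ℕ) :
    toA (l ++ l') c = toA l c ++ toA l' (c + l.count DyckStep.D) := by
  induction l generalizing c with
  | nil => simp [toA]
  | cons s t ih =>
    cases s
    · simpa [toA] using ih c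
    · rw [cons_append]
      show toA (t ++ l') (c+1) = toA t (c+1) ++ toA l' _
      rw [ih (c+1), countD_cons_D]
      congr 2
      omega

lemma toA_no_U (l : List DyckStep) (c : ℕ) (h : l.count DyckStep.U = 0) :
    toA l c = [] := by
  induction l generalizing c with
  | nil => rfl
  | cons s t ih =>
    cases s
    · simp at h
    · exact ih (c+1) (by simpa using h)

lemma length_toA (l : List DyckStep) (c : ℕ) :
    (toA l c).length = l.count DyckStep.U := by
  induction l generalizing c with
  | nil => rfl
  | cons s t ih => cases s <;> simp [toA, ih]

lemma le_of_mem_toA {l : List DyckStep} {c x : ℕ} (hx : x ∈ toA l c) : c ≤ x := by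
  induction l generalizing c with
  | nil => simp [toA] at hx
  | cons s t ih =>
    cases s
    · rcases mem_cons.mp hx with rfl | h
      · exact le_refl _
      · exact ih h
    · exact (Nat.le_succ c).trans (ih hx)

lemma sorted_toA (l : List DyckStep) (c : ℕ) : (toA l c).Pairwise (· ≤ ·) := by
  induction l generalizing c with
  | nil => simp [toA]
  | cons s t ih =>
    cases s
    · exact List.pairwise_cons.mpr ⟨fun x hx => le_of_mem_toA hx, ih c⟩
    · exact ih (c+1)

lemma toA_getD_le (l : List DyckStep) (c u : ℕ) (hcu : c ≤ u)
    (hpre : ∀ i, c + ((l.take i).count DyckStep.D) ≤ u + ((l.take i).count DyckStep.U)) :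
    ∀ k, (toA l c).getD k 0 ≤ u + k := by
  induction l generalizing c u with
  | nil => intro k; simp [toA]
  | cons s t ih =>
    cases s
    · have hred : toA (DyckStep.U :: t) c = c :: toA t c := rfl
      intro k
      rw [hred]
      match k with
      | 0 => simpa using hcu
      | k + 1 =>
        have hpre' : ∀ i,
            c + ((t.take i).count DyckStep.D) ≤ (u+1) + ((t.take i).count DyckStep.U) := by
          intro i
          have h1 := hpre (i+1)
          rw [take_succ_cons, countD_cons_U, countU_cons_U] at h1
          omega
        have h2 := ih c (u+1) (by omega) hpre' k
        rw [List.getD_cons_succ]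
        omega
    · have hred : toA (DyckStep.D :: t) c = toA t (c+1) := rfl
      intro k
      rw [hred]
      have hcu' : c + 1 ≤ u := by
        have h1 := hpre 1
        rcases t with _ | ⟨s', t'⟩
        · simpa using h1
        · rw [take_succ_cons] at h1
          simp only [countD_cons_D, countU_cons_D] at h1
          simp at h1
          omega
      have hpre' : ∀ i,
          (c+1) + ((t.take i).count DyckStep.D) ≤ u + ((t.take i).count DyckStep.U) := by
        intro i
        have h1 := hpre (i+1)
        rw [take_succ_cons, countD_cons_D, countU_cons_D] at h1
        omega
      exact ih (c+1) u hcu' hpre' k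

lemma toA_replicate_D (k c : ℕ) : toA (List.replicate k DyckStep.D) c = [] :=
  toA_no_U _ _ (by simp)

lemma toA_ofA (a : List ℕ) (c : ℕ) (h : List.Chain' (· ≤ ·) (c :: a)) :
    toA (ofA a c) c = a := by
  induction a generalizing c with
  | nil => rfl
  | cons x t ih =>
    rw [show List.Chain' _ (_ :: _ :: _) ↔ _ from List.isChain_cons_cons] at h
    obtain ⟨hcx, h⟩ := h
    show toA (List.replicate (x - c) DyckStep.D ++ DyckStep.U :: ofA t x) c = x :: t
    rw [toA_append, toA_replicate_D, nil_append, countD_repl]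
    have hx : c + (x - c) = x := by omega
    show (c + (x-c)) :: toA (ofA t x) (c + (x-c)) = x :: t
    rw [hx, ih x h]

lemma count_U_ofA (a : List ℕ) (c : ℕ) :
    (ofA a c).count DyckStep.U = a.length := by
  induction a generalizing c with
  | nil => rfl
  | cons x t ih =>
    show (List.replicate (x - c) DyckStep.D ++ DyckStep.U :: ofA t x).count DyckStep.U
      = t.length + 1
    rw [count_append, countU_repl, countU_cons_U, ih x]
    omega

lemma le_getLastD {a : List ℕ} {c : ℕ} (h : List.Chain' (· ≤ ·) (c :: a)) :
    c ≤ a.getLastD c := by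
  induction a generalizing c with
  | nil => simp
  | cons x t ih =>
    rw [show List.Chain' _ (_ :: _ :: _) ↔ _ from List.isChain_cons_cons] at h
    rw [List.getLastD_cons]
    exact h.1.trans (ih h.2)

lemma count_D_ofA (a : List ℕ) (c : ℕ) (h : List.Chain' (· ≤ ·) (c :: a)) :
    (ofA a c).count DyckStep.D = a.getLastD c - c := by
  induction a generalizing c with
  | nil => show (0:ℕ) = c - c; omega
  | cons x t ih =>
    rw [show List.Chain' _ (_ :: _ :: _) ↔ _ from List.isChain_cons_cons] at h
    show (List.replicate (x - c) DyckStep.D ++ DyckStep.U :: ofA t x).count DyckStep.D = _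
    rw [count_append, countD_repl, countD_cons_U, ih x h.2, List.getLastD_cons]
    have h2 := le_getLastD h.2
    have h1 := h.1
    omega

lemma length_ofA (a : List ℕ) (c : ℕ) (h : List.Chain' (· ≤ ·) (c :: a)) :
    (ofA a c).length = a.length + (a.getLastD c - c) := by
  have h1 : ∀ l : List DyckStep, l.length = l.count DyckStep.U + l.count DyckStep.D := by
    intro l
    induction l with
    | nil => rfl
    | cons s t iht => cases s <;> simp [iht] <;> omega
  rw [h1, count_U_ofA, count_D_ofA a c h]

lemma ofA_prefix (a : List ℕ) (c u : ℕ) (hcu : c ≤ u)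
    (hch : List.Chain' (· ≤ ·) (c :: a))
    (hb : ∀ j (h : j < a.length), a[j] ≤ u + j) :
    ∀ i, c + ((ofA a c).take i).count DyckStep.D ≤
      u + ((ofA a c).take i).count DyckStep.U := by
  induction a generalizing c u with
  | nil => intro i; simpa [ofA] using hcu
  | cons x t ih =>
    rw [show List.Chain' _ (_ :: _ :: _) ↔ _ from List.isChain_cons_cons] at hch
    obtain ⟨hcx, hch⟩ := hch
    have hxu : x ≤ u := by exact hb 0 (by simp)
    intro i
    show c + ((List.replicate (x - c) DyckStep.D
        ++ DyckStep.U :: ofA t x).take i).count DyckStep.D ≤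
      u + ((List.replicate (x - c) DyckStep.D
        ++ DyckStep.U :: ofA t x).take i).count DyckStep.U
    rw [take_append, count_append, count_append, length_replicate,
      take_replicate, countD_repl, countU_repl]
    rcases le_or_gt i (x - c) with hi | hi
    · have h0 : i - (x - c) = 0 := by omega
      rw [h0]
      simp only [take_zero]
      show c + (min i (x-c) + 0) ≤ u + (0 + 0)
      omega
    · obtain ⟨r, hr⟩ : ∃ r, i - (x - c) = r + 1 := ⟨i - (x-c) - 1, by omega⟩
      rw [hr, take_succ_cons, countD_cons_U, countU_cons_U]
      have h2 := ih x (u+1) (by omega) hch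
        (fun j hj => by
          have h3 := hb (j+1) (by simpa using hj)
          rw [List.getElem_cons_succ] at h3
          omega) r
      omega

lemma ofA_toA (l : List DyckStep) (c : ℕ) :
    ∃ k, ofA (toA l c) c ++ List.replicate k DyckStep.D = l := by
  induction l generalizing c with
  | nil => exact ⟨0, rfl⟩
  | cons s t ih =>
    cases s
    · obtain ⟨k, hk⟩ := ih c
      refine ⟨k, ?_⟩
      show (List.replicate (c - c) DyckStep.D ++ DyckStep.U :: ofA (toA t c) c)
        ++ List.replicate k DyckStep.D = DyckStep.U :: t
      rw [Nat.sub_self]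
      simpa using hk
    · rcases hA : toA t (c+1) with _ | ⟨x, rest⟩
      · refine ⟨t.length + 1, ?_⟩
        have hU : t.count DyckStep.U = 0 := by
          have h1 := length_toA t (c+1)
          rw [hA] at h1
          simpa using h1.symm
        have ht : DyckStep.D :: t = List.replicate (t.length + 1) DyckStep.D := by
          rw [List.eq_replicate_iff]
          refine ⟨by simp, ?_⟩
          intro b hb
          rcases mem_cons.mp hb with rfl | hb
          · rfl
          · cases b
            · exact absurd hb (count_eq_zero.mp hU)
            · rfl
        show ofA (toA t (c+1)) c ++ _ = _
        rw [hA]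
        show List.replicate (t.length + 1) DyckStep.D = _
        exact ht.symm
      · obtain ⟨k, hk⟩ := ih (c+1)
        refine ⟨k, ?_⟩
        have hx : c + 1 ≤ x := le_of_mem_toA (by rw [hA]; exact mem_cons_self)
        rw [hA] at hk
        show ofA (toA t (c+1)) c ++ _ = _
        rw [hA]
        have hsub : x - c = (x - (c+1)) + 1 := by omega
        show (List.replicate (x - c) DyckStep.D ++ DyckStep.U :: ofA rest x) ++ _ = _
        rw [hsub, List.replicate_succ]
        have hk' : (List.replicate (x - (c+1)) DyckStep.D
            ++ DyckStep.U :: ofA rest x) ++ List.replicate k DyckStep.D = t := hk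
        show DyckStep.D :: ((List.replicate (x - (c+1)) DyckStep.D
          ++ DyckStep.U :: ofA rest x) ++ List.replicate k DyckStep.D) = DyckStep.D :: t
        rw [hk']

/-! ### Young diagram side -/

lemma rowLen_eq_of {μ : YoungDiagram} {i r : ℕ} (h : ∀ j, (i, j) ∈ μ ↔ j < r) :
    μ.rowLen i = r := by
  have h1 : ¬ ((i, r) ∈ μ) := by rw [h]; omega
  rw [YoungDiagram.mem_iff_lt_rowLen] at h1
  rcases Nat.eq_zero_or_pos r with rfl | hr
  · omega
  · have h2 : (i, r-1) ∈ μ := (h _).mpr (by omega)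
    rw [YoungDiagram.mem_iff_lt_rowLen] at h2
    omega

lemma rowLen_le_of_le {μ ν : YoungDiagram} (h : μ ≤ ν) (i : ℕ) :
    μ.rowLen i ≤ ν.rowLen i := by
  rcases Nat.eq_zero_or_pos (μ.rowLen i) with e | e
  · omega
  · have h1 : (i, μ.rowLen i - 1) ∈ μ := YoungDiagram.mem_iff_lt_rowLen.mpr (by omega)
    have h2 : (i, μ.rowLen i - 1) ∈ ν := h h1
    rw [YoungDiagram.mem_iff_lt_rowLen] at h2
    omega

lemma mem_staircase {m i j : ℕ} : (i, j) ∈ staircase m ↔ i + j < m := by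
  rw [← YoungDiagram.mem_cells]
  simp only [staircase, Finset.mem_filter, Finset.mem_product, Finset.mem_range]
  omega

lemma rowLen_staircase (m i : ℕ) : (staircase m).rowLen i = m - i :=
  rowLen_eq_of fun j => by rw [mem_staircase]; omega

lemma le_staircase_iff {μ : YoungDiagram} {m : ℕ} :
    μ ≤ staircase m ↔ ∀ i, μ.rowLen i ≤ m - i := by
  constructor
  · intro h i
    have h2 := rowLen_le_of_le h i
    rwa [rowLen_staircase] at h2
  · intro h
    rw [← YoungDiagram.cells_subset_iff]
    intro c hc
    obtain ⟨i, j⟩ := c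
    rw [YoungDiagram.mem_cells, YoungDiagram.mem_iff_lt_rowLen] at hc
    rw [YoungDiagram.mem_cells, mem_staircase]
    have := h i
    omega

lemma getD_mono {a : List ℕ} (hs : a.Pairwise (· ≤ ·)) {i j : ℕ} (hij : i ≤ j)
    (hj : j < a.length) : a.getD i 0 ≤ a.getD j 0 := by
  rcases eq_or_lt_of_le hij with rfl | h
  · exact le_refl _
  · rw [List.getD_eq_getElem _ _ (lt_of_le_of_lt hij hj), List.getD_eq_getElem _ _ hj]
    exact List.pairwise_iff_getElem.mp hs i j _ _ h

/-- The Young diagram whose `i`-th row (for `i < n`) has length `a.getD (n-1-i) 0`. -/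
def diag (a : List ℕ) (n : ℕ) (hs : a.Pairwise (· ≤ ·)) (hl : a.length = n) : YoungDiagram where
  cells := (Finset.range n ×ˢ Finset.range n).filter fun p => p.2 < a.getD (n - 1 - p.1) 0
  isLowerSet := by
    intro p q hle hp
    simp only [Finset.mem_coe, Finset.mem_filter, Finset.mem_product,
      Finset.mem_range] at hp ⊢
    obtain ⟨hle1, hle2⟩ := hle
    obtain ⟨⟨hp1, hp2⟩, hp3⟩ := hp
    refine ⟨⟨by omega, by omega⟩, ?_⟩
    have hmono : a.getD (n - 1 - p.1) 0 ≤ a.getD (n - 1 - q.1) 0 :=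
      getD_mono hs (by omega) (by omega)
    omega

lemma mem_diag {a : List ℕ} {n i j : ℕ} {hs hl} :
    (i, j) ∈ diag a n hs hl ↔ i < n ∧ j < n ∧ j < a.getD (n - 1 - i) 0 := by
  rw [← YoungDiagram.mem_cells]
  simp only [diag, Finset.mem_filter, Finset.mem_product, Finset.mem_range]
  tauto

lemma rowLen_diag {a : List ℕ} {n i : ℕ} {hs hl} (hb : ∀ k, a.getD k 0 ≤ k)
    (hi : i < n) : (diag a n hs hl).rowLen i = a.getD (n - 1 - i) 0 := by
  apply rowLen_eq_of
  intro j
  rw [mem_diag]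
  have := hb (n - 1 - i)
  omega

lemma rowLen_diag_of_ge {a : List ℕ} {n i : ℕ} {hs hl} (hi : n ≤ i) :
    (diag a n hs hl).rowLen i = 0 := by
  apply rowLen_eq_of
  intro j
  rw [mem_diag]
  omega

lemma diag_le_staircase {a : List ℕ} {n : ℕ} {hs hl} (hn : 1 ≤ n)
    (hb : ∀ k, a.getD k 0 ≤ k) : diag a n hs hl ≤ staircase (n - 1) := by
  rw [le_staircase_iff]
  intro i
  rcases lt_or_ge i n with hi | hi
  · rw [rowLen_diag hb hi]
    have := hb (n - 1 - i)
    omega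
  · rw [rowLen_diag_of_ge hi]
    omega

/-- The list of row lengths of `μ`, reversed, padded to length `n`. -/
def listOf (μ : YoungDiagram) (n : ℕ) : List ℕ :=
  (List.range n).map fun k => μ.rowLen (n - 1 - k)

@[simp] lemma length_listOf (μ : YoungDiagram) (n : ℕ) : (listOf μ n).length = n := by
  simp [listOf]

lemma getElem_listOf (μ : YoungDiagram) {n k : ℕ} (hk : k < n)
    (h : k < (listOf μ n).length) : (listOf μ n)[k] = μ.rowLen (n - 1 - k) := by
  simp [listOf]

lemma getD_listOf (μ : YoungDiagram) {n k : ℕ} (hk : k < n) :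
    (listOf μ n).getD k 0 = μ.rowLen (n - 1 - k) := by
  rw [List.getD_eq_getElem _ _ (by simpa using hk), getElem_listOf μ hk]

lemma sorted_listOf (μ : YoungDiagram) (n : ℕ) : (listOf μ n).Pairwise (· ≤ ·) := by
  rw [List.pairwise_iff_getElem]
  intro i j hi hj hij
  rw [getElem_listOf μ (by simpa using hi), getElem_listOf μ (by simpa using hj)]
  exact μ.rowLen_anti _ _ (by simp at hi hj; omega)

lemma chain0_listOf (μ : YoungDiagram) (n : ℕ) :
    List.Chain' (· ≤ ·) (0 :: listOf μ n) :=
  List.Pairwise.isChain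
    (List.pairwise_cons.mpr ⟨fun x _ => Nat.zero_le x, sorted_listOf μ n⟩)

lemma getElem_listOf_le {μ : YoungDiagram} {n : ℕ} (hμ : μ ≤ staircase (n - 1))
    {k : ℕ} (h : k < (listOf μ n).length) : (listOf μ n)[k] ≤ k := by
  have hk : k < n := by simpa using h
  rw [getElem_listOf μ hk]
  have h2 := (le_staircase_iff.mp hμ) (n - 1 - k)
  omega

lemma getLastD_le_of_bounds {a : List ℕ} (hb : ∀ k (hk : k < a.length), a[k] ≤ k) :
    a.getLastD 0 + 1 ≤ a.length + 1 := by
  rcases a with _ | ⟨x, t⟩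
  · simp
  · have he : (x :: t).getLastD 0 = (x :: t)[(x :: t).length - 1] := by
      rw [List.getLastD_eq_getLast?, List.getLast?_eq_getElem?]
      simp
    rw [he]
    have := hb ((x :: t).length - 1) (by simp)
    omega

/-! ### Building a Dyck word from a record list -/

/-- The Dyck word list associated to a record list `a` of length `n`. -/
def wordList (a : List ℕ) (n : ℕ) : List DyckStep :=
  ofA a 0 ++ List.replicate (n - a.getLastD 0) DyckStep.D

lemma toA_wordList (a : List ℕ) (n : ℕ) (hch : List.Chain' (· ≤ ·) (0 :: a)) :
    toA (wordList a n) 0 = a := by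
  rw [wordList, toA_append, toA_replicate_D, append_nil, toA_ofA a 0 hch]

/-- The Dyck word associated to a record list. -/
def wordD (a : List ℕ) (n : ℕ) (hch : List.Chain' (· ≤ ·) (0 :: a))
    (hl : a.length = n) (hb : ∀ k (hk : k < a.length), a[k] ≤ k) : DyckWord where
  toList := wordList a n
  count_U_eq_count_D := by
    have hlast := getLastD_le_of_bounds hb
    rw [wordList, count_append, count_append, count_U_ofA, count_D_ofA a 0 hch,
      countU_repl, countD_repl]
    omega
  count_D_le_count_U := by
    intro i
    rw [wordList, take_append, count_append, count_append]
    rcases le_or_gt i (ofA a 0).length with hi | hi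
    · have h0 : i - (ofA a 0).length = 0 := by omega
      rw [h0]
      simp only [take_zero, count_nil]
      have h2 := ofA_prefix a 0 0 (le_refl 0) hch
        (fun j hj => by have := hb j hj; omega) i
      omega
    · rw [take_of_length_le hi.le, take_replicate]
      have hlast := getLastD_le_of_bounds hb
      have hcd : (ofA a 0).count DyckStep.D = a.getLastD 0 := by
        rw [count_D_ofA a 0 hch]
        omega
      have hcu : (ofA a 0).count DyckStep.U = a.length := count_U_ofA a 0
      rw [hcd, hcu, countD_repl, countU_repl, hl]
      have : min (i - (ofA a 0).length) (n - a.getLastD 0) ≤ n - a.getLastD 0 :=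
        min_le_right _ _
      omega
  
lemma semilength_wordD {a : List ℕ} {n : ℕ} {hch hl hb} :
    (wordD a n hch hl hb).semilength = n := by
  show (wordList a n).count DyckStep.U = n
  rw [wordList, count_append, count_U_ofA, countU_repl, hl]
  omega


/-! ### The two injections and the final count -/

lemma yd_ext_rowLen {μ ν : YoungDiagram} (h : ∀ i, μ.rowLen i = ν.rowLen i) : μ = ν := by
  apply SetLike.ext
  rintro ⟨i, j⟩
  rw [YoungDiagram.mem_iff_lt_rowLen, YoungDiagram.mem_iff_lt_rowLen, h i]

/-- From a subdiagram of the staircase to a Dyck word of semilength `n`. -/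
def toDyck (n : ℕ) (μ : {μ : YoungDiagram // μ ≤ staircase (n - 1)}) :
    {D : DyckWord // D.semilength = n} :=
  ⟨wordD (listOf μ.1 n) n (chain0_listOf μ.1 n) (length_listOf μ.1 n)
     (fun _ hk => getElem_listOf_le μ.2 hk), semilength_wordD⟩

lemma toDyck_injective (n : ℕ) (hn : 1 ≤ n) : Function.Injective (toDyck n) := by
  rintro ⟨μ, hμ⟩ ⟨ν, hν⟩ h
  have hw : wordList (listOf μ n) n = wordList (listOf ν n) n :=
    congrArg (fun D : {D : DyckWord // D.semilength = n} => D.1.toList) h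
  have ha : listOf μ n = listOf ν n := by
    have h1 := toA_wordList (listOf μ n) n (chain0_listOf μ n)
    have h2 := toA_wordList (listOf ν n) n (chain0_listOf ν n)
    rw [← h1, ← h2, hw]
  have hr : ∀ i, μ.rowLen i = ν.rowLen i := by
    intro i
    rcases lt_or_ge i n with hi | hi
    · have h3 := congrArg (fun l : List ℕ => l.getD (n - 1 - i) 0) ha
      rw [getD_listOf μ (by omega), getD_listOf ν (by omega)] at h3
      have he : n - 1 - (n - 1 - i) = i := by omega
      rwa [he] at h3
    · have h1 := le_staircase_iff.mp hμ i
      have h2 := le_staircase_iff.mp hν i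
      omega
  exact Subtype.ext (yd_ext_rowLen hr)

lemma getD_le_of_toA (p : DyckWord) : ∀ k, (toA p.toList 0).getD k 0 ≤ k := by
  intro k
  have h := toA_getD_le p.toList 0 0 (le_refl 0)
    (fun i => by have := p.count_D_le_count_U i; omega) k
  omega

/-- From a Dyck word of semilength `n` to a subdiagram of the staircase. -/
def toDiag (n : ℕ) (hn : 1 ≤ n) (D : {D : DyckWord // D.semilength = n}) :
    {μ : YoungDiagram // μ ≤ staircase (n - 1)} :=
  ⟨diag (toA D.1.toList 0) n (sorted_toA _ _) ((length_toA _ _).trans D.2),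
    diag_le_staircase hn (getD_le_of_toA D.1)⟩

lemma toDiag_injective (n : ℕ) (hn : 1 ≤ n) : Function.Injective (toDiag n hn) := by
  rintro ⟨p, hp⟩ ⟨q, hq⟩ h
  rw [Subtype.mk.injEq] at h ⊢
  have hlen : (toA p.toList 0).length = n := (length_toA _ _).trans hp
  have hlen' : (toA q.toList 0).length = n := (length_toA _ _).trans hq
  have ha : toA p.toList 0 = toA q.toList 0 := by
    apply List.ext_getElem (by omega)
    intro k hk hk'
    have hkn : k < n := by omega
    have e1 : (diag (toA p.toList 0) n (sorted_toA _ _)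
        ((length_toA _ _).trans hp)).rowLen (n - 1 - k)
        = (toA p.toList 0).getD (n - 1 - (n - 1 - k)) 0 :=
      rowLen_diag (getD_le_of_toA p) (by omega)
    have e2 : (diag (toA q.toList 0) n (sorted_toA _ _)
        ((length_toA _ _).trans hq)).rowLen (n - 1 - k)
        = (toA q.toList 0).getD (n - 1 - (n - 1 - k)) 0 :=
      rowLen_diag (getD_le_of_toA q) (by omega)
    have he : n - 1 - (n - 1 - k) = k := by omega
    rw [he] at e1 e2
    have h3 : (toA p.toList 0).getD k 0 = (toA q.toList 0).getD k 0 := by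
      rw [← e1, ← e2]
      exact congrArg (fun μ : YoungDiagram => μ.rowLen (n - 1 - k)) h
    rwa [List.getD_eq_getElem _ _ hk, List.getD_eq_getElem _ _ hk'] at h3
  obtain ⟨k1, hk1⟩ := ofA_toA p.toList 0
  obtain ⟨k2, hk2⟩ := ofA_toA q.toList 0
  have hL1 : p.toList.length = 2 * n := by
    rw [← p.two_mul_semilength_eq_length, hp]
  have hL2 : q.toList.length = 2 * n := by
    rw [← q.two_mul_semilength_eq_length, hq]
  have hk12 : k1 = k2 := by
    have l1 := congrArg List.length hk1
    have l2 := congrArg List.length hk2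
    rw [length_append, length_replicate] at l1 l2
    rw [ha] at l1
    omega
  have : p.toList = q.toList := by
    rw [← hk1, ← hk2, ha, hk12]
  exact DyckWord.ext this

instance finite_subdiagrams (m : ℕ) : Finite {μ : YoungDiagram // μ ≤ staircase m} := by
  let f : {μ : YoungDiagram // μ ≤ staircase m} →
      {s : Finset (ℕ × ℕ) // s ∈ (staircase m).cells.powerset} :=
    fun μ => ⟨μ.1.cells, Finset.mem_powerset.mpr μ.2⟩
  have hf : Function.Injective f := by
    rintro ⟨μ, hμ⟩ ⟨ν, hν⟩ h
    simp only [f, Subtype.mk.injEq] at h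
    exact Subtype.ext (YoungDiagram.ext h)
  exact Finite.of_injective f hf

end DyckAux

/-- The number of Dyck words of semilength `n` equals the number of Young diagrams
contained in the staircase `S(n-1)`. -/
theorem card_dyckWords_eq_card_subdiagrams_staircase (n : ℕ) (hn : 1 ≤ n) :
    Nat.card {D : DyckWord // D.semilength = n} =
      Nat.card {μ : YoungDiagram // μ ≤ staircase (n - 1)} := by
  refine le_antisymm ?_ ?_
  · exact Nat.card_le_card_of_injective (DyckAux.toDiag n hn) (DyckAux.toDiag_injective n hn)
  · exact Nat.card_le_card_of_injective (DyckAux.toDyck n) (DyckAux.toDyck_injective n hn)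
end

section
/- For every natural number n, the number of torsion pairs in the interval model I_n equals the Catalan number catalan (n+1). -/
/-- The interval model of type `A n`: pairs `(a, b)` with `1 ≤ a ≤ b ≤ n`. -/
def Ivl (n : ℕ) : Set (ℕ × ℕ) := {p | 1 ≤ p.1 ∧ p.1 ≤ p.2 ∧ p.2 ≤ n}

/-- `homA x y` encodes nonvanishing of `Hom` between the interval modules
`x = (a, b)` and `y = (c, d)`: it holds iff `c ≤ a ∧ a ≤ d ∧ d ≤ b`. -/
def homA (x y : ℕ × ℕ) : Prop := y.1 ≤ x.1 ∧ x.1 ≤ y.2 ∧ y.2 ≤ x.2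

/-- A torsion pair in the interval model `I n`: two subsets which are each other's
hom-orthogonal complements inside `I n`. -/
def IsTorsionPair (n : ℕ) (G F : Set (ℕ × ℕ)) : Prop :=
  G = {x ∈ Ivl n | ∀ y ∈ F, ¬ homA x y} ∧
  F = {y ∈ Ivl n | ∀ x ∈ G, ¬ homA x y}

/-- A torsion class is the first component of a torsion pair. -/
def IsTorsionClass (n : ℕ) (G : Set (ℕ × ℕ)) : Prop :=
  ∃ F, IsTorsionPair n G F

/-! Auxiliary definitions -/

def rperp (n : ℕ) (S : Set (ℕ × ℕ)) : Set (ℕ × ℕ) := {y ∈ Ivl n | ∀ x ∈ S, ¬ homA x y}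
def lperp (n : ℕ) (S : Set (ℕ × ℕ)) : Set (ℕ × ℕ) := {x ∈ Ivl n | ∀ y ∈ S, ¬ homA x y}

lemma isTorsionClass_iff (n : ℕ) (G : Set (ℕ × ℕ)) :
    IsTorsionClass n G ↔ G = lperp n (rperp n G) := by
  constructor
  · rintro ⟨F, h1, h2⟩
    rw [show F = rperp n G from h2] at h1
    exact h1
  · intro h
    exact ⟨rperp n G, h, rfl⟩

noncomputable def pairClassEquiv (n : ℕ) :
    {p : Set (ℕ × ℕ) × Set (ℕ × ℕ) // IsTorsionPair n p.1 p.2} ≃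
    {G : Set (ℕ × ℕ) // IsTorsionClass n G} where
  toFun p := ⟨p.1.1, p.1.2, p.2⟩
  invFun G := ⟨(G.1, rperp n G.1), (isTorsionClass_iff n G.1).mp G.2, rfl⟩
  left_inv := by
    rintro ⟨⟨G, F⟩, h1, h2⟩
    simp only [Subtype.mk.injEq, Prod.mk.injEq]
    exact Subtype.ext (Prod.ext rfl h2.symm)
  right_inv := by rintro ⟨G, h⟩; rfl

/-! Valid sequences -/

def Valid (m : ℕ) (t : ℕ → ℕ) : Prop :=
  (∀ a, 1 ≤ a → a ≤ m → a ≤ t a ∧ t a ≤ m) ∧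
  (∀ a j, 1 ≤ a → a < j → j ≤ t a → t j ≤ t a) ∧
  (∀ a, a = 0 ∨ m < a → t a = 0)

lemma Valid.t_le {m : ℕ} {t : ℕ → ℕ} (h : Valid m t) (a : ℕ) : t a ≤ m := by
  rcases Nat.eq_zero_or_pos a with h0 | h1
  · rw [h.2.2 a (Or.inl h0)]; exact Nat.zero_le m
  rcases le_or_gt a m with h2 | h2
  · exact (h.1 a h1 h2).2
  · rw [h.2.2 a (Or.inr h2)]; exact Nat.zero_le m

lemma finite_valid (m : ℕ) : Finite {t : ℕ → ℕ // Valid m t} := by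
  have hinj : Function.Injective (fun t : {t : ℕ → ℕ // Valid m t} =>
      (fun a => (⟨t.1 a.1, Nat.lt_succ_of_le (t.2.t_le a.1)⟩ : Fin (m+1)) : Fin (m+1) → Fin (m+1))) := by
    intro x y hxy
    ext a
    rcases le_or_gt a m with ha | ha
    · have := congrFun hxy ⟨a, Nat.lt_succ_of_le ha⟩
      exact congrArg Fin.val this
    · rw [x.2.2.2 a (Or.inr ha), y.2.2.2 a (Or.inr ha)]
  exact Finite.of_injective _ hinj

/-! From valid sequences to torsion classes -/

def Gset (n : ℕ) (t : ℕ → ℕ) : Set (ℕ × ℕ) :=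
  {p | 1 ≤ p.1 ∧ p.1 ≤ p.2 ∧ p.2 < t p.1}

lemma gset_subset_ivl {n : ℕ} {t : ℕ → ℕ} (h : Valid (n+1) t) : Gset n t ⊆ Ivl n := by
  rintro ⟨a, b⟩ ⟨h1, h2, h3⟩
  dsimp only at h1 h2 h3
  have ht : t a ≤ n + 1 := h.t_le a
  exact ⟨h1, h2, by omega⟩

lemma gset_eq {n : ℕ} {t : ℕ → ℕ} (ht : Valid (n+1) t) :
    Gset n t = lperp n (rperp n (Gset n t)) := by
  apply Set.Subset.antisymm
  · intro x hx
    exact ⟨gset_subset_ivl ht hx, fun y hy => hy.2 x hx⟩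
  · rintro ⟨a, b⟩ ⟨⟨h1, h2, h3⟩, hcl⟩
    dsimp only at h1 h2 h3
    refine ⟨h1, h2, ?_⟩
    show b < t a
    by_contra hb
    push_neg at hb
    have hta : a ≤ t a := (ht.1 a h1 (by omega)).1
    have hy : (a, t a) ∈ rperp n (Gset n t) := by
      refine ⟨⟨h1, hta, show t a ≤ n by omega⟩, ?_⟩
      rintro ⟨e, f⟩ ⟨he1, he2, he3⟩ ⟨hh1, hh2, hh3⟩
      dsimp only at he1 he2 he3 hh1 hh2 hh3
      rcases eq_or_lt_of_le hh1 with heq | hlt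
      · subst heq; omega
      · have := ht.2.1 a e h1 hlt hh2
        omega
    exact hcl (a, t a) hy ⟨le_refl a, hta, hb⟩


lemma gset_isTorsionClass {n : ℕ} {t : ℕ → ℕ} (ht : Valid (n+1) t) :
    IsTorsionClass n (Gset n t) :=
  (isTorsionClass_iff n _).mpr (gset_eq ht)

lemma gset_inj {n : ℕ} {t t' : ℕ → ℕ} (ht : Valid (n+1) t) (ht' : Valid (n+1) t')
    (h : Gset n t = Gset n t') : t = t' := by
  funext a
  rcases Nat.eq_zero_or_pos a with h0 | h1
  · rw [ht.2.2 a (Or.inl h0), ht'.2.2 a (Or.inl h0)]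
  rcases le_or_gt a (n+1) with h2 | h2
  swap
  · rw [ht.2.2 a (Or.inr h2), ht'.2.2 a (Or.inr h2)]
  have b1 := ht.1 a h1 h2
  have b2 := ht'.1 a h1 h2
  by_contra hne
  rcases Nat.lt_or_ge (t a) (t' a) with hlt | hge
  · have hmem : (a, t a) ∈ Gset n t' := ⟨h1, b1.1, hlt⟩
    rw [← h] at hmem
    exact absurd hmem.2.2 (lt_irrefl _)
  · have hlt : t' a < t a := by omega
    have hmem : (a, t' a) ∈ Gset n t := ⟨h1, b2.1, hlt⟩
    rw [h] at hmem
    exact absurd hmem.2.2 (lt_irrefl _)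

/-! From torsion classes to valid sequences -/

noncomputable def tOf (n : ℕ) (G : Set (ℕ × ℕ)) : ℕ → ℕ := fun a =>
  if 1 ≤ a ∧ a ≤ n + 1 then sInf {d | a ≤ d ∧ (a, d) ∉ G} else 0

section tOf
variable {n : ℕ} {G : Set (ℕ × ℕ)} (hG : IsTorsionClass n G)
include hG

lemma tclass_subset_ivl : G ⊆ Ivl n := by
  rw [(isTorsionClass_iff n G).mp hG]
  exact fun x hx => hx.1

lemma tclass_quot {a d b : ℕ} (hab : (a, b) ∈ G) (h1 : a ≤ d) (h2 : d ≤ b) :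
    (a, d) ∈ G := by
  have hivl := tclass_subset_ivl hG hab
  rw [(isTorsionClass_iff n G).mp hG]
  refine ⟨⟨hivl.1, h1, le_trans h2 hivl.2.2⟩, ?_⟩
  rintro ⟨c, e⟩ hce ⟨hh1, hh2, hh3⟩
  exact hce.2 (a, b) hab ⟨hh1, hh2, le_trans hh3 h2⟩

lemma tOf_nonempty (a : ℕ) : {d | a ≤ d ∧ (a, d) ∉ G}.Nonempty := by
  refine ⟨max a (n + 1), le_max_left _ _, fun hmem => ?_⟩
  have := (tclass_subset_ivl hG hmem).2.2
  have := le_max_right a (n + 1)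
  omega

lemma tOf_spec {a : ℕ} (h1 : 1 ≤ a) (h2 : a ≤ n + 1) :
    a ≤ tOf n G a ∧ (a, tOf n G a) ∉ G := by
  have : tOf n G a = sInf {d | a ≤ d ∧ (a, d) ∉ G} := by
    simp only [tOf, if_pos (And.intro h1 h2)]
  rw [this]
  exact Nat.sInf_mem (tOf_nonempty hG a)

lemma tOf_col {a d : ℕ} (h1 : 1 ≤ a) (h2 : a ≤ n + 1) (hd1 : a ≤ d)
    (hd2 : d < tOf n G a) : (a, d) ∈ G := by
  by_contra hmem
  have : tOf n G a ≤ d := by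
    have heq : tOf n G a = sInf {d | a ≤ d ∧ (a, d) ∉ G} := by
      simp only [tOf, if_pos (And.intro h1 h2)]
    rw [heq]
    exact Nat.sInf_le ⟨hd1, hmem⟩
  omega

lemma tOf_le {a : ℕ} (h1 : 1 ≤ a) (h2 : a ≤ n + 1) : tOf n G a ≤ n + 1 := by
  by_contra hlt
  push_neg at hlt
  have := tOf_col hG h1 h2 (by omega : a ≤ n + 1) hlt
  have := (tclass_subset_ivl hG this).2.2
  omega

lemma tOf_valid : Valid (n + 1) (tOf n G) := by
  refine ⟨fun a h1 h2 => ⟨(tOf_spec hG h1 h2).1, tOf_le hG h1 h2⟩, ?_, ?_⟩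
  swap
  · intro a ha
    simp only [tOf]
    rw [if_neg (by omega)]
  intro a j h1 hj hjt
  -- show t j ≤ t a
  have hta : a ≤ n + 1 := by
    by_contra hc
    push_neg at hc
    have : tOf n G a = 0 := by simp only [tOf]; rw [if_neg (by omega)]
    omega
  have htale := tOf_le hG h1 hta
  have hj2 : j ≤ n + 1 := le_trans hjt htale
  have hj1 : 1 ≤ j := by omega
  by_contra hc
  push_neg at hc
  -- hc : tOf n G a < tOf n G j
  have hjn : j ≤ n + 1 := hj2
  -- (j, t a) ∈ G
  have hjta : (j, tOf n G a) ∈ G := tOf_col hG hj1 hj2 hjt hc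
  have htan : tOf n G a ≤ n := by
    have := tOf_le hG hj1 hj2
    omega
  -- (a, j-1) ∈ G
  have hajm : (a, j - 1) ∈ G := tOf_col hG h1 hta (by omega) (by omega)
  -- show (a, t a) ∈ G, contradiction
  have hspec := tOf_spec hG h1 hta
  set w := tOf n G a with hw
  have hmem : (a, w) ∈ G := by
    rw [(isTorsionClass_iff n G).mp hG]
    refine ⟨⟨h1, hspec.1, htan⟩, ?_⟩
    rintro ⟨c, e⟩ hce ⟨hh1, hh2, hh3⟩
    dsimp only at hh1 hh2 hh3
    rcases le_or_gt e (j - 1) with he | he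
    · exact hce.2 (a, j - 1) hajm ⟨hh1, hh2, he⟩
    · exact hce.2 (j, w) hjta ⟨by omega, by omega, hh3⟩
  exact hspec.2 hmem

lemma gset_tOf : Gset n (tOf n G) = G := by
  ext ⟨a, b⟩
  constructor
  · rintro ⟨h1, h2, h3⟩
    dsimp only at h1 h2 h3
    have ha : a ≤ n + 1 := by
      by_contra hc
      push_neg at hc
      have : tOf n G a = 0 := by simp only [tOf]; rw [if_neg (by omega)]
      omega
    have han : a ≤ n := by
      rcases Nat.lt_or_ge a (n + 1) with h | h
      · omega
      · exfalso
        have hspec := tOf_spec hG h1 ha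
        have hle := tOf_le hG h1 ha
        omega
    exact tOf_col hG h1 (by omega) h2 h3
  · intro hmem
    have hivl := tclass_subset_ivl hG hmem
    refine ⟨hivl.1, hivl.2.1, ?_⟩
    show b < tOf n G a
    by_contra hc
    push_neg at hc
    have h2 : a ≤ n + 1 := Nat.le_succ_of_le (le_trans hivl.2.1 hivl.2.2)
    have := tclass_quot hG hmem (tOf_spec hG hivl.1 h2).1 hc
    exact (tOf_spec hG hivl.1 h2).2 this

end tOf

lemma toClass_bijective (n : ℕ) :
    Function.Bijective (fun t : {t : ℕ → ℕ // Valid (n+1) t} =>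
      (⟨Gset n t.1, gset_isTorsionClass t.2⟩ : {G : Set (ℕ × ℕ) // IsTorsionClass n G})) := by
  constructor
  · intro x y hxy
    exact Subtype.ext (gset_inj x.2 y.2 (congrArg Subtype.val hxy))
  · rintro ⟨G, hG⟩
    exact ⟨⟨tOf n G, tOf_valid hG⟩, Subtype.ext (gset_tOf hG)⟩

/-! Counting valid sequences -/

lemma valid_zero : Valid 0 (fun _ => 0) :=
  ⟨fun _ h1 h2 => absurd h2 (by omega), fun _ _ _ _ _ => le_refl 0, fun _ _ => rfl⟩

def glue (m k : ℕ) (t' t'' : ℕ → ℕ) : ℕ → ℕ := fun a =>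
  if a = 1 then k + 1
  else if 2 ≤ a ∧ a ≤ k + 1 then t' (a - 1) + 1
  else if k + 2 ≤ a ∧ a ≤ m + 1 then t'' (a - k - 1) + (k + 1)
  else 0

lemma glue_one (m k : ℕ) (t' t'' : ℕ → ℕ) : glue m k t' t'' 1 = k + 1 := by
  simp [glue]

lemma glue_left {m k a : ℕ} (t' t'' : ℕ → ℕ) (h1 : 2 ≤ a) (h2 : a ≤ k + 1) :
    glue m k t' t'' a = t' (a - 1) + 1 := by
  simp only [glue]
  rw [if_neg (by omega), if_pos ⟨h1, h2⟩]

lemma glue_right {m k a : ℕ} (t' t'' : ℕ → ℕ) (h1 : k + 2 ≤ a) (h2 : a ≤ m + 1) :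
    glue m k t' t'' a = t'' (a - k - 1) + (k + 1) := by
  simp only [glue]
  rw [if_neg (by omega), if_neg (by omega), if_pos ⟨h1, h2⟩]

lemma glue_zero {m k a : ℕ} (t' t'' : ℕ → ℕ) (hk : k ≤ m) (h : a = 0 ∨ m + 1 < a) :
    glue m k t' t'' a = 0 := by
  simp only [glue]
  rw [if_neg (by omega), if_neg (by omega), if_neg (by omega)]

lemma glue_valid {m k : ℕ} {t' t'' : ℕ → ℕ} (hk : k ≤ m)
    (h' : Valid k t') (h'' : Valid (m - k) t'') : Valid (m + 1) (glue m k t' t'') := by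
  refine ⟨?_, ?_, fun a ha => glue_zero t' t'' hk ha⟩
  · intro a h1 h2
    by_cases ha1 : a = 1
    · subst ha1; rw [glue_one]; omega
    by_cases ha2 : a ≤ k + 1
    · have hb := h'.1 (a - 1) (by omega) (by omega)
      rw [glue_left t' t'' (by omega) ha2]
      omega
    · have hb := h''.1 (a - k - 1) (by omega) (by omega)
      rw [glue_right t' t'' (by omega) h2]
      omega
  · intro a j h1 haj hjle
    by_cases hha : a ≤ m + 1
    swap
    · rw [glue_zero t' t'' hk (Or.inr (by omega))] at hjle; omega
    by_cases ha1 : a = 1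
    · subst ha1
      rw [glue_one] at hjle
      rw [glue_one, glue_left t' t'' (by omega) hjle]
      have := h'.1 (j - 1) (by omega) (by omega)
      omega
    by_cases ha2 : a ≤ k + 1
    · rw [glue_left t' t'' (by omega) ha2] at hjle ⊢
      have hb := h'.1 (a - 1) (by omega) (by omega)
      rw [glue_left t' t'' (by omega) (by omega)]
      have := h'.2.1 (a - 1) (j - 1) (by omega) (by omega) (by omega)
      omega
    · rw [glue_right t' t'' (by omega) hha] at hjle ⊢
      have hb := h''.1 (a - k - 1) (by omega) (by omega)
      rw [glue_right t' t'' (by omega) (by omega)]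
      have := h''.2.1 (a - k - 1) (j - k - 1) (by omega) (by omega) (by omega)
      omega

lemma glue_inj {m k1 k2 : ℕ} {x1 y1 x2 y2 : ℕ → ℕ}
    (hk1 : k1 ≤ m) (hk2 : k2 ≤ m)
    (hx1 : Valid k1 x1) (hy1 : Valid (m - k1) y1) (hx2 : Valid k2 x2) (hy2 : Valid (m - k2) y2)
    (h : glue m k1 x1 y1 = glue m k2 x2 y2) : k1 = k2 ∧ x1 = x2 ∧ y1 = y2 := by
  have hk : k1 = k2 := by
    have h1 := congrFun h 1
    rw [glue_one, glue_one] at h1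
    omega
  subst hk
  refine ⟨rfl, ?_, ?_⟩
  · funext a
    by_cases ha : 1 ≤ a ∧ a ≤ k1
    · have hc := congrFun h (a + 1)
      rw [glue_left x1 y1 (by omega) (by omega), glue_left x2 y2 (by omega) (by omega)] at hc
      have e : a + 1 - 1 = a := by omega
      rw [e] at hc
      omega
    · rw [hx1.2.2 a (by omega), hx2.2.2 a (by omega)]
  · funext a
    by_cases ha : 1 ≤ a ∧ a ≤ m - k1
    · have hc := congrFun h (a + k1 + 1)
      rw [glue_right x1 y1 (by omega) (by omega), glue_right x2 y2 (by omega) (by omega)] at hc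
      have e : a + k1 + 1 - k1 - 1 = a := by omega
      rw [e] at hc
      omega
    · rw [hy1.2.2 a (by omega), hy2.2.2 a (by omega)]

lemma glue_surj {m : ℕ} {t : ℕ → ℕ} (ht : Valid (m + 1) t) :
    ∃ k, k ≤ m ∧ ∃ x y, Valid k x ∧ Valid (m - k) y ∧ glue m k x y = t := by
  obtain ⟨hk1, hk2⟩ := ht.1 1 le_rfl (by omega)
  set k := t 1 - 1 with hkdef
  have hk : t 1 = k + 1 := by omega
  refine ⟨k, by omega, fun a => if 1 ≤ a ∧ a ≤ k then t (a + 1) - 1 else 0,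
    fun a => if 1 ≤ a ∧ a ≤ m - k then t (a + k + 1) - (k + 1) else 0, ?_, ?_, ?_⟩
  · refine ⟨?_, ?_, fun a ha => by dsimp only; rw [if_neg (by omega)]⟩
    · intro a ha1 ha2
      dsimp only
      rw [if_pos ⟨ha1, ha2⟩]
      have hb := ht.1 (a + 1) (by omega) (by omega)
      have hn := ht.2.1 1 (a + 1) le_rfl (by omega) (by omega)
      omega
    · intro a j ha1 haj hjle
      dsimp only at hjle ⊢
      by_cases hcond : 1 ≤ a ∧ a ≤ k
      swap
      · rw [if_neg hcond] at hjle; omega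
      rw [if_pos hcond] at hjle
      have hb := ht.1 (a + 1) (by omega) (by omega)
      have hn1 := ht.2.1 1 (a + 1) le_rfl (by omega) (by omega)
      rw [if_pos (⟨by omega, by omega⟩ : 1 ≤ j ∧ j ≤ k), if_pos hcond]
      have := ht.2.1 (a + 1) (j + 1) (by omega) (by omega) (by omega)
      omega
  · refine ⟨?_, ?_, fun a ha => by dsimp only; rw [if_neg (by omega)]⟩
    · intro a ha1 ha2
      dsimp only
      rw [if_pos ⟨ha1, ha2⟩]
      have hb := ht.1 (a + k + 1) (by omega) (by omega)
      omega
    · intro a j ha1 haj hjle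
      dsimp only at hjle ⊢
      by_cases hcond : 1 ≤ a ∧ a ≤ m - k
      swap
      · rw [if_neg hcond] at hjle; omega
      rw [if_pos hcond] at hjle
      have hb := ht.1 (a + k + 1) (by omega) (by omega)
      rw [if_pos (⟨by omega, by omega⟩ : 1 ≤ j ∧ j ≤ m - k), if_pos hcond]
      have := ht.2.1 (a + k + 1) (j + k + 1) (by omega) (by omega) (by omega)
      omega
  · funext a
    rcases Nat.eq_zero_or_pos a with h0 | h1
    · subst h0
      rw [glue_zero _ _ (by omega) (Or.inl rfl), ht.2.2 0 (Or.inl rfl)]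
    by_cases ha1 : a = 1
    · subst ha1; rw [glue_one]; omega
    by_cases ha2 : a ≤ k + 1
    · rw [glue_left _ _ (by omega) ha2]
      rw [if_pos (⟨by omega, by omega⟩ : 1 ≤ a - 1 ∧ a - 1 ≤ k)]
      have e : a - 1 + 1 = a := by omega
      rw [e]
      have hb := ht.1 a (by omega) (by omega)
      omega
    by_cases ha3 : a ≤ m + 1
    · rw [glue_right _ _ (by omega) ha3]
      rw [if_pos (⟨by omega, by omega⟩ : 1 ≤ a - k - 1 ∧ a - k - 1 ≤ m - k)]
      have e : a - k - 1 + k + 1 = a := by omega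
      rw [e]
      have hb := ht.1 a (by omega) (by omega)
      omega
    · rw [glue_zero _ _ (by omega) (Or.inr (by omega)), ht.2.2 a (Or.inr (by omega))]

theorem card_valid (m : ℕ) : Nat.card {t : ℕ → ℕ // Valid m t} = catalan m := by
  induction m using Nat.strong_induction_on with
  | _ m ih =>
    match m, ih with
    | 0, _ =>
      haveI : Unique {t : ℕ → ℕ // Valid 0 t} :=
        { default := ⟨fun _ => 0, valid_zero⟩
          uniq := fun x => Subtype.ext (funext fun a => x.2.2.2 a (Nat.eq_zero_or_pos a)) }
      rw [Nat.card_unique, catalan_zero]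
    | m + 1, ih =>
      haveI : ∀ i, Finite {t : ℕ → ℕ // Valid i t} := finite_valid
      have hbij : Function.Bijective
          (fun p : (Σ k : Fin (m + 1), {t : ℕ → ℕ // Valid k.1 t} ×
              {t : ℕ → ℕ // Valid (m - k.1) t}) =>
            (⟨glue m p.1.1 p.2.1.1 p.2.2.1,
              glue_valid (by omega) p.2.1.2 p.2.2.2⟩ : {t : ℕ → ℕ // Valid (m + 1) t})) := by
        constructor
        · rintro ⟨⟨k1, hk1⟩, ⟨x1, hx1⟩, ⟨y1, hy1⟩⟩ ⟨⟨k2, hk2⟩, ⟨x2, hx2⟩, ⟨y2, hy2⟩⟩ h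
          simp only [Subtype.mk.injEq] at h
          obtain ⟨hk, hx, hy⟩ := glue_inj (by omega) (by omega) hx1 hy1 hx2 hy2 h
          subst hk; subst hx; subst hy; rfl
        · rintro ⟨t, htv⟩
          obtain ⟨k, hk, x, y, hx, hy, hg⟩ := glue_surj htv
          exact ⟨⟨⟨k, by omega⟩, ⟨x, hx⟩, ⟨y, hy⟩⟩, Subtype.ext hg⟩
      have hcard := Nat.card_eq_of_bijective _ hbij
      rw [← hcard]
      haveI : ∀ i, Fintype {t : ℕ → ℕ // Valid i t} := fun i => Fintype.ofFinite _
      rw [Nat.card_eq_fintype_card, Fintype.card_sigma, catalan_succ]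
      apply Finset.sum_congr rfl
      intro k _
      rw [Fintype.card_prod, ← Nat.card_eq_fintype_card, ← Nat.card_eq_fintype_card,
        ih k.1 k.2, ih (m - k.1) (by omega)]


/-- The number of torsion pairs in the interval model `I n` is `catalan (n+1)`. -/
theorem card_torsionPairs_eq_catalan (n : ℕ) :
    Nat.card {p : Set (ℕ × ℕ) × Set (ℕ × ℕ) // IsTorsionPair n p.1 p.2} =
      catalan (n + 1) := by
  rw [Nat.card_congr (pairClassEquiv n)]
  rw [← Nat.card_eq_of_bijective _ (toClass_bijective n)]
  exact card_valid (n + 1)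
end

section
/- For every natural number n, the number of torsion pairs in the interval model I_n equals the number of Young diagrams contained in the staircase Young diagram S(n); in particular there exists a bijection between torsion classes of size n and subdiagrams of the full Young diagram of size n. -/
namespace TP

open scoped Classical


def rperp (n : ℕ) (G : Set (ℕ × ℕ)) : Set (ℕ × ℕ) := {y ∈ Ivl n | ∀ x ∈ G, ¬ homA x y}
def lperp (n : ℕ) (F : Set (ℕ × ℕ)) : Set (ℕ × ℕ) := {x ∈ Ivl n | ∀ y ∈ F, ¬ homA x y}

/-- Being quotient-closed and extension-closed inside `Ivl n`. -/
def Closed (n : ℕ) (G : Set (ℕ × ℕ)) : Prop :=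
  G ⊆ Ivl n ∧ (∀ a d b : ℕ, (a, b) ∈ G → a ≤ d → d ≤ b → (a, d) ∈ G) ∧
    (∀ a d b : ℕ, (a, d) ∈ G → (d + 1, b) ∈ G → (a, b) ∈ G)

theorem closed_lperp (n : ℕ) (F : Set (ℕ × ℕ)) : Closed n (lperp n F) := by
  refine ⟨fun x hx => hx.1, ?_, ?_⟩
  · rintro a d b ⟨⟨h1, h2, h3⟩, hperp⟩ had hdb
    refine ⟨⟨h1, had, le_trans hdb h3⟩, ?_⟩
    rintro ⟨c, e⟩ hy ⟨hc, hae, hed⟩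
    exact hperp (c, e) hy ⟨hc, hae, le_trans hed hdb⟩
  · rintro a d b ⟨⟨h1, h2, h3⟩, hperp1⟩ ⟨⟨h1', h2', h3'⟩, hperp2⟩
    refine ⟨⟨h1, by omega, h3'⟩, ?_⟩
    rintro ⟨c, e⟩ hy ⟨hc, hae, heb⟩
    rcases le_or_gt e d with he | he
    · exact hperp1 (c, e) hy ⟨hc, hae, he⟩
    · exact hperp2 (c, e) hy ⟨by omega, by omega, heb⟩

theorem closed_eq (n : ℕ) (G : Set (ℕ × ℕ)) (h : Closed n G) :
    G = lperp n (rperp n G) := by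
  obtain ⟨hsub, hquot, hext⟩ := h
  apply Set.Subset.antisymm
  · intro x hx
    exact ⟨hsub hx, fun y hy hxy => hy.2 x hx hxy⟩
  · rintro ⟨a, b⟩ ⟨⟨h1, h2, h3⟩, hperp⟩
    by_contra hG
    -- minimal d with a ≤ d and (a, d) ∉ G
    have hQ : ∃ e, a ≤ e ∧ (a, e) ∉ G := ⟨b, h2, hG⟩
    set d := Nat.find hQ with hd
    obtain ⟨had, hadG⟩ := Nat.find_spec hQ
    have hdb : d ≤ b := Nat.find_min' hQ ⟨h2, hG⟩
    have hmin : ∀ e, a ≤ e → e < d → (a, e) ∈ G := by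
      intro e hae hed
      by_contra hcon
      exact (Nat.find_min hQ hed) ⟨hae, hcon⟩
    -- greatest u ≤ d with a row element reaching past d
    set P : ℕ → Prop := fun u => 1 ≤ u ∧ ∃ v, v ≤ n ∧ d ≤ v ∧ (u, v) ∈ G with hP
    set u := Nat.findGreatest P d with hu
    have hua : u < a := by
      by_contra hcon
      push_neg at hcon
      have hu0 : u ≠ 0 := by omega
      obtain ⟨hu1, v, hvn, hdv, huvG⟩ := Nat.findGreatest_of_ne_zero hu.symm hu0
      rcases eq_or_lt_of_le hcon with heq | hlt
      · -- u = a
        exact hadG (hquot a d v (heq ▸ huvG) had hdv)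
      · -- a < u : use extension with (a, u-1)
        have h1 : (a, u - 1) ∈ G := by
          apply hmin
          · omega
          · have : u ≤ d := Nat.findGreatest_le d
            omega
        have h2 : (a, v) ∈ G := by
          have := hext a (u - 1) v (by exact h1) (by
            have : u - 1 + 1 = u := by omega
            rw [this]; exact huvG)
          exact this
        exact hadG (hquot a d v h2 had hdv)
    have hcd : (u + 1, d) ∈ rperp n G := by
      refine ⟨⟨by omega, by omega, by omega⟩, ?_⟩
      rintro ⟨p, q⟩ hpq ⟨hup, hpd, hdq⟩
      have hIvl := hsub hpq
      have : p ≤ u := Nat.le_findGreatest hpd ⟨by exact hIvl.1, q, hIvl.2.2, hdq, hpq⟩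
      omega
    exact hperp (u + 1, d) hcd ⟨by omega, had, hdb⟩

theorem isTorsionClass_iff_closed (n : ℕ) (G : Set (ℕ × ℕ)) :
    IsTorsionClass n G ↔ Closed n G := by
  constructor
  · rintro ⟨F, hG, _⟩
    rw [hG]
    exact closed_lperp n F
  · intro h
    exact ⟨rperp n G, (closed_eq n G h), rfl⟩


open Classical in
noncomputable section

/-- Valid row-max functions. `f a = a - 1` encodes an empty row. -/
def ValidF (n : ℕ) (f : ℕ → ℕ) : Prop :=
  (∀ a, 1 ≤ a → a ≤ n → a - 1 ≤ f a ∧ f a ≤ n) ∧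
  (∀ a c, 1 ≤ a → a < c → c ≤ n → c ≤ f a + 1 → f c ≤ f a) ∧
  (∀ a, a = 0 ∨ n < a → f a = 0)

open Classical in
/-- The row-max function of a set. -/
noncomputable def fOf (n : ℕ) (G : Set (ℕ × ℕ)) (a : ℕ) : ℕ :=
  if 1 ≤ a ∧ a ≤ n then
    (if (a, a) ∈ G then Nat.findGreatest (fun b => (a, b) ∈ G) n else a - 1)
  else 0

/-- The set associated to a row-max function. -/
def GOf (f : ℕ → ℕ) : Set (ℕ × ℕ) := {p | 1 ≤ p.1 ∧ p.1 ≤ p.2 ∧ p.2 ≤ f p.1}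

theorem mem_GOf {f : ℕ → ℕ} {a b : ℕ} : (a, b) ∈ GOf f ↔ 1 ≤ a ∧ a ≤ b ∧ b ≤ f a :=
  Iff.rfl

theorem closed_mem_iff {n : ℕ} {G : Set (ℕ × ℕ)} (h : Closed n G) {a b : ℕ} :
    (a, b) ∈ G ↔ 1 ≤ a ∧ a ≤ b ∧ b ≤ fOf n G a := by
  obtain ⟨hsub, hquot, hext⟩ := h
  constructor
  · intro hab
    obtain ⟨h1, h2, h3⟩ := hsub hab
    have haa : (a, a) ∈ G := hquot a a b hab le_rfl h2
    have han : a ≤ n := le_trans h2 h3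
    refine ⟨h1, h2, ?_⟩
    rw [fOf, if_pos ⟨h1, han⟩, if_pos haa]
    exact Nat.le_findGreatest h3 hab
  · rintro ⟨h1, h2, h3⟩
    rw [fOf] at h3
    split_ifs at h3 with hrange haa
    · have hspec : (a, Nat.findGreatest (fun b => (a, b) ∈ G) n) ∈ G :=
        Nat.findGreatest_of_ne_zero (P := fun b => (a, b) ∈ G) rfl (by omega)
      exact hquot a b _ hspec h2 h3
    · omega
    · omega

theorem validF_fOf {n : ℕ} {G : Set (ℕ × ℕ)} (h : Closed n G) : ValidF n (fOf n G) := by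
  have hmem := fun a b => closed_mem_iff (a := a) (b := b) h
  obtain ⟨hsub, hquot, hext⟩ := h
  refine ⟨?_, ?_, ?_⟩
  · intro a h1 h2
    unfold fOf
    split_ifs with hrange haa
    · constructor
      · have := Nat.le_findGreatest (P := fun b => (a, b) ∈ G) h2 haa
        omega
      · exact Nat.findGreatest_le n
    · omega
    · omega
  · intro a c h1 hac hcn hcf
    rcases Nat.lt_or_ge (fOf n G c) c with hlt | hge
    · omega
    · -- row c nonempty
      have hcG : (c, fOf n G c) ∈ G := (hmem c (fOf n G c)).2 ⟨by omega, hge, le_rfl⟩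
      have haG : (a, c - 1) ∈ G := (hmem a (c - 1)).2 ⟨h1, by omega, by omega⟩
      have : (a, fOf n G c) ∈ G := by
        apply hext a (c - 1) (fOf n G c) haG
        have : c - 1 + 1 = c := by omega
        rw [this]; exact hcG
      have := (hmem a (fOf n G c)).1 this
      omega
  · intro a ha
    unfold fOf
    rw [if_neg (by omega)]

theorem closed_GOf {n : ℕ} {f : ℕ → ℕ} (h : ValidF n f) : Closed n (GOf f) := by
  obtain ⟨hb, hlam, hnorm⟩ := h
  have hran : ∀ a, 1 ≤ a → a ≤ f a → a ≤ n := by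
    intro a h1 h2
    by_contra hcon
    have := hnorm a (by omega)
    omega
  refine ⟨?_, ?_, ?_⟩
  · rintro ⟨a, b⟩ hab
    rw [mem_GOf] at hab
    obtain ⟨h1, h2, h3⟩ := hab
    have han : a ≤ n := hran a h1 (le_trans h2 h3)
    have := (hb a h1 han).2
    exact ⟨h1, h2, by omega⟩
  · rintro a d b hab had hdb
    rw [mem_GOf] at hab ⊢
    obtain ⟨h1, h2, h3⟩ := hab
    exact ⟨h1, had, by omega⟩
  · rintro a d b hab hdb
    rw [mem_GOf] at hab hdb ⊢
    obtain ⟨h1, h2, h3⟩ := hab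
    obtain ⟨h1', h2', h3'⟩ := hdb
    have hdn : d + 1 ≤ n := hran (d + 1) (by omega) (le_trans h2' h3')
    have := hlam a (d + 1) h1 (by omega) hdn (by omega)
    exact ⟨h1, by omega, by omega⟩

theorem fOf_GOf {n : ℕ} {f : ℕ → ℕ} (h : ValidF n f) : fOf n (GOf f) = f := by
  obtain ⟨hb, hlam, hnorm⟩ := h
  funext a
  unfold fOf
  split_ifs with hrange haa
  · -- row nonempty : a ≤ f a
    rw [mem_GOf] at haa
    obtain ⟨_, _, hfa⟩ := haa
    rw [Nat.findGreatest_eq_iff]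
    refine ⟨(hb a hrange.1 hrange.2).2, fun _ => mem_GOf.2 ⟨hrange.1, hfa, le_rfl⟩, ?_⟩
    intro m hm hmn hmem
    rw [mem_GOf] at hmem
    omega
  · -- row empty
    have h1 := (hb a hrange.1 hrange.2).1
    rw [mem_GOf] at haa
    push_neg at haa
    have := haa hrange.1 le_rfl
    omega
  · push_neg at hrange
    rcases Nat.eq_zero_or_pos a with h0 | h1
    · exact (hnorm a (Or.inl h0)).symm
    · exact (hnorm a (Or.inr (hrange h1))).symm

/-- Torsion classes are equivalent to valid row-max functions. -/
noncomputable def equivClassF (n : ℕ) :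
    {G : Set (ℕ × ℕ) // IsTorsionClass n G} ≃ {f : ℕ → ℕ // ValidF n f} where
  toFun := fun ⟨G, hG⟩ => ⟨fOf n G, validF_fOf ((isTorsionClass_iff_closed n G).1 hG)⟩
  invFun := fun ⟨f, hf⟩ => ⟨GOf f, (isTorsionClass_iff_closed n _).2 (closed_GOf hf)⟩
  left_inv := by
    rintro ⟨G, hG⟩
    have hc := (isTorsionClass_iff_closed n G).1 hG
    apply Subtype.ext
    ext ⟨a, b⟩
    rw [mem_GOf]
    exact (closed_mem_iff hc).symm
  right_inv := by
    rintro ⟨f, hf⟩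
    exact Subtype.ext (fOf_GOf hf)

end

/-- Valid column-count sequences. -/
def ValidE (n : ℕ) (e : ℕ → ℕ) : Prop :=
  e 0 = 0 ∧ (∀ j, j + 1 ≤ n → e (j + 1) ≤ e j + 1) ∧ (∀ j, n < j → e j = 0)

/-- Column counts of the set encoded by `f`. -/
noncomputable def Evec (f : ℕ → ℕ) (j : ℕ) : ℕ :=
  ((Finset.Icc 1 j).filter (fun c => j ≤ f c)).card

/-- The alive-interval predicate used to invert `Evec`. -/
def Pal (e : ℕ → ℕ) (c j : ℕ) : Prop := c ≤ j ∧ ∀ j', c ≤ j' → j' ≤ j → e c ≤ e j'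

/-- Inverse of `Evec`. -/
noncomputable def Dvec (n : ℕ) (e : ℕ → ℕ) (c : ℕ) : ℕ :=
  if 1 ≤ c ∧ c ≤ n then
    (if e c = e (c - 1) + 1 then Nat.findGreatest (Pal e c) n else c - 1)
  else 0

section toE

variable {n : ℕ} {f : ℕ → ℕ} (hf : ValidF n f)

/-- On each "column" the alive rows have nonincreasing `f`. -/
theorem f_anti (hf : ValidF n f) {c c' : ℕ} (h1 : 1 ≤ c) (hcc : c < c')
    (hc' : c' ≤ f c) (hc'2 : c' ≤ f c') : f c' ≤ f c := by
  have hc'n : c' ≤ n := by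
    by_contra hcon
    have := hf.2.2 c' (by omega)
    omega
  exact hf.2.1 c c' h1 hcc hc'n (by omega)

/-- Born iff the count increments. -/
theorem born_iff (hf : ValidF n f) {c : ℕ} (h1 : 1 ≤ c) (h2 : c ≤ n) :
    Evec f c = Evec f (c - 1) + 1 ↔ c ≤ f c := by
  constructor
  · intro h
    by_contra hcon
    have hsub : (Finset.Icc 1 c).filter (fun u => c ≤ f u) ⊆
        (Finset.Icc 1 (c - 1)).filter (fun u => c - 1 ≤ f u) := by
      intro u hu
      simp only [Finset.mem_filter, Finset.mem_Icc] at hu ⊢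
      have : u ≠ c := by rintro rfl; omega
      omega
    have := Finset.card_le_card hsub
    unfold Evec at h
    omega
  · intro hfc
    have hkey : (Finset.Icc 1 c).filter (fun u => c ≤ f u) =
        insert c ((Finset.Icc 1 (c - 1)).filter (fun u => c - 1 ≤ f u)) := by
      ext u
      simp only [Finset.mem_filter, Finset.mem_Icc, Finset.mem_insert]
      constructor
      · rintro ⟨⟨hu1, hu2⟩, hu3⟩
        rcases eq_or_lt_of_le hu2 with rfl | hlt
        · exact Or.inl rfl
        · exact Or.inr ⟨⟨hu1, by omega⟩, by omega⟩
      · rintro (rfl | ⟨⟨hu1, hu2⟩, hu3⟩)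
        · exact ⟨⟨h1, le_rfl⟩, hfc⟩
        · refine ⟨⟨hu1, by omega⟩, ?_⟩
          -- need c ≤ f u; if f u = c - 1 then laminarity forces f c < c
          by_contra hcon
          have hfu : f u = c - 1 := by omega
          have := hf.2.1 u c hu1 (by omega) h2 (by omega)
          omega
    rw [Evec, hkey, Finset.card_insert_of_notMem, Evec]
    simp only [Finset.mem_filter, Finset.mem_Icc]
    omega

/-- If `(c, j)` is alive then the count at any `j' ∈ [c, j]` is at least the count at `c`. -/
theorem alive_mono (hf : ValidF n f) {c j j' : ℕ} (h1 : 1 ≤ c) (hcj' : c ≤ j')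
    (hj'j : j' ≤ j) (hjf : j ≤ f c) : Evec f c ≤ Evec f j' := by
  apply Finset.card_le_card
  intro u hu
  simp only [Finset.mem_filter, Finset.mem_Icc] at hu ⊢
  obtain ⟨⟨hu1, hu2⟩, hu3⟩ := hu
  rcases eq_or_lt_of_le hu2 with rfl | hlt
  · omega
  · have := f_anti hf hu1 hlt (by omega) (by omega)
    omega

theorem alive_of_mono (hf : ValidF n f) {c j : ℕ} (h1 : 1 ≤ c) (hcj : c ≤ j) (hjn : j ≤ n)
    (hcf : c ≤ f c) (hcond : ∀ j', c ≤ j' → j' ≤ j → Evec f c ≤ Evec f j') : j ≤ f c := by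
  induction j, hcj using Nat.le_induction with
  | base => exact hcf
  | succ j hcj ih =>
    have hjf : j ≤ f c := ih (by omega) (fun j' h1' h2' => hcond j' h1' (by omega))
    by_contra hcon
    have hfc : f c = j := by omega
    -- every alive row at column j+1 is an alive row at column c other than c itself
    have hsub : (Finset.Icc 1 (j + 1)).filter (fun u => j + 1 ≤ f u) ⊆
        ((Finset.Icc 1 c).filter (fun u => c ≤ f u)).erase c := by
      intro u hu
      simp only [Finset.mem_filter, Finset.mem_Icc, Finset.mem_erase] at hu ⊢
      obtain ⟨⟨hu1, hu2⟩, hu3⟩ := hu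
      have hne : u ≠ c := by rintro rfl; omega
      have hlt : u < c := by
        by_contra hcon2
        have := hf.2.1 c u h1 (by omega) (by omega) (by omega)
        omega
      omega
    have hcmem : c ∈ (Finset.Icc 1 c).filter (fun u => c ≤ f u) := by
      simp only [Finset.mem_filter, Finset.mem_Icc]
      omega
    have h1' := Finset.card_le_card hsub
    have h2' := Finset.card_erase_of_mem hcmem
    have h3' := Finset.card_pos.2 ⟨c, hcmem⟩
    have h4' := hcond (j + 1) (by omega) le_rfl
    unfold Evec at h4'
    omega

theorem validE_Evec (hf : ValidF n f) : ValidE n (Evec f) := by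
  refine ⟨?_, ?_, ?_⟩
  · simp [Evec]
  · intro j _
    have hsub : (Finset.Icc 1 (j + 1)).filter (fun u => j + 1 ≤ f u) ⊆
        insert (j + 1) ((Finset.Icc 1 j).filter (fun u => j ≤ f u)) := by
      intro u hu
      simp only [Finset.mem_filter, Finset.mem_Icc, Finset.mem_insert] at hu ⊢
      omega
    have := Finset.card_le_card hsub
    have := Finset.card_insert_le (j + 1) ((Finset.Icc 1 j).filter (fun u => j ≤ f u))
    unfold Evec
    omega
  · intro j hj
    rw [Evec, Finset.card_eq_zero, Finset.eq_empty_iff_forall_notMem]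
    intro u hu
    simp only [Finset.mem_filter, Finset.mem_Icc] at hu
    rcases le_or_gt u n with h | h
    · have := (hf.1 u (by omega) h).2
      omega
    · have := hf.2.2 u (by omega)
      omega

theorem Dvec_Evec (hf : ValidF n f) : Dvec n (Evec f) = f := by
  funext c
  unfold Dvec
  split_ifs with hrange hborn
  · -- born
    have hcf : c ≤ f c := (born_iff hf hrange.1 hrange.2).1 hborn
    have hfn : f c ≤ n := (hf.1 c hrange.1 hrange.2).2
    rw [Nat.findGreatest_eq_iff]
    refine ⟨hfn, fun _ => ⟨hcf, fun j' h1' h2' => alive_mono hf hrange.1 h1' h2' le_rfl⟩, ?_⟩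
    rintro m hm hmn ⟨hcm, hcond⟩
    have hcond' : ∀ j', c ≤ j' → j' ≤ m → Evec f c ≤ Evec f j' := hcond
    have := alive_of_mono hf hrange.1 hcm hmn hcf hcond'
    omega
  · -- not born
    have := (born_iff hf hrange.1 hrange.2).not.1 hborn
    have := (hf.1 c hrange.1 hrange.2).1
    omega
  · -- out of range
    rcases Nat.eq_zero_or_pos c with h0 | h1
    · exact (hf.2.2 c (Or.inl h0)).symm
    · exact (hf.2.2 c (Or.inr (by omega))).symm

end toE




section toF

variable {n : ℕ} {e : ℕ → ℕ}

theorem Pal_self {c : ℕ} : Pal e c c := by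
  refine ⟨le_rfl, fun j' h1 h2 => ?_⟩
  have : j' = c := by omega
  subst this
  exact le_rfl

theorem Dvec_born {c : ℕ} (h1 : 1 ≤ c) (h2 : c ≤ n) (hb : e c = e (c - 1) + 1) :
    Dvec n e c = Nat.findGreatest (Pal e c) n := by
  unfold Dvec
  rw [if_pos ⟨h1, h2⟩, if_pos hb]

theorem Dvec_not_born {c : ℕ} (h1 : 1 ≤ c) (h2 : c ≤ n) (hb : ¬ e c = e (c - 1) + 1) :
    Dvec n e c = c - 1 := by
  unfold Dvec
  rw [if_pos ⟨h1, h2⟩, if_neg hb]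

theorem validF_Dvec (he : ValidE n e) : ValidF n (Dvec n e) := by
  refine ⟨?_, ?_, ?_⟩
  · intro c h1 h2
    unfold Dvec
    rw [if_pos ⟨h1, h2⟩]
    split_ifs with hborn
    · constructor
      · have := Nat.le_findGreatest h2 (Pal_self (e := e) (c := c))
        omega
      · exact Nat.findGreatest_le n
    · omega
  · intro a c h1 hac hcn hcd
    have han : a ≤ n := by omega
    by_cases hba : e a = e (a - 1) + 1
    case neg =>
      rw [Dvec_not_born h1 han hba] at hcd
      exfalso
      omega
    rw [Dvec_born h1 han hba] at hcd
    by_cases hbc : e c = e (c - 1) + 1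
    case neg =>
      rw [Dvec_not_born (by omega) hcn hbc, Dvec_born h1 han hba]
      omega
    rw [Dvec_born (by omega) hcn hbc, Dvec_born h1 han hba]
    · -- both born
      set J := Nat.findGreatest (Pal e a) n with hJ
      set J' := Nat.findGreatest (Pal e c) n with hJ'
      by_contra hcon
      push_neg at hcon
      have hJn : J ≤ n := Nat.findGreatest_le n
      have hJ'n : J' ≤ n := Nat.findGreatest_le n
      have hJa : a ≤ J := Nat.le_findGreatest han (Pal_self (e := e) (c := a))
      have hJ'c : c ≤ J' := Nat.le_findGreatest hcn (Pal_self (e := e) (c := c))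
      have hPJ : Pal e a J := Nat.findGreatest_of_ne_zero hJ.symm (by omega)
      have hPJ' : Pal e c J' := Nat.findGreatest_of_ne_zero hJ'.symm (by omega)
      have hnPJ1 : ¬ Pal e a (J + 1) :=
        Nat.findGreatest_is_greatest (n := n) (by omega) (by omega)
      have heJ1 : e (J + 1) < e a := by
        unfold Pal at hnPJ1
        push_neg at hnPJ1
        obtain ⟨j', hj1, hj2, hj3⟩ := hnPJ1 (by omega)
        rcases eq_or_lt_of_le hj2 with rfl | hlt
        · exact hj3
        · have := hPJ.2 j' hj1 (by omega)
          omega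
      have h1' : e a ≤ e (c - 1) := hPJ.2 (c - 1) (by omega) (by omega)
      have h2' : e c ≤ e (J + 1) := hPJ'.2 (J + 1) (by omega) (by omega)
      omega
  · intro a ha
    unfold Dvec
    rw [if_neg (by omega)]

/-- The alive set in terms of `e` only. -/
noncomputable def Tset (e : ℕ → ℕ) (j : ℕ) : Finset ℕ :=
  (Finset.Icc 1 j).filter (fun c => e c = e (c - 1) + 1 ∧ ∀ j', c ≤ j' → j' ≤ j → e c ≤ e j')

theorem mem_filter_iff_Tset {j : ℕ} (hjn : j ≤ n) :
    (Finset.Icc 1 j).filter (fun c => j ≤ Dvec n e c) = Tset e j := by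
  ext c
  simp only [Tset, Finset.mem_filter, Finset.mem_Icc]
  constructor
  · rintro ⟨⟨h1, h2⟩, h3⟩
    refine ⟨⟨h1, h2⟩, ?_⟩
    unfold Dvec at h3
    rw [if_pos ⟨h1, by omega⟩] at h3
    split_ifs at h3 with hborn
    · refine ⟨hborn, ?_⟩
      set J := Nat.findGreatest (Pal e c) n with hJ
      have hPJ : Pal e c J := Nat.findGreatest_of_ne_zero hJ.symm (by omega)
      exact fun j' hj1 hj2 => hPJ.2 j' hj1 (by omega)
    · omega
  · rintro ⟨⟨h1, h2⟩, hborn, hcond⟩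
    refine ⟨⟨h1, h2⟩, ?_⟩
    unfold Dvec
    rw [if_pos ⟨h1, by omega⟩, if_pos hborn]
    exact Nat.le_findGreatest hjn ⟨h2, hcond⟩

theorem Tset_invariant (he : ValidE n e) :
    ∀ j, j ≤ n → (Tset e j).image e = Finset.Icc 1 (e j) ∧ Set.InjOn e (Tset e j) := by
  intro j
  induction j with
  | zero =>
    intro _
    constructor
    · simp [Tset, he.1]
    · simp [Tset]
  | succ j ih =>
    intro hjn
    obtain ⟨ihim, ihinj⟩ := ih (by omega)
    have hstep : e (j + 1) ≤ e j + 1 := he.2.1 j hjn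
    by_cases hb : e (j + 1) = e j + 1
    · -- case A : a new row is born and all alive rows stay alive
      have hkey : Tset e (j + 1) = insert (j + 1) (Tset e j) := by
        ext u
        simp only [Tset, Finset.mem_filter, Finset.mem_Icc, Finset.mem_insert]
        constructor
        · rintro ⟨⟨h1, h2⟩, hbu, hcond⟩
          rcases eq_or_lt_of_le h2 with rfl | hlt
          · exact Or.inl rfl
          · exact Or.inr ⟨⟨h1, by omega⟩, hbu, fun j' ha hb' => hcond j' ha (by omega)⟩
        · rintro (rfl | ⟨⟨h1, h2⟩, hbu, hcond⟩)
          · refine ⟨⟨by omega, le_rfl⟩, by simpa using hb, ?_⟩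
            intro j' h1 h2
            have : j' = j + 1 := by omega
            rw [this]
          · refine ⟨⟨h1, by omega⟩, hbu, ?_⟩
            intro j' hj1 hj2
            rcases eq_or_lt_of_le hj2 with rfl | hlt
            · have := hcond j h2 le_rfl
              omega
            · exact hcond j' hj1 (by omega)
      constructor
      · rw [hkey, Finset.image_insert, ihim, hb]
        ext v
        simp only [Finset.mem_insert, Finset.mem_Icc]
        omega
      · rw [hkey, Finset.coe_insert]
        intro u hu v hv huv
        rcases Set.mem_insert_iff.1 hu with rfl | hu' <;>
          rcases Set.mem_insert_iff.1 hv with rfl | hv'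
        · rfl
        · exfalso
          have : e v ∈ Finset.Icc 1 (e j) := ihim ▸ Finset.mem_image_of_mem e hv'
          simp only [Finset.mem_Icc] at this
          omega
        · exfalso
          have : e u ∈ Finset.Icc 1 (e j) := ihim ▸ Finset.mem_image_of_mem e hu'
          simp only [Finset.mem_Icc] at this
          omega
        · exact ihinj hu' hv' huv
    · -- case B : no birth, rows with large level die
      have hkey : Tset e (j + 1) = (Tset e j).filter (fun c => e c ≤ e (j + 1)) := by
        ext u
        simp only [Tset, Finset.mem_filter, Finset.mem_Icc]
        constructor
        · rintro ⟨⟨h1, h2⟩, hbu, hcond⟩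
          have hne : u ≠ j + 1 := by
            rintro rfl
            simp only [Nat.add_sub_cancel] at hbu
            omega
          have h2' : u ≤ j := by omega
          exact ⟨⟨⟨h1, h2'⟩, hbu, fun j' ha hb'' => hcond j' ha (by omega)⟩,
            hcond (j + 1) (by omega) le_rfl⟩
        · rintro ⟨⟨⟨h1, h2⟩, hbu, hcond⟩, hle⟩
          refine ⟨⟨h1, by omega⟩, hbu, ?_⟩
          intro j' ha hbj
          rcases eq_or_lt_of_le hbj with rfl | hlt
          · exact hle
          · exact hcond j' ha (by omega)
      constructor
      · rw [hkey]
        ext v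
        simp only [Finset.mem_image, Finset.mem_filter, Finset.mem_Icc]
        constructor
        · rintro ⟨u, ⟨hu, hul⟩, rfl⟩
          have : e u ∈ Finset.Icc 1 (e j) := ihim ▸ Finset.mem_image_of_mem e hu
          simp only [Finset.mem_Icc] at this
          omega
        · rintro ⟨hv1, hv2⟩
          have hv : v ∈ (Tset e j).image e := by
            rw [ihim]
            simp only [Finset.mem_Icc]
            omega
          obtain ⟨u, hu, rfl⟩ := Finset.mem_image.1 hv
          exact ⟨u, ⟨hu, hv2⟩, rfl⟩
      · rw [hkey]
        exact ihinj.mono (Finset.coe_subset.2 (Finset.filter_subset _ _))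

theorem Evec_Dvec (he : ValidE n e) : Evec (Dvec n e) = e := by
  funext j
  rcases le_or_gt j n with hjn | hjn
  · unfold Evec
    rw [mem_filter_iff_Tset hjn]
    obtain ⟨him, hinj⟩ := Tset_invariant he j hjn
    have hcard := Finset.card_image_of_injOn hinj
    rw [him] at hcard
    simp only [Nat.card_Icc] at hcard
    omega
  · have h1 := (validE_Evec (validF_Dvec he)).2.2 j hjn
    have h2 := he.2.2 j hjn
    rw [h1, h2]

/-- The bijection between valid row-max functions and valid column-count sequences. -/
noncomputable def equivFE (n : ℕ) :
    {f : ℕ → ℕ // ValidF n f} ≃ {e : ℕ → ℕ // ValidE n e} where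
  toFun := fun ⟨f, hf⟩ => ⟨Evec f, validE_Evec hf⟩
  invFun := fun ⟨e, he⟩ => ⟨Dvec n e, validF_Dvec he⟩
  left_inv := fun ⟨f, hf⟩ => Subtype.ext (Dvec_Evec hf)
  right_inv := fun ⟨e, he⟩ => Subtype.ext (Evec_Dvec he)

end toF



variable {n : ℕ} {e : ℕ → ℕ}

theorem mem_staircase {m : ℕ} {p : ℕ × ℕ} : p ∈ staircase m ↔ p.1 + p.2 < m := by
  obtain ⟨i, k⟩ := p
  show _ ∈ (staircase m).cells ↔ _
  simp only [staircase, Finset.mem_filter, Finset.mem_product, Finset.mem_range]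
  omega

theorem validE_le (he : ValidE n e) : ∀ j, j ≤ n → e j ≤ j := by
  intro j
  induction j with
  | zero => intro _; exact Nat.le_of_eq he.1
  | succ j ih =>
    intro h
    have := he.2.1 j h
    have := ih (by omega)
    omega

theorem validE_mono (he : ValidE n e) {j j' : ℕ} (h : j ≤ j') (h2 : j' ≤ n) :
    j - e j ≤ j' - e j' := by
  induction j', h using Nat.le_induction with
  | base => exact Nat.le_refl _
  | succ j' h ih =>
    have h1 := he.2.1 j' h2
    have h3 := validE_le he j' (by omega)
    have := ih (by omega)
    omega

/-- The Young diagram of a valid column-count sequence. -/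
def YD (n : ℕ) (e : ℕ → ℕ) (he : ValidE n e) : YoungDiagram where
  cells := (Finset.range n ×ˢ Finset.range n).filter
    (fun p => p.2 + e (n - p.1) < n - p.1)
  isLowerSet := by
    rintro ⟨i, k⟩ ⟨i', k'⟩ ⟨hle1, hle2⟩ hp
    simp only [Finset.mem_coe, Finset.mem_filter, Finset.mem_product,
      Finset.mem_range] at hp ⊢
    obtain ⟨⟨hi, hk⟩, hcell⟩ := hp
    have hmono : (n - i) - e (n - i) ≤ (n - i') - e (n - i') :=
      validE_mono he (by omega) (by omega)
    have h1 := validE_le he (n - i) (by omega)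
    have h2 := validE_le he (n - i') (by omega)
    simp only at hle1 hle2
    omega

theorem YD_le (he : ValidE n e) : YD n e he ≤ staircase n := by
  intro p hp
  obtain ⟨i, k⟩ := p
  rw [mem_staircase]
  have hmem : (i, k) ∈ (YD n e he).cells := hp
  simp only [YD, Finset.mem_filter, Finset.mem_product, Finset.mem_range] at hmem
  omega

theorem rowLen_le_staircase {μ : YoungDiagram} (hμ : μ ≤ staircase n) (i : ℕ) :
    μ.rowLen i ≤ n - i := by
  rcases Nat.eq_zero_or_pos (μ.rowLen i) with h | h
  · omega
  · have hmem : (i, μ.rowLen i - 1) ∈ μ := YoungDiagram.mem_iff_lt_rowLen.2 (by omega)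
    have h2 := hμ hmem
    rw [mem_staircase] at h2
    simp only at h2
    omega

theorem nat_eq_of_lt_iff {A B : ℕ} (h : ∀ k, k < A ↔ k < B) : A = B := by
  by_contra hne
  rcases Nat.lt_or_ge A B with h' | h'
  · exact absurd ((h A).2 h') (lt_irrefl _)
  · have hBA : B < A := by omega
    exact absurd ((h B).1 hBA) (lt_irrefl _)

theorem rowLen_YD (he : ValidE n e) {i : ℕ} (hi : i < n) :
    (YD n e he).rowLen i = (n - i) - e (n - i) := by
  apply nat_eq_of_lt_iff
  intro k
  rw [← YoungDiagram.mem_iff_lt_rowLen]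
  show (i, k) ∈ (YD n e he).cells ↔ _
  simp only [YD, Finset.mem_filter, Finset.mem_product, Finset.mem_range]
  have h1 := validE_le he (n - i) (by omega)
  omega

/-- Inverse map: row lengths of a subdiagram of the staircase. -/
def Einv (n : ℕ) (μ : YoungDiagram) (j : ℕ) : ℕ :=
  if 1 ≤ j ∧ j ≤ n then j - μ.rowLen (n - j) else 0

theorem validE_Einv {μ : YoungDiagram} (hμ : μ ≤ staircase n) : ValidE n (Einv n μ) := by
  refine ⟨by simp [Einv], ?_, ?_⟩
  · intro j hj
    have hanti := μ.rowLen_anti (n - (j + 1)) (n - j) (by omega)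
    have hle := rowLen_le_staircase hμ (n - j)
    have hle2 := rowLen_le_staircase hμ (n - (j + 1))
    unfold Einv
    split_ifs <;> omega
  · intro j hj
    unfold Einv
    rw [if_neg (by omega)]

theorem Einv_YD (he : ValidE n e) : Einv n (YD n e he) = e := by
  funext j
  unfold Einv
  split_ifs with hr
  · have hnj : n - (n - j) = j := by omega
    rw [rowLen_YD he (by omega : n - j < n), hnj]
    have := validE_le he j hr.2
    omega
  · rcases Nat.eq_zero_or_pos j with rfl | hpos
    · exact he.1.symm
    · exact (he.2.2 j (by omega)).symm

theorem YD_Einv {μ : YoungDiagram} (hμ : μ ≤ staircase n) :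
    YD n (Einv n μ) (validE_Einv hμ) = μ := by
  apply YoungDiagram.ext
  ext ⟨i, k⟩
  rw [show ((i, k) ∈ μ.cells ↔ k < μ.rowLen i) from
    (YoungDiagram.mem_cells _).trans YoungDiagram.mem_iff_lt_rowLen]
  show (i, k) ∈ Finset.filter _ _ ↔ _
  simp only [Finset.mem_filter, Finset.mem_product, Finset.mem_range]
  rcases Nat.lt_or_ge i n with hi | hi
  · have h1 : Einv n μ (n - i) = (n - i) - μ.rowLen i := by
      unfold Einv
      rw [if_pos ⟨by omega, by omega⟩]
      congr 2
      omega
    rw [h1]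
    have h2 := rowLen_le_staircase hμ i
    omega
  · have h2 := rowLen_le_staircase hμ i
    constructor
    · rintro ⟨⟨h3, _⟩, _⟩
      omega
    · intro h3
      exfalso
      omega

/-- Valid column-count sequences are equivalent to subdiagrams of the staircase. -/
def equivEY (n : ℕ) :
    {e : ℕ → ℕ // ValidE n e} ≃ {μ : YoungDiagram // μ ≤ staircase n} where
  toFun := fun ⟨e, he⟩ => ⟨YD n e he, YD_le he⟩
  invFun := fun ⟨μ, hμ⟩ => ⟨Einv n μ, validE_Einv hμ⟩
  left_inv := fun ⟨e, he⟩ => Subtype.ext (Einv_YD he)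
  right_inv := fun ⟨μ, hμ⟩ => Subtype.ext (YD_Einv hμ)


/-- Torsion pairs are determined by their first component. -/
noncomputable def equivPairs (n : ℕ) :
    {p : Set (ℕ × ℕ) × Set (ℕ × ℕ) // IsTorsionPair n p.1 p.2} ≃
      {G : Set (ℕ × ℕ) // IsTorsionClass n G} where
  toFun := fun ⟨p, h⟩ => ⟨p.1, ⟨p.2, h⟩⟩
  invFun := fun ⟨G, h⟩ => ⟨(G, rperp n G), by
    obtain ⟨F, h1, h2⟩ := h
    have h2' : F = rperp n G := h2
    rw [h2'] at h1
    exact ⟨h1, rfl⟩⟩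
  left_inv := by
    rintro ⟨⟨G, F⟩, h⟩
    apply Subtype.ext
    show (G, rperp n G) = (G, F)
    have h2' : F = rperp n G := h.2
    rw [h2']
  right_inv := by
    rintro ⟨G, h⟩
    rfl

end TP

/-- The number of torsion pairs in the interval model `I n` equals the number of
Young diagrams contained in the staircase `S(n)`; in particular, there is a bijection
between torsion classes of size `n` and subdiagrams of the full Young diagram of
size `n`. -/
theorem card_torsionPairs_eq_card_subdiagrams (n : ℕ) :
    Nat.card {p : Set (ℕ × ℕ) × Set (ℕ × ℕ) // IsTorsionPair n p.1 p.2} =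
      Nat.card {μ : YoungDiagram // μ ≤ staircase n} ∧
    Nonempty ({G : Set (ℕ × ℕ) // IsTorsionClass n G} ≃
      {μ : YoungDiagram // μ ≤ staircase n}) := by
  have E2 : {G : Set (ℕ × ℕ) // IsTorsionClass n G} ≃
      {μ : YoungDiagram // μ ≤ staircase n} :=
    (TP.equivClassF n).trans ((TP.equivFE n).trans (TP.equivEY n))
  exact ⟨Nat.card_congr ((TP.equivPairs n).trans E2), ⟨E2⟩⟩
end

section
/- Let n be a natural number and let G be a subset of the interval model I_n. Then G is a torsion class (i.e. G is the first component of some torsion pair in I_n) if and only if G is closed under quotients — whenever (a,b) ∈ G and a ≤ e ≤ b then (a,e) ∈ G — and closed under extensions — whenever (a,e) ∈ G and (e+1,b) ∈ G with a ≤ e < b then (a,b) ∈ G. -/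
/-!
A left hom-orthogonal class is closed under quotients, since a nonzero map out of a quotient
`(a, e)` of `(a, b)` composes to a nonzero map out of `(a, b)`, and under extensions, since a
nonzero map out of `(a, b)` restricts nonzero to `(a, e)` or factors through `(e + 1, b)`.
Conversely, let `G` be closed under both and `(a, b) ∉ G`. A nonzero map from `(u, v) ∈ G` to
`(a, b)` has image `(u, b) ∈ G`, so `a < u` and `(a, u - 1) ∉ G`, as otherwise the extension
`(a, b)` would lie in `G`. Descending in this way, some quotient `(a, d)` of `(a, b)` is right
orthogonal to `G`, which shows that `(a, b)` is not in the left orthogonal of `G^⊥`.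
-/

def leftPerp (n : ℕ) (F : Set (ℕ × ℕ)) : Set (ℕ × ℕ) := {x ∈ Ivl n | ∀ y ∈ F, ¬ homA x y}

def rightPerp (n : ℕ) (G : Set (ℕ × ℕ)) : Set (ℕ × ℕ) := {y ∈ Ivl n | ∀ x ∈ G, ¬ homA x y}

def IsClosedUnderQuotients (G : Set (ℕ × ℕ)) : Prop :=
  ∀ a b : ℕ, (a, b) ∈ G → ∀ e : ℕ, a ≤ e → e ≤ b → (a, e) ∈ G

def IsClosedUnderExtensions (G : Set (ℕ × ℕ)) : Prop :=
  ∀ a e b : ℕ, (a, e) ∈ G → (e + 1, b) ∈ G → a ≤ e → e < b → (a, b) ∈ G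

section

variable {n : ℕ}

theorem isClosedUnderQuotients_leftPerp (F : Set (ℕ × ℕ)) :
    IsClosedUnderQuotients (leftPerp n F) := by
  rintro a b ⟨⟨ha, -, hbn⟩, horth⟩ e hae heb
  refine ⟨⟨ha, hae, heb.trans hbn⟩, fun y hy ⟨hca, had, hde⟩ => ?_⟩
  exact horth y hy ⟨hca, had, hde.trans heb⟩

theorem isClosedUnderExtensions_leftPerp (F : Set (ℕ × ℕ)) :
    IsClosedUnderExtensions (leftPerp n F) := by
  rintro a e b ⟨⟨ha, -, -⟩, horth₁⟩ ⟨⟨-, -, hbn⟩, horth₂⟩ hae heb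
  refine ⟨⟨ha, hae.trans heb.le, hbn⟩, fun y hy ⟨hca, had, hdb⟩ => ?_⟩
  rcases le_or_gt y.2 e with hde | hed
  · exact horth₁ y hy ⟨hca, had, hde⟩
  · exact horth₂ y hy ⟨hca.trans (hae.trans e.le_succ), hed, hdb⟩

theorem subset_leftPerp_rightPerp {G : Set (ℕ × ℕ)} (hG : G ⊆ Ivl n) :
    G ⊆ leftPerp n (rightPerp n G) :=
  fun x hx => ⟨hG hx, fun _ hy => hy.2 x hx⟩

theorem exists_quotient_mem_rightPerp {G : Set (ℕ × ℕ)} (hquot : IsClosedUnderQuotients G)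
    (hext : IsClosedUnderExtensions G) (b : ℕ) :
    ∀ a, (a, b) ∈ Ivl n → (a, b) ∉ G → ∃ d, a ≤ d ∧ d ≤ b ∧ (a, d) ∈ rightPerp n G := by
  induction b using Nat.strong_induction_on with
  | _ b ih =>
  rintro a ⟨ha, hab, hbn⟩ habG
  by_cases hperp : ∀ x ∈ G, ¬ homA x (a, b)
  · exact ⟨b, hab, le_rfl, ⟨ha, hab, hbn⟩, hperp⟩
  push Not at hperp
  obtain ⟨⟨u, v⟩, huv, hau, hub, hbv⟩ := hperp
  have hubG : (u, b) ∈ G := hquot u v huv b hub hbv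
  have hau_lt : a < u := hau.lt_of_ne (by rintro rfl; exact habG hubG)
  obtain ⟨e, rfl⟩ : ∃ e, u = e + 1 := Nat.exists_eq_add_one_of_ne_zero (by omega)
  have haeG : (a, e) ∉ G := fun haeG => habG (hext a e b haeG hubG (by omega) (by omega))
  obtain ⟨d, had, hde, hd⟩ := ih e (by omega) a ⟨ha, by omega, by omega⟩ haeG
  exact ⟨d, had, by omega, hd⟩

theorem leftPerp_rightPerp_subset {G : Set (ℕ × ℕ)} (hquot : IsClosedUnderQuotients G)
    (hext : IsClosedUnderExtensions G) : leftPerp n (rightPerp n G) ⊆ G := by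
  rintro ⟨a, b⟩ ⟨hab, horth⟩
  by_contra habG
  obtain ⟨d, had, hdb, hd⟩ := exists_quotient_mem_rightPerp hquot hext b a hab habG
  exact horth (a, d) hd ⟨le_rfl, had, hdb⟩

end

/-- A subset `G` of the interval model `I n` is a torsion class iff it is closed
under quotients and closed under extensions. -/
theorem isTorsionClass_iff_closed (n : ℕ) (G : Set (ℕ × ℕ)) (hG : G ⊆ Ivl n) :
    IsTorsionClass n G ↔
      ((∀ a b : ℕ, (a, b) ∈ G → ∀ e : ℕ, a ≤ e → e ≤ b → (a, e) ∈ G) ∧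
       (∀ a e b : ℕ, (a, e) ∈ G → (e + 1, b) ∈ G → a ≤ e → e < b → (a, b) ∈ G)) := by
  constructor
  · rintro ⟨F, rfl, -⟩
    exact ⟨isClosedUnderQuotients_leftPerp F, isClosedUnderExtensions_leftPerp F⟩
  · rintro ⟨hquot, hext⟩
    exact ⟨rightPerp n G,
      (subset_leftPerp_rightPerp hG).antisymm (leftPerp_rightPerp_subset hquot hext), rfl⟩
end
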